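/- arXiv:1210.7459 — 10 statements merged into one kernel-verified Lean document; each statement's English description precedes it below -/
import Mathlib

section
/- Let h : A → ℝ be a function on an abelian group A such that the limit ĥ(P) := lim_{n→∞} h(2^n P)/4^n exists for all P and such that the function (P,Q) ↦ h(P+Q) + h(P−Q) − 2h(P) − 2h(Q) is bounded on A × A. Then ĥ satisfies the parallelogram law ĥ(P+Q) + ĥ(P−Q) = 2ĥ(P) + 2ĥ(Q), and consequently the pairing ⟨P,Q⟩ := (ĥ(P+Q) − ĥ(P) − ĥ(Q))/2 is bi-additive. -/
open Filter Topology

/-- If `h : A → ℝ` on an abelian group `A` has uniformly bounded parallelogram defect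
`h(P+Q) + h(P−Q) − 2h(P) − 2h(Q)` and the limits `hhat P = lim h(2^n P)/4^n` exist,
then `hhat` satisfies the exact parallelogram law, and the pairing
`⟨P,Q⟩ = (hhat(P+Q) − hhat(P) − hhat(Q))/2` is bi-additive. -/
theorem canonical_height_is_quadratic (A : Type*) [AddCommGroup A]
    (h hhat : A → ℝ)
    (hlim : ∀ P : A, Tendsto (fun n : ℕ => h ((2 ^ n : ℕ) • P) / 4 ^ n) atTop (𝓝 (hhat P)))
    (hdefect : ∃ C : ℝ, ∀ P Q : A,
      |h (P + Q) + h (P - Q) - 2 * h P - 2 * h Q| ≤ C) :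
    (∀ P Q : A, hhat (P + Q) + hhat (P - Q) = 2 * hhat P + 2 * hhat Q) ∧
      (∀ P Q R : A,
        (hhat (P + Q + R) - hhat (P + Q) - hhat R) / 2 =
          (hhat (P + R) - hhat P - hhat R) / 2 +
            (hhat (Q + R) - hhat Q - hhat R) / 2) ∧
      (∀ P Q R : A,
        (hhat (P + (Q + R)) - hhat P - hhat (Q + R)) / 2 =
          (hhat (P + Q) - hhat P - hhat Q) / 2 +
            (hhat (P + R) - hhat P - hhat R) / 2) := by
  obtain ⟨C, hC⟩ := hdefect
  have par : ∀ P Q : A, hhat (P + Q) + hhat (P - Q) = 2 * hhat P + 2 * hhat Q := by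
    intro P Q
    have t1 := hlim (P + Q)
    have t2 := hlim (P - Q)
    simp only [smul_add] at t1
    simp only [smul_sub] at t2
    have tall := ((t1.add t2).sub ((hlim P).const_mul 2)).sub ((hlim Q).const_mul 2)
    have h2 : Tendsto (fun n : ℕ =>
        h ((2 ^ n : ℕ) • P + (2 ^ n : ℕ) • Q) / 4 ^ n +
          h ((2 ^ n : ℕ) • P - (2 ^ n : ℕ) • Q) / 4 ^ n -
          2 * (h ((2 ^ n : ℕ) • P) / 4 ^ n) - 2 * (h ((2 ^ n : ℕ) • Q) / 4 ^ n))
        atTop (𝓝 0) := by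
      have hg : Tendsto (fun n : ℕ => C * (1 / 4 : ℝ) ^ n) atTop (𝓝 0) := by
        simpa using (tendsto_pow_atTop_nhds_zero_of_lt_one (r := (1/4:ℝ)) (by norm_num) (by norm_num)).const_mul C
      refine squeeze_zero_norm (fun n => ?_) hg
      have e : h ((2 ^ n : ℕ) • P + (2 ^ n : ℕ) • Q) / 4 ^ n +
            h ((2 ^ n : ℕ) • P - (2 ^ n : ℕ) • Q) / 4 ^ n -
            2 * (h ((2 ^ n : ℕ) • P) / 4 ^ n) - 2 * (h ((2 ^ n : ℕ) • Q) / 4 ^ n) =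
            (h ((2 ^ n : ℕ) • P + (2 ^ n : ℕ) • Q) +
              h ((2 ^ n : ℕ) • P - (2 ^ n : ℕ) • Q) -
              2 * h ((2 ^ n : ℕ) • P) - 2 * h ((2 ^ n : ℕ) • Q)) / 4 ^ n := by
        ring
      rw [e, Real.norm_eq_abs, abs_div, abs_of_nonneg (by positivity : (0:ℝ) ≤ (4:ℝ) ^ n),
        show C * (1 / 4 : ℝ) ^ n = C / 4 ^ n by rw [one_div, inv_pow]; ring]
      gcongr
      exact hC _ _
    have := tendsto_nhds_unique tall h2
    linarith
  have add1 : ∀ P Q R : A,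
      (hhat (P + Q + R) - hhat (P + Q) - hhat R) / 2 =
        (hhat (P + R) - hhat P - hhat R) / 2 +
          (hhat (Q + R) - hhat Q - hhat R) / 2 := by
    intro x y z
    have A1 : hhat (x + y + z) + hhat (x + z - y) = 2 * hhat (x + z) + 2 * hhat y := by
      have := par (x + z) y
      rwa [show x + z + y = x + y + z from by abel] at this
    have A3 : hhat (x + y + z) + hhat (y + z - x) = 2 * hhat (y + z) + 2 * hhat x := by
      have := par (y + z) x
      rwa [show y + z + x = x + y + z from by abel] at this
    have A7 : hhat (x + z - y) + hhat (y + z - x) = 2 * hhat z + 2 * hhat (x - y) := by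
      have := par z (x - y)
      rwa [show z + (x - y) = x + z - y from by abel,
        show z - (x - y) = y + z - x from by abel] at this
    have A2 := par x y
    linarith
  refine ⟨par, add1, ?_⟩
  intro P Q R
  have := add1 Q R P
  rw [show Q + R + P = P + (Q + R) from by abel, show Q + P = P + Q from by abel,
    show R + P = P + R from by abel] at this
  linarith
end

section
/- Let G be a finite group and H a family of subgroups of G. Let U be the set of complex-valued class functions χ on G such that the restriction of χ to each H in the family is a virtual character of H (an integer linear combination of irreducible characters of H), and let Y be the subgroup of class functions on G generated by characters induced from irreducible characters of members of the family. Then U is closed under pointwise multiplication (U is a ring), and Y is an ideal of U: the product of an element of Y with an element of U lies in Y. -/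
open scoped Classical

/-- A class function on `G`: a complex-valued function constant on conjugacy classes. -/
def IsClassFun (G : Type) [Group G] (f : G → ℂ) : Prop :=
  ∀ g x : G, f (x * g * x⁻¹) = f g

/-- The group of virtual characters of `H`: the additive subgroup of `H → ℂ`
generated by the characters of the irreducible (simple) finite-dimensional complex
representations of `H`. -/
noncomputable def virtualChars (H : Type) [Group H] : AddSubgroup (H → ℂ) :=
  AddSubgroup.closure
    {f | ∃ V : FDRep ℂ H, CategoryTheory.Simple V ∧ f = FDRep.character V}

/-- The class function on `G` induced from a function `θ` on a subgroup `H`: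
`Ind_H^G θ (g) = |H|⁻¹ · Σ_{x ∈ G, x⁻¹gx ∈ H} θ(x⁻¹gx)`. -/
noncomputable def inducedClassFun (G : Type) [Group G] [Fintype G]
    (H : Subgroup G) (θ : ↥H → ℂ) : G → ℂ :=
  fun g => (Nat.card H : ℂ)⁻¹ *
    ∑ x : G, if h : x⁻¹ * g * x ∈ H then θ ⟨x⁻¹ * g * x, h⟩ else 0

section SubRep
variable {k : Type} [Field k] {H : Type} [Group H]

/-- invariance of a submodule under a representation -/
def RepInvariant (V : FDRep k H) (p : Submodule k V) : Prop :=
  ∀ g : H, ∀ x ∈ p, V.ρ g x ∈ p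

noncomputable def subRep (V : FDRep k H) (p : Submodule k V) (hp : RepInvariant V p) :
    Representation k H p where
  toFun g := (V.ρ g).restrict (fun x hx => hp g x hx)
  map_one' := by ext x; simp [LinearMap.restrict_apply]
  map_mul' g₁ g₂ := by ext x; simp [LinearMap.restrict_apply]

lemma char_add_of_isCompl (V : FDRep k H) {p q : Submodule k V}
    (hp : RepInvariant V p) (hq : RepInvariant V q) (h : IsCompl p q) (g : H) :
    V.character g =
      (FDRep.of (subRep V p hp)).character g + (FDRep.of (subRep V q hq)).character g := by
  have hint : DirectSum.IsInternal (fun b : Bool => bif b then p else q) := by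
    rw [DirectSum.isInternal_submodule_iff_isCompl _ (i := true) (j := false) (by simp)
      (by ext b; cases b <;> simp)]
    exact h
  have hmap : ∀ b : Bool, Set.MapsTo (V.ρ g) ((bif b then p else q : Submodule k V) : Set V)
      ((bif b then p else q : Submodule k V) : Set V) := by
    intro b
    cases b
    · exact fun x hx => hq g x hx
    · exact fun x hx => hp g x hx
  have := LinearMap.trace_eq_sum_trace_restrict hint hmap
  simp only [Fintype.sum_bool] at this
  exact this
end SubRep

section Maschke
variable {H : Type} [Group H] [Fintype H]

lemma exists_invariant_compl (V : FDRep ℂ H) (p : Submodule ℂ V) (hp : RepInvariant V p) :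
    ∃ q : Submodule ℂ V, RepInvariant V q ∧ IsCompl p q := by
  haveI : NeZero ((Fintype.card H : ℂ)) := ⟨Nat.cast_ne_zero.2 Fintype.card_ne_zero⟩
  letI : Module (MonoidAlgebra ℂ H) V :=
    Module.compHom V (Representation.asAlgebraHom V.ρ).toRingHom
  have hsmul : ∀ (r : MonoidAlgebra ℂ H) (x : V), r • x = Representation.asAlgebraHom V.ρ r x :=
    fun r x => rfl
  have hmem : ∀ (r : MonoidAlgebra ℂ H) (x : V), x ∈ p → Representation.asAlgebraHom V.ρ r x ∈ p := by
    intro r x hx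
    rw [Representation.asAlgebraHom_def, MonoidAlgebra.lift_apply]
    rw [Finsupp.sum, LinearMap.coe_sum, Finset.sum_apply]
    refine Submodule.sum_mem p fun g _ => ?_
    rw [LinearMap.smul_apply]
    exact Submodule.smul_mem p _ (hp g x hx)
  let p' : Submodule (MonoidAlgebra ℂ H) V :=
    { carrier := p
      add_mem' := fun ha hb => p.add_mem ha hb
      zero_mem' := p.zero_mem
      smul_mem' := fun r x hx => by rw [hsmul]; exact hmem r x hx }
  obtain ⟨q', hq'⟩ := MonoidAlgebra.Submodule.exists_isCompl p'
  have hcast : ∀ (c : ℂ) (x : V), c • x = (algebraMap ℂ (MonoidAlgebra ℂ H) c) • x := by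
    intro c x
    rw [hsmul]
    rw [show (algebraMap ℂ (MonoidAlgebra ℂ H) c) = MonoidAlgebra.single 1 c from rfl,
      Representation.asAlgebraHom_single]
    simp
  let q : Submodule ℂ V :=
    { carrier := q'
      add_mem' := fun ha hb => q'.add_mem ha hb
      zero_mem' := q'.zero_mem
      smul_mem' := fun c x hx => by
        rw [hcast]; exact q'.smul_mem _ hx }
  refine ⟨q, ?_, ?_⟩
  · intro g x hx
    have : V.ρ g x = (MonoidAlgebra.of ℂ H g) • x := by
      rw [hsmul, Representation.asAlgebraHom_of]
    show V.ρ g x ∈ q'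
    rw [this]
    exact q'.smul_mem _ hx
  · constructor
    · rw [Submodule.disjoint_def]
      intro x hxp hxq
      exact (Submodule.disjoint_def.mp hq'.disjoint) x hxp hxq
    · rw [codisjoint_iff, Submodule.eq_top_iff']
      intro x
      have hx : x ∈ p' ⊔ q' := by rw [hq'.codisjoint.eq_top]; trivial
      obtain ⟨y, hy, z, hz, rfl⟩ := Submodule.mem_sup.mp hx
      exact Submodule.mem_sup.mpr ⟨y, hy, z, hz, rfl⟩
end Maschke

section SimpleCrit
open CategoryTheory
variable {k : Type} [Field k] {H : Type} [Group H]

lemma fdRep_hom_comm_apply {Y V : FDRep k H} (f : Y ⟶ V) (g : H) (x : Y) :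
    f.hom (Y.ρ g x) = V.ρ g (f.hom x) :=
  ConcreteCategory.congr_hom (f.comm g) x

lemma simple_of_invariant_trivial (V : FDRep k H)
    (h0 : 0 < Module.finrank k V)
    (htriv : ∀ p : Submodule k V, RepInvariant V p → p = ⊥ ∨ p = ⊤) :
    Simple V := by
  constructor
  intro Y f hm
  constructor
  · intro hiso h0f
    have hfh : ∀ y : Y, f.hom y = 0 := by
      intro y
      rw [h0f]
      simp only [Action.zero_hom]
      rfl
    have hid : ∀ x : V, x = 0 := by
      intro x
      have h1 : (inv f ≫ f) = 𝟙 V := IsIso.inv_hom_id f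
      have h2 := congrArg Action.Hom.hom h1
      have h3 := ConcreteCategory.congr_hom h2 x
      rw [Action.comp_hom] at h3
      have : f.hom ((inv f).hom x) = x := h3
      rw [hfh] at this
      exact this.symm
    have : Subsingleton V := ⟨fun a b => by rw [hid a, hid b]⟩
    rw [Module.finrank_zero_iff.mpr this] at h0
    exact lt_irrefl 0 h0
  · intro hf
    have hker : RepInvariant Y (LinearMap.ker f.hom.hom.hom) := by
      intro g x hx
      rw [LinearMap.mem_ker] at hx ⊢
      exact (fdRep_hom_comm_apply f g x).trans ((congrArg (V.ρ g) hx).trans (map_zero _))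
    let K : FDRep k H := FDRep.of (subRep Y _ hker)
    let ι : K ⟶ Y := ⟨FGModuleCat.ofHom (LinearMap.ker f.hom.hom.hom).subtype, fun g => rfl⟩
    have hcomp : ι ≫ f = 0 := by
      apply Action.Hom.ext
      rw [Action.comp_hom, Action.zero_hom]
      apply ConcreteCategory.hom_ext
      intro x
      exact x.2
    have hι : ι = 0 := (Preadditive.mono_iff_cancel_zero f).mp hm K ι hcomp
    have hinj : Function.Injective f.hom := by
      rw [← LinearMap.ker_eq_bot, Submodule.eq_bot_iff]
      intro x hx
      have h4 := congrArg Action.Hom.hom hι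
      have h5 := ConcreteCategory.congr_hom h4 (⟨x, hx⟩ : LinearMap.ker f.hom.hom.hom)
      rw [Action.zero_hom] at h5
      exact h5
    have hrange : RepInvariant V (LinearMap.range f.hom.hom.hom) := by
      rintro g _ ⟨y, rfl⟩
      exact ⟨Y.ρ g y, fdRep_hom_comm_apply f g y⟩
    have hsurj : Function.Surjective f.hom := by
      rcases htriv _ hrange with h | h
      · exfalso
        apply hf
        apply Action.Hom.ext
        rw [Action.zero_hom]
        apply ConcreteCategory.hom_ext
        intro x
        have : f.hom x ∈ (⊥ : Submodule k V) := h ▸ LinearMap.mem_range_self _ x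
        exact (Submodule.mem_bot k).mp this
      · rw [← LinearMap.range_eq_top]; exact h
    let e : (Y : Type) ≃ₗ[k] V := LinearEquiv.ofBijective f.hom.hom.hom ⟨hinj, hsurj⟩
    have hcomm : ∀ g : H, ∀ x : V, e.symm (V.ρ g x) = Y.ρ g (e.symm x) := by
      intro g x
      apply hinj
      show f.hom _ = f.hom _
      rw [fdRep_hom_comm_apply f g (e.symm x)]
      have h1 : f.hom (e.symm (V.ρ g x)) = V.ρ g x := e.apply_symm_apply _
      have h2 : f.hom (e.symm x) = x := e.apply_symm_apply _
      rw [h1, h2]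
    let finv : V ⟶ Y := ⟨FGModuleCat.ofHom (e.symm : V →ₗ[k] Y), fun g => by
      apply ConcreteCategory.hom_ext
      intro x
      exact hcomm g x⟩
    refine ⟨⟨finv, ?_, ?_⟩⟩
    · apply Action.Hom.ext
      rw [Action.comp_hom, Action.id_hom]
      apply ConcreteCategory.hom_ext
      intro x
      exact e.symm_apply_apply x
    · apply Action.Hom.ext
      rw [Action.comp_hom, Action.id_hom]
      apply ConcreteCategory.hom_ext
      intro x
      exact e.apply_symm_apply x
end SimpleCrit

section CharIn
open CategoryTheory
variable {H : Type} [Group H] [Fintype H]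

lemma char_mem_virtualChars_aux :
    ∀ (n : ℕ) (V : FDRep ℂ H), Module.finrank ℂ V = n →
      FDRep.character V ∈ virtualChars H := by
  intro n
  induction n using Nat.strong_induction_on with
  | _ n ih =>
    intro V hn
    by_cases hex : ∃ p : Submodule ℂ V, RepInvariant V p ∧ p ≠ ⊥ ∧ p ≠ ⊤
    · obtain ⟨p, hp, hpb, hpt⟩ := hex
      obtain ⟨q, hq, hcompl⟩ := exists_invariant_compl V p hp
      have hchar : FDRep.character V =
          FDRep.character (FDRep.of (subRep V p hp)) +
          FDRep.character (FDRep.of (subRep V q hq)) := by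
        funext g; exact char_add_of_isCompl V hp hq hcompl g
      have hqt : q ≠ ⊤ := by
        intro h
        rw [h] at hcompl
        exact hpb (disjoint_top.mp hcompl.disjoint)
      have hplt : Module.finrank ℂ ↥p < n := hn ▸ Submodule.finrank_lt hpt
      have hqlt : Module.finrank ℂ ↥q < n := hn ▸ Submodule.finrank_lt hqt
      rw [hchar]
      exact AddSubgroup.add_mem _ (ih _ hplt _ rfl) (ih _ hqlt _ rfl)
    · push_neg at hex
      rcases Nat.eq_zero_or_pos n with h0 | h0
      · have hsub : Subsingleton V := Module.finrank_zero_iff.mp (hn.trans h0)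
        have hz : FDRep.character V = 0 := by
          funext g
          have hρ : V.ρ g = 0 := Subsingleton.elim _ _
          show LinearMap.trace ℂ V (V.ρ g) = 0
          rw [hρ, map_zero]
        rw [hz]
        exact zero_mem _
      · have hs : Simple V := simple_of_invariant_trivial V (hn ▸ h0)
          (fun p hp => by
            by_cases hb : p = ⊥
            · exact Or.inl hb
            · exact Or.inr (hex p hp hb))
        exact AddSubgroup.subset_closure ⟨V, hs, rfl⟩

lemma char_mem_virtualChars (V : FDRep ℂ H) : FDRep.character V ∈ virtualChars H :=
  char_mem_virtualChars_aux _ V rfl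
end CharIn

section VC
open CategoryTheory

lemma virtualChars_mul_mem {H : Type} [Group H] [Fintype H] {a b : H → ℂ}
    (ha : a ∈ virtualChars H) (hb : b ∈ virtualChars H) : a * b ∈ virtualChars H := by
  refine AddSubgroup.closure_induction (p := fun a _ => a * b ∈ virtualChars H)
    ?_ ?_ ?_ ?_ ha
  · intro x hx
    obtain ⟨S, hS, rfl⟩ := hx
    refine AddSubgroup.closure_induction (p := fun b _ => S.character * b ∈ virtualChars H)
      ?_ ?_ ?_ ?_ hb
    · intro y hy
      obtain ⟨T, hT, rfl⟩ := hy
      rw [← FDRep.char_tensor]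
      exact char_mem_virtualChars _
    · show S.character * 0 ∈ _
      rw [mul_zero]; exact zero_mem _
    · intro x y hx hy px py
      rw [mul_add]; exact add_mem px py
    · intro x hx px
      rw [mul_neg]; exact neg_mem px
  · show (0 : H → ℂ) * b ∈ _
    rw [zero_mul]; exact zero_mem _
  · intro x y hx hy px py
    rw [add_mul]; exact add_mem px py
  · intro x hx px
    rw [neg_mul]; exact neg_mem px
end VC

section Ind
variable (G : Type) [Group G] [Fintype G] (H : Subgroup G)

noncomputable def indHom : (↥H → ℂ) →+ (G → ℂ) where
  toFun := inducedClassFun G H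
  map_zero' := by
    funext g
    simp [inducedClassFun]
  map_add' θ₁ θ₂ := by
    funext g
    simp only [inducedClassFun, Pi.add_apply]
    rw [← mul_add, ← Finset.sum_add_distrib]
    congr 1
    apply Finset.sum_congr rfl
    intro x _
    split <;> simp

lemma ind_mul (θ : ↥H → ℂ) (u : G → ℂ) (hu : IsClassFun G u) :
    inducedClassFun G H θ * u = inducedClassFun G H (θ * (fun h : ↥H => u ↑h)) := by
  funext g
  have hcf : ∀ x : G, u (x⁻¹ * g * x) = u g := by
    intro x
    have := hu g x⁻¹
    simpa using this
  show (_ * _) * u g = _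
  rw [mul_assoc, Finset.sum_mul]
  simp only [inducedClassFun]
  congr 1
  apply Finset.sum_congr rfl
  intro x _
  split
  · rename_i h
    show θ _ * u g = θ _ * u _
    rw [hcf x]
  · rw [zero_mul]
end Ind

/-- **Brauer–Tate.** Let `G` be a finite group and `ℋ` a family of subgroups. The set
`U` of class functions on `G` restricting to a virtual character of each `H ∈ ℋ` is
closed under pointwise multiplication (it is a ring), and the additive subgroup `Y`
generated by the functions induced from irreducible characters of members of `ℋ` is an
ideal of `U`: the product of an element of `Y` with an element of `U` lies in `Y`. -/
theorem brauer_tate_ring_and_ideal (G : Type) [Group G] [Fintype G]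
    (ℋ : Set (Subgroup G))
    (U : Set (G → ℂ))
    (hU : U = {f | IsClassFun G f ∧
      ∀ H ∈ ℋ, (fun h : ↥H => f ↑h) ∈ virtualChars ↥H})
    (Y : AddSubgroup (G → ℂ))
    (hY : Y = AddSubgroup.closure
      {f | ∃ H ∈ ℋ, ∃ V : FDRep ℂ ↥H, CategoryTheory.Simple V ∧
        f = inducedClassFun G H (FDRep.character V)}) :
    (∀ f₁ f₂ : G → ℂ, f₁ ∈ U → f₂ ∈ U → f₁ * f₂ ∈ U) ∧
    (∀ y ∈ Y, ∀ u ∈ U, y * u ∈ Y) := by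
  subst hU hY
  constructor
  · rintro f₁ f₂ ⟨hc₁, hv₁⟩ ⟨hc₂, hv₂⟩
    refine ⟨fun g x => ?_, fun H hH => virtualChars_mul_mem (hv₁ H hH) (hv₂ H hH)⟩
    show f₁ _ * f₂ _ = f₁ g * f₂ g
    rw [hc₁ g x, hc₂ g x]
  · intro y hy u hu
    obtain ⟨huc, huv⟩ := hu
    refine AddSubgroup.closure_induction
      (p := fun y _ => y * u ∈ AddSubgroup.closure
        {f | ∃ H ∈ ℋ, ∃ V : FDRep ℂ ↥H, CategoryTheory.Simple V ∧
          f = inducedClassFun G H (FDRep.character V)}) ?_ ?_ ?_ ?_ hy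
    · rintro f ⟨H, hH, V, hV, rfl⟩
      show inducedClassFun G H (FDRep.character V) * u ∈ _
      rw [ind_mul G H _ u huc]
      have hφ : (FDRep.character V * (fun h : ↥H => u ↑h)) ∈ virtualChars ↥H :=
        virtualChars_mul_mem (AddSubgroup.subset_closure ⟨V, hV, rfl⟩) (huv H hH)
      refine AddSubgroup.closure_induction
        (p := fun φ _ => inducedClassFun G H φ ∈ AddSubgroup.closure
          {f | ∃ H ∈ ℋ, ∃ V : FDRep ℂ ↥H, CategoryTheory.Simple V ∧
            f = inducedClassFun G H (FDRep.character V)}) ?_ ?_ ?_ ?_ hφ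
      · rintro θ ⟨W, hW, rfl⟩
        exact AddSubgroup.subset_closure ⟨H, hH, W, hW, rfl⟩
      · show indHom G H 0 ∈ _
        rw [map_zero]; exact zero_mem _
      · intro a b _ _ pa pb
        show indHom G H (a + b) ∈ _
        rw [map_add]; exact add_mem pa pb
      · intro a _ pa
        show indHom G H (-a) ∈ _
        rw [map_neg]; exact neg_mem pa
    · show (0 : G → ℂ) * u ∈ _
      rw [zero_mul]; exact zero_mem _
    · intro a b _ _ pa pb
      show (a + b) * u ∈ _
      rw [add_mul]; exact add_mem pa pb
    · intro a _ pa
      show (-a) * u ∈ _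
      rw [neg_mul]; exact neg_mem pa
end

section
/- Let G be a finite group and p a positive integer. Define a descending chain of normal subgroups by G₀ = G and G_{n+1} = (G_n)^p [G, G_n], where (G_n)^p [G,G_n] denotes the subgroup generated by p-th powers of elements of G_n together with commutators [g, x] with g ∈ G and x ∈ G_n. Let S be a subgroup of G of index prime to p. If S ∩ G₁ = S₁ (where S₁ = S^p[S,S]), then S ∩ G_n = S_n for all n ≥ 1. -/
open scoped commutatorElement

/-- For a group `H` and a positive integer `p`, the descending chain
`H₀ = H`, `H_{n+1} = (H_n)^p [H, H_n]`: the subgroup generated by `p`-th powers of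
elements of `H_n` together with commutators `[g, x]` with `g ∈ H`, `x ∈ H_n`. -/
def tateSeries (H : Type*) [Group H] (p : ℕ) : ℕ → Subgroup H
  | 0 => ⊤
  | n + 1 =>
    Subgroup.closure
      ({x | ∃ y ∈ tateSeries H p n, x = y ^ p} ∪
        {x | ∃ g : H, ∃ y ∈ tateSeries H p n, x = ⁅g, y⁆})

namespace TateAux
open Pointwise

variable {H : Type*} [Group H] {p : ℕ}

theorem pow_mem_succ {n : ℕ} {y : H} (hy : y ∈ tateSeries H p n) :
    y ^ p ∈ tateSeries H p (n + 1) :=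
  Subgroup.subset_closure (Or.inl ⟨y, hy, rfl⟩)

theorem commutator_mem_succ {n : ℕ} (g : H) {y : H} (hy : y ∈ tateSeries H p n) :
    ⁅g, y⁆ ∈ tateSeries H p (n + 1) :=
  Subgroup.subset_closure (Or.inr ⟨g, y, hy, rfl⟩)

theorem tate_normal (n : ℕ) : (tateSeries H p n).Normal := by
  induction n with
  | zero => rw [tateSeries]; infer_instance
  | succ n ih =>
    constructor
    intro x hx g
    rw [tateSeries] at hx ⊢
    induction hx using Subgroup.closure_induction with
    | mem y hy =>
      apply Subgroup.subset_closure
      rcases hy with ⟨z, hz, rfl⟩ | ⟨a, z, hz, rfl⟩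
      · exact Or.inl ⟨g * z * g⁻¹, ih.conj_mem z hz g, (conj_pow).symm⟩
      · exact Or.inr ⟨g * a * g⁻¹, g * z * g⁻¹, ih.conj_mem z hz g, by
          simp only [commutatorElement_def]; group⟩
    | one => simpa using Subgroup.one_mem _
    | mul a b _ _ ha hb =>
      have : g * (a * b) * g⁻¹ = (g * a * g⁻¹) * (g * b * g⁻¹) := by group
      rw [this]; exact Subgroup.mul_mem _ ha hb
    | inv a _ ha =>
      have : g * a⁻¹ * g⁻¹ = (g * a * g⁻¹)⁻¹ := by group
      rw [this]; exact Subgroup.inv_mem _ ha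

theorem tate_succ_le (n : ℕ) : tateSeries H p (n + 1) ≤ tateSeries H p n := by
  rw [tateSeries ]
  apply Subgroup.closure_le _ |>.mpr
  rintro x (⟨y, hy, rfl⟩ | ⟨g, y, hy, rfl⟩)
  · exact Subgroup.pow_mem _ hy p
  · have := (tate_normal (p := p) n).conj_mem y hy g
    simpa [commutatorElement_def, mul_assoc] using Subgroup.mul_mem _ this (Subgroup.inv_mem _ hy)

theorem tate_le_of_le {m n : ℕ} (h : m ≤ n) : tateSeries H p n ≤ tateSeries H p m := by
  induction n with
  | zero => simpa using (Nat.le_zero.mp h) ▸ le_rfl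
  | succ n ih =>
    rcases Nat.lt_or_ge m (n+1) with h' | h'
    · exact (tate_succ_le n).trans (ih (by omega))
    · have : m = n + 1 := le_antisymm h h'
      simp [this]

/-- image of the tate series of a subgroup is inside the tate series of the group -/
theorem tate_map_le {G : Type*} [Group G] (S : Subgroup G) (p n : ℕ) :
    (tateSeries S p n).map S.subtype ≤ tateSeries G p n := by
  induction n with
  | zero => exact le_top
  | succ n ih =>
    rw [tateSeries, tateSeries, MonoidHom.map_closure]
    apply Subgroup.closure_le _ |>.mpr
    rintro x ⟨y, (⟨z, hz, rfl⟩ | ⟨g, z, hz, rfl⟩), rfl⟩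
    · exact Subgroup.subset_closure (Or.inl ⟨(z : G), ih ⟨z, hz, rfl⟩, by simp⟩)
    · exact Subgroup.subset_closure (Or.inr ⟨(g : G), (z : G), ih ⟨z, hz, rfl⟩, by
        simp [commutatorElement_def]⟩)


variable {G : Type*} [Group G]

theorem tate_index_primes [Finite G] (p : ℕ) (n : ℕ) {q : ℕ} (hq : q.Prime)
    (hdvd : q ∣ (tateSeries G p n).index) : q ∣ p := by
  induction n with
  | zero =>
    rw [tateSeries, Subgroup.index_top, Nat.dvd_one] at hdvd
    exact absurd hdvd hq.ne_one
  | succ n ih =>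
    rw [← Subgroup.relIndex_mul_index (tate_succ_le (H := G) (p := p) n)] at hdvd
    rcases (Nat.Prime.dvd_mul hq).mp hdvd with h | h
    · -- q divides the relative index
      set A := tateSeries G p n
      set A' := tateSeries G p (n + 1)
      haveI : (A'.subgroupOf A).Normal := (tate_normal (n + 1)).subgroupOf A
      haveI : Fintype (↥A ⧸ A'.subgroupOf A) := Fintype.ofFinite _
      haveI : Fact q.Prime := ⟨hq⟩
      have hcard : q ∣ Fintype.card (↥A ⧸ A'.subgroupOf A) := by
        rwa [Subgroup.relIndex, Subgroup.index, Nat.card_eq_fintype_card] at h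
      obtain ⟨x, hx⟩ := exists_prime_orderOf_dvd_card q hcard
      have hxp : x ^ p = 1 := by
        obtain ⟨y, rfl⟩ := QuotientGroup.mk_surjective x
        rw [← QuotientGroup.mk_pow, QuotientGroup.eq_one_iff, Subgroup.mem_subgroupOf]
        exact pow_mem_succ y.2
      exact hx ▸ orderOf_dvd_of_pow_eq_one hxp
    · exact ih h

theorem tate_sup_eq_top [Finite G] {p : ℕ} {S : Subgroup G} (hS : Nat.Coprime S.index p)
    (n : ℕ) : S ⊔ tateSeries G p n = ⊤ := by
  rw [← Subgroup.index_eq_one]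
  by_contra hne
  obtain ⟨q, hq, hdvd⟩ := Nat.exists_prime_and_dvd hne
  have h1 : q ∣ S.index := hdvd.trans (Subgroup.index_dvd_of_le le_sup_left)
  have h2 : q ∣ (tateSeries G p n).index :=
    hdvd.trans (Subgroup.index_dvd_of_le le_sup_right)
  have h3 : q ∣ p := tate_index_primes p n hq h2
  have : q ∣ 1 := hS ▸ Nat.dvd_gcd h1 h3
  exact hq.ne_one (Nat.dvd_one.mp this)

theorem exists_rep_in [Finite G] {p : ℕ} {S : Subgroup G} (hS : Nat.Coprime S.index p)
    (n : ℕ) (g : G) : ∃ s, s ∈ S ∧ g⁻¹ * s ∈ tateSeries G p n := by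
  haveI : (tateSeries G p n).Normal := tate_normal n
  have htop : S ⊔ tateSeries G p n = ⊤ := tate_sup_eq_top hS n
  have hg : g ∈ (S : Set G) * (tateSeries G p n : Set G) := by
    rw [← Subgroup.mul_normal, htop]; trivial
  obtain ⟨s, hs, a, ha, rfl⟩ := hg
  exact ⟨s, hs, by simpa using (tateSeries G p n).inv_mem ha⟩


section Helpers

variable {p n : ℕ} {S : Subgroup G}

theorem mem_mapB {K : Subgroup ↥S} {x : G} :
    x ∈ K.map S.subtype ↔ ∃ hx : x ∈ S, (⟨x, hx⟩ : ↥S) ∈ K := by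
  constructor
  · rintro ⟨t, ht, rfl⟩; exact ⟨t.2, ht⟩
  · rintro ⟨hx, h⟩; exact ⟨⟨x, hx⟩, h, rfl⟩

theorem conj_mem_mapB {K : Subgroup ↥S} (hK : K.Normal) {s x : G} (hs : s ∈ S)
    (hx : x ∈ K.map S.subtype) : s * x * s⁻¹ ∈ K.map S.subtype := by
  obtain ⟨t, ht, rfl⟩ := hx
  exact ⟨⟨s, hs⟩ * t * ⟨s, hs⟩⁻¹, hK.conj_mem t ht ⟨s, hs⟩, rfl⟩

theorem pow_mem_mapB {x : G} (hx : x ∈ (tateSeries S p n).map S.subtype) :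
    x ^ p ∈ (tateSeries S p (n+1)).map S.subtype := by
  obtain ⟨t, ht, rfl⟩ := hx
  exact ⟨t ^ p, pow_mem_succ ht, by simp⟩

theorem comm_mem_mapB {s x : G} (hs : s ∈ S) (hx : x ∈ (tateSeries S p n).map S.subtype) :
    s * x * s⁻¹ * x⁻¹ ∈ (tateSeries S p (n+1)).map S.subtype := by
  obtain ⟨t, ht, rfl⟩ := hx
  refine ⟨⁅(⟨s, hs⟩ : ↥S), t⁆, commutator_mem_succ _ ht, by
    simp [commutatorElement_def]⟩

end Helpers

theorem comm_alg1 {N : Type*} [CommGroup N] (x1 x2 x3 x4 x5 x6 x7 x8 x9 x10 : N)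
    (e1 : x2 * x3 = x1 * x4) (e2 : x5 * x3 = x6 * x7) (e3 : x8 * x9 = x10 * x7) :
    x1 = x8 * (x2 * x5⁻¹ * (x6 * x10⁻¹) * (x4 * x9⁻¹)⁻¹) := by
  have hx1 : x1 = x2 * x3 * x4⁻¹ := by rw [e1]; group
  have hx3 : x3 = x5⁻¹ * (x6 * x7) := by rw [← e2]; group
  have hx7 : x7 = x10⁻¹ * (x8 * x9) := by rw [e3]; group
  rw [hx1, hx3, hx7]
  simp only [mul_inv_rev, inv_inv]
  simp only [mul_comm, mul_left_comm, mul_assoc]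

theorem comm_alg2 {N : Type*} [CommGroup N] (w1 w2 w3 q1 q2 q3 : N) :
    (w1 * q1⁻¹) * (w2 * q2⁻¹) * ((w3 * q3⁻¹))⁻¹ = (w1 * w2 * w3⁻¹) * (q1 * q2 * q3⁻¹)⁻¹ := by
  simp only [mul_inv_rev, inv_inv]
  simp only [mul_comm, mul_left_comm, mul_assoc]

theorem comm_alg3 {N : Type*} [CommGroup N] (a b c d : N) :
    a * b * (c * d)⁻¹ = a * c⁻¹ * (b * d⁻¹) := by
  simp only [mul_inv_rev, inv_inv]
  simp only [mul_comm, mul_left_comm, mul_assoc]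

theorem comm_alg4 {N : Type*} [CommGroup N] (a b c : N) :
    c = a * b * (a * b * c⁻¹)⁻¹ := by
  rw [show (a * b * c⁻¹)⁻¹ = (a*b)⁻¹ * c from by rw [mul_comm]; group, mul_inv_cancel_left]

theorem tate_step [Finite G] {p : ℕ} (hp : 0 < p) {S : Subgroup G} (hS : Nat.Coprime S.index p)
    {n : ℕ} (hn : 1 ≤ n)
    (hIH : (tateSeries S p n).map S.subtype = tateSeries G p n ⊓ S) :
    (tateSeries S p (n+1)).map S.subtype = tateSeries G p (n+1) ⊓ S := by
  classical
  set A : Subgroup G := tateSeries G p n with hA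
  set A' : Subgroup G := tateSeries G p (n+1) with hA'
  set B : Subgroup G := (tateSeries S p n).map S.subtype with hB
  set B' : Subgroup G := (tateSeries S p (n+1)).map S.subtype with hB'
  refine le_antisymm (le_inf (tate_map_le S p (n+1)) (Subgroup.map_subtype_le _)) ?_
  intro x hx
  haveI hAnorm : A.Normal := tate_normal n
  haveI hA'norm : A'.Normal := tate_normal (n+1)
  have hA'A : A' ≤ A := tate_succ_le n
  have hBS : B ≤ S := Subgroup.map_subtype_le _
  have hB'S : B' ≤ S := Subgroup.map_subtype_le _
  have hBA : B ≤ A := hIH.le.trans inf_le_left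
  have hB'A' : B' ≤ A' := tate_map_le S p (n+1)
  have hB'B : B' ≤ B := Subgroup.map_mono (tate_succ_le n)
  haveI hTnorm : (tateSeries (↥S) p (n+1)).Normal := tate_normal (n+1)
  -- conjugation stability
  have hconjB : ∀ {s x : G}, s ∈ S → x ∈ B → s * x * s⁻¹ ∈ B :=
    fun hs hx => conj_mem_mapB (tate_normal n) hs hx
  have hconjB' : ∀ {s x : G}, s ∈ S → x ∈ B' → s * x * s⁻¹ ∈ B' :=
    fun hs hx => conj_mem_mapB (tate_normal (n+1)) hs hx
  have hpowB : ∀ {x : G}, x ∈ B → x ^ p ∈ B' := fun hx => pow_mem_mapB hx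
  have hcommB : ∀ {s x : G}, s ∈ S → x ∈ B → s * x * s⁻¹ * x⁻¹ ∈ B' :=
    fun hs hx => comm_mem_mapB hs hx
  haveI hN : ((B'.subgroupOf B)).Normal := by
    constructor
    rintro ⟨x, hx⟩ hmem ⟨b, hb⟩
    rw [Subgroup.mem_subgroupOf] at hmem ⊢
    simpa using hconjB' (hBS hb) hmem
  set M := ↥B ⧸ B'.subgroupOf B with hM
  set π : ↥B →* M := QuotientGroup.mk' (B'.subgroupOf B) with hπ
  have πeq : ∀ (x y : ↥B), (x : G)⁻¹ * ↑y ∈ B' → π x = π y := by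
    intro x y h
    apply (QuotientGroup.mk'_eq_mk' _).mpr
    exact ⟨x⁻¹ * y, by rwa [Subgroup.mem_subgroupOf], by group⟩
  have πeq' : ∀ (x y : ↥B), (x : G) * (↑y)⁻¹ ∈ B' → π x = π y := by
    intro x y h
    apply πeq
    have e : (x:G)⁻¹ * (y:G) = (x:G)⁻¹ * ((x:G) * (y:G)⁻¹)⁻¹ * ((x:G)⁻¹)⁻¹ := by group
    rw [e]
    exact hconjB' (S.inv_mem (hBS x.2)) (B'.inv_mem h)
  have hcomm : ∀ x y : M, x * y = y * x := by
    intro x y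
    obtain ⟨a, rfl⟩ := QuotientGroup.mk'_surjective _ x
    obtain ⟨b, rfl⟩ := QuotientGroup.mk'_surjective _ y
    rw [← map_mul, ← map_mul]
    apply πeq
    have e : ((a*b : ↥B) : G)⁻¹ * ↑(b*a) =
        (↑b)⁻¹ * (↑a)⁻¹ * ((↑b)⁻¹)⁻¹ * ((↑a)⁻¹)⁻¹ := by push_cast; group
    rw [e]
    exact hcommB (S.inv_mem (hBS b.2)) (B.inv_mem a.2)
  letI : CommGroup M := { (inferInstance : Group M) with mul_comm := hcomm }
  have hMp : ∀ x : M, x ^ p = 1 := by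
    intro x
    obtain ⟨a, rfl⟩ := QuotientGroup.mk'_surjective _ x
    rw [← map_pow]
    have : ((a ^ p : ↥B) : G) * ((1 : ↥B) : G)⁻¹ ∈ B' := by
      push_cast; simpa using hpowB a.2
    rw [πeq' _ 1 this, map_one]
  -- the transversal τ for A with values in S
  have hsec : ∀ c : G ⧸ A, ∃ s : G, s ∈ S ∧ (QuotientGroup.mk s : G ⧸ A) = c := by
    intro c
    obtain ⟨s, hs, ha⟩ := exists_rep_in hS n c.out
    exact ⟨s, hs, by rw [← QuotientGroup.out_eq' c]; exact (QuotientGroup.eq.mpr ha).symm⟩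
  choose t ht1 ht2 using hsec
  set τ : G → G := fun g => if (QuotientGroup.mk g : G ⧸ A) = 1 then 1
    else t (QuotientGroup.mk g) with hτ
  have hτS : ∀ g, τ g ∈ S := by
    intro g; rw [hτ]; dsimp only; split
    · exact S.one_mem
    · exact ht1 _
  have hτmk : ∀ g, (QuotientGroup.mk (τ g) : G ⧸ A) = QuotientGroup.mk g := by
    intro g; rw [hτ]; dsimp only; split
    · rename_i h; rw [h]; simp
    · exact ht2 _
  have hτA : ∀ a, a ∈ A → τ a = 1 := by
    intro a ha; rw [hτ]; dsimp only; rw [if_pos ((QuotientGroup.eq_one_iff a).mpr ha)]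
  have hτcoset : ∀ g a, a ∈ A → τ (g * a) = τ g := by
    intro g a ha; rw [hτ]; dsimp only; rw [QuotientGroup.mk_mul_of_mem g ha]
  have hmemA : ∀ x : G, (QuotientGroup.mk x : G ⧸ A) = 1 → x ∈ A :=
    fun x h => (QuotientGroup.eq_one_iff x).mp h
  have hδB : ∀ g h : G, τ g * τ h * (τ (g*h))⁻¹ ∈ B := by
    intro g h
    rw [hIH, Subgroup.mem_inf]
    constructor
    · exact hmemA _ (by rw [QuotientGroup.mk_mul, QuotientGroup.mk_mul, QuotientGroup.mk_inv, hτmk, hτmk, hτmk,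
        QuotientGroup.mk_mul]; group)
    · exact S.mul_mem (S.mul_mem (hτS g) (hτS h)) (S.inv_mem (hτS _))
  set fB : G → G → ↥B := fun g h => ⟨τ g * τ h * (τ (g*h))⁻¹, hδB g h⟩ with hfB
  set f : G → G → M := fun g h => π (fB g h) with hf
  have hπmul : ∀ (x y : ↥B), π x * π y = π (x * y) := fun x y => (map_mul π x y).symm
  have hfcoc : ∀ g h k : G, f g h * f (g*h) k = f h k * f g (h*k) := by
    intro g h k
    rw [hf]; dsimp only
    rw [hπmul, hπmul]
    apply πeq'
    have hassoc : τ (g * h * k) = τ (g * (h*k)) := by rw [mul_assoc]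
    have e : ((fB g h * fB (g*h) k : ↥B) : G) * ((fB h k * fB g (h*k) : ↥B) : G)⁻¹
        = τ g * (τ h * τ k * (τ (h*k))⁻¹) * (τ g)⁻¹ * (τ h * τ k * (τ (h*k))⁻¹)⁻¹ := by
      simp only [hfB, Subgroup.coe_mul, Subgroup.coe_inv]
      rw [hassoc]
      group
    rw [e]
    exact hcommB (hτS g) (hδB h k)
  have hfA : ∀ g a : G, a ∈ A → f g a = 1 := by
    intro g a ha
    rw [hf]; dsimp only
    have : fB g a = 1 := Subtype.ext (by
      simp only [hfB]
      rw [hτA a ha, hτcoset g a ha]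
      simp)
    rw [this, map_one]
  have hfA2 : ∀ g a : G, a ∈ A → f (g*a*g⁻¹) g = 1 := by
    intro g a ha
    rw [hf]; dsimp only
    have : fB (g*a*g⁻¹) g = 1 := Subtype.ext (by
      simp only [hfB]
      rw [hτA _ (hAnorm.conj_mem a ha g), show g*a*g⁻¹*g = g*a by group, hτcoset g a ha]
      simp)
    rw [this, map_one]
  have hf11 : f 1 1 = 1 := by
    have := hfA 1 1 A.one_mem
    simpa using this
  -- the 1-cochain w on S
  have hwB : ∀ {s : G}, s ∈ S → s⁻¹ * τ s ∈ B := by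
    intro s hs
    rw [hIH, Subgroup.mem_inf]
    exact ⟨hmemA _ (by simp [hτmk]), S.mul_mem (S.inv_mem hs) (hτS s)⟩
  set w : G → M := fun s => if h : s⁻¹ * τ s ∈ B then π ⟨s⁻¹ * τ s, h⟩ else 1 with hw
  have hw_pos : ∀ {s : G} (hs : s ∈ S), w s = π ⟨s⁻¹ * τ s, hwB hs⟩ := by
    intro s hs; rw [hw]; dsimp only; rw [dif_pos (hwB hs)]
  have hfw : ∀ s t : G, s ∈ S → t ∈ S → f s t = w s * w t * (w (s*t))⁻¹ := by
    intro s t hs ht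
    rw [hf]; dsimp only
    rw [hw_pos hs, hw_pos ht, hw_pos (S.mul_mem hs ht), ← map_inv, hπmul, hπmul]
    apply πeq'
    have e : ((fB s t : ↥B) : G) *
        ((⟨s⁻¹ * τ s, hwB hs⟩ * ⟨t⁻¹ * τ t, hwB ht⟩ *
          (⟨(s*t)⁻¹ * τ (s*t), hwB (S.mul_mem hs ht)⟩ : ↥B)⁻¹ : ↥B) : G)⁻¹
        = (s * (s⁻¹ * τ s) * s⁻¹ * (s⁻¹ * τ s)⁻¹) *
          ((s⁻¹ * τ s) * ((s*t) * (t⁻¹ * τ t) * (s*t)⁻¹ * (t⁻¹ * τ t)⁻¹) * (s⁻¹ * τ s)⁻¹) *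
          (((s⁻¹ * τ s) * (t⁻¹ * τ t)) *
            ((s*t) * ((s*t)⁻¹ * τ (s*t))⁻¹ * (s*t)⁻¹ * (((s*t)⁻¹ * τ (s*t))⁻¹)⁻¹) *
            ((s⁻¹ * τ s) * (t⁻¹ * τ t))⁻¹) := by
      simp only [hfB, Subgroup.coe_mul, Subgroup.coe_inv]
      group
    rw [e]
    refine B'.mul_mem (B'.mul_mem ?_ ?_) ?_
    · exact hcommB hs (hwB hs)
    · exact hconjB' (hBS (hwB hs)) (hcommB (S.mul_mem hs ht) (hwB ht))
    · exact hconjB' (S.mul_mem (hBS (hwB hs)) (hBS (hwB ht)))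
        (hcommB (S.mul_mem hs ht) (B.inv_mem (hwB (S.mul_mem hs ht))))
  -- transversal machinery for S
  haveI : Fintype (G ⧸ S) := Fintype.ofFinite _
  set ρ : G → G := fun x => ((QuotientGroup.mk x : G ⧸ S)).out with hρdef
  have hρmk : ∀ x : G, (QuotientGroup.mk (ρ x) : G ⧸ S) = QuotientGroup.mk x := by
    intro x; rw [hρdef]; exact QuotientGroup.out_eq' _
  have hρS : ∀ x : G, (ρ x)⁻¹ * x ∈ S := fun x => QuotientGroup.eq.mp (hρmk x)
  have hρabs : ∀ g y : G, ρ (g * ρ y) = ρ (g * y) := by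
    intro g y
    rw [hρdef]; dsimp only
    congr 1
    have e : (g * ρ y)⁻¹ * (g * y) = (ρ y)⁻¹ * y := by group
    exact QuotientGroup.eq.mpr (e ▸ hρS y)
  set sb : G → (G ⧸ S) → G := fun g c => (ρ (g * c.out))⁻¹ * g * c.out with hsb
  have hsbS : ∀ g c, sb g c ∈ S := by
    intro g c; rw [hsb]; dsimp only
    have h1 := hρS (g * c.out)
    rwa [show (ρ (g * c.out))⁻¹ * (g * c.out) = (ρ (g * c.out))⁻¹ * g * c.out from
      by group] at h1
  set φ : G → (G ⧸ S) → (G ⧸ S) := fun h c => QuotientGroup.mk (h * c.out) with hφ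
  have hφout : ∀ h c, (φ h c).out = ρ (h * c.out) := by
    intro h c; rw [hφ, hρdef]
  have hφcomp : ∀ h h' c, φ h (φ h' c) = φ (h * h') c := by
    intro h h' c
    rw [hφ]; dsimp only
    rw [show ((QuotientGroup.mk (h' * c.out) : G ⧸ S)).out = ρ (h' * c.out) from
      by rw [hρdef]]
    apply QuotientGroup.eq.mpr
    have e : (h * ρ (h' * c.out))⁻¹ * (h * h' * c.out)
        = (ρ (h' * c.out))⁻¹ * (h' * c.out) := by group
    exact e ▸ hρS (h' * c.out)
  have hφ1 : ∀ c, φ 1 c = c := by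
    intro c; rw [hφ]; dsimp only; rw [one_mul]; exact QuotientGroup.out_eq' c
  have hφbij : ∀ h : G, Function.Bijective (φ h) := by
    intro h
    apply Function.bijective_iff_has_inverse.mpr
    refine ⟨φ h⁻¹, fun c => ?_, fun c => ?_⟩
    · rw [hφcomp]; simp [hφ1]
    · rw [hφcomp]; simp [hφ1]
  have hsbmul : ∀ g h c, sb g (φ h c) * sb h c = sb (g*h) c := by
    intro g h c
    rw [hsb]; dsimp only
    rw [hφout, hρabs g (h * c.out), ← mul_assoc g h c.out]
    group
  set m := S.index with hm
  have hcardm : Fintype.card (G ⧸ S) = m := by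
    rw [hm]
    have : S.index = Nat.card (G ⧸ S) := rfl
    rw [this, Nat.card_eq_fintype_card]
  set W : G → M := fun g => ∏ c : G ⧸ S, w (sb g c) with hW
  set qh : G → (G ⧸ S) → M :=
    fun g c => f (ρ (g * c.out)) (sb g c) * (f g c.out)⁻¹ with hqh
  set Q : G → M := fun g => ∏ c : G ⧸ S, qh g c with hQ
  set uu : G → M := fun g => W g * (Q g)⁻¹ with huu
  have hreindex : ∀ (h : G) (F : (G ⧸ S) → M),
      (∏ c : G ⧸ S, F (φ h c)) = ∏ c : G ⧸ S, F c := by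
    intro h F
    exact Fintype.prod_bijective (φ h) (hφbij h) _ _ (fun c => rfl)
  have hpercoset : ∀ g h c, f (sb g (φ h c)) (sb h c)
      = f g h * (qh g (φ h c) * qh h c * (qh (g*h) c)⁻¹) := by
    intro g h c
    have hout1 : (φ h c).out = ρ (h * c.out) := hφout h c
    have hsb1 : sb g (φ h c) = (ρ (g * h * c.out))⁻¹ * g * ρ (h * c.out) := by
      rw [hsb]; dsimp only
      rw [hout1, hρabs g (h * c.out), ← mul_assoc g h c.out]
    have hsb2 : sb h c = (ρ (h * c.out))⁻¹ * h * c.out := by rw [hsb]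
    have hsb3 : sb (g*h) c = (ρ (g * h * c.out))⁻¹ * (g*h) * c.out := by rw [hsb]
    rw [hqh]; dsimp only
    rw [hout1, hρabs g (h * c.out), ← mul_assoc g h c.out, hsb1, hsb2, hsb3]
    -- abbreviations as plain terms
    have e1 := hfcoc (ρ (g * h * c.out))
      ((ρ (g * h * c.out))⁻¹ * g * ρ (h * c.out))
      ((ρ (h * c.out))⁻¹ * h * c.out)
    rw [show ρ (g * h * c.out) * ((ρ (g * h * c.out))⁻¹ * g * ρ (h * c.out))
        = g * ρ (h * c.out) from by group] at e1
    rw [show ((ρ (g * h * c.out))⁻¹ * g * ρ (h * c.out)) *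
        ((ρ (h * c.out))⁻¹ * h * c.out)
        = (ρ (g * h * c.out))⁻¹ * (g * h) * c.out from by group] at e1
    have e2 := hfcoc g (ρ (h * c.out)) ((ρ (h * c.out))⁻¹ * h * c.out)
    rw [show ρ (h * c.out) * ((ρ (h * c.out))⁻¹ * h * c.out) = h * c.out from
      by group] at e2
    have e3 := hfcoc g h c.out
    exact comm_alg1 _ _ _ _ _ _ _ _ _ _ e1 e2 e3
  have hWQ : ∀ g h : G, uu g * uu h * (uu (g*h))⁻¹ = (f g h) ^ m := by
    intro g h
    have hWd : W g * W h * (W (g*h))⁻¹ = ∏ c : G ⧸ S, f (sb g (φ h c)) (sb h c) := by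
      have h1 : W g = ∏ c : G ⧸ S, w (sb g (φ h c)) := by
        rw [hW]; exact (hreindex h _).symm
      rw [h1, hW]
      dsimp only
      rw [← Finset.prod_mul_distrib, ← Finset.prod_inv_distrib, ← Finset.prod_mul_distrib]
      apply Finset.prod_congr rfl
      intro c _
      rw [← hsbmul g h c]
      exact (hfw _ _ (hsbS g _) (hsbS h _)).symm
    have h2 : (∏ c : G ⧸ S, f (sb g (φ h c)) (sb h c))
        = f g h ^ m * (Q g * Q h * (Q (g*h))⁻¹) := by
      calc ∏ c : G ⧸ S, f (sb g (φ h c)) (sb h c)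
          = ∏ c : G ⧸ S, (f g h * (qh g (φ h c) * qh h c * (qh (g*h) c)⁻¹)) :=
            Finset.prod_congr rfl (fun c _ => hpercoset g h c)
        _ = (∏ _c : G ⧸ S, f g h) *
            ((∏ c : G ⧸ S, qh g (φ h c)) * (∏ c : G ⧸ S, qh h c) *
              (∏ c : G ⧸ S, qh (g*h) c)⁻¹) := by
            rw [Finset.prod_mul_distrib, Finset.prod_mul_distrib,
              Finset.prod_mul_distrib, Finset.prod_inv_distrib]
        _ = f g h ^ m * (Q g * Q h * (Q (g*h))⁻¹) := by
            rw [Finset.prod_const, Finset.card_univ, hcardm, hreindex h (qh g), hQ]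
    have hWQ3 : W g * W h * (W (g*h))⁻¹ = f g h ^ m * (Q g * Q h * (Q (g*h))⁻¹) :=
      hWd.trans h2
    have hexp : uu g * uu h * (uu (g*h))⁻¹
        = (W g * W h * (W (g*h))⁻¹) * (Q g * Q h * (Q (g*h))⁻¹)⁻¹ := by
      rw [huu]; dsimp only
      exact comm_alg2 _ _ _ _ _ _
    rw [hexp, hWQ3, mul_inv_cancel_right]
  have hms : Nat.Coprime m p := hS
  have hmk : ∀ x : M, x ^ p = 1 → x ^ (m * m ^ (p.totient - 1)) = x := by
    intro x hx
    have h1 : m * m ^ (p.totient - 1) = m ^ p.totient := by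
      rw [← pow_succ']
      congr 1
      have := Nat.totient_pos.mpr hp
      omega
    have h2 : m ^ p.totient ≡ 1 [MOD p] := Nat.ModEq.pow_totient hms
    have h3 : m * m ^ (p.totient - 1) ≡ 1 [MOD orderOf x] :=
      Nat.ModEq.of_dvd (orderOf_dvd_of_pow_eq_one hx) (h1 ▸ h2)
    calc x ^ (m * m ^ (p.totient - 1)) = x ^ 1 := pow_eq_pow_iff_modEq.mpr h3
      _ = x := pow_one x
  set v : G → M := fun g => (uu g) ^ (m ^ (p.totient - 1)) with hv
  have hvco : ∀ g h : G, v g * v h * (v (g*h))⁻¹ = f g h := by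
    intro g h
    rw [hv]; dsimp only
    rw [← mul_pow, ← inv_pow, ← mul_pow, hWQ g h, ← pow_mul]
    exact hmk _ (hMp _)
  have hvmul : ∀ g h : G, v (g*h) = v g * v h * (f g h)⁻¹ := by
    intro g h
    rw [← hvco g h]
    exact comm_alg4 _ _ _
  have hv1 : v 1 = 1 := by
    have h0 := hvco 1 1
    rw [one_mul, hf11, mul_inv_cancel_right] at h0
    exact h0
  -- the homomorphism η on S, trivial on B
  set η : G → M := fun s => v s * (w s)⁻¹ with hη
  have hfw2 : ∀ s t : G, s ∈ S → t ∈ S → f s t * w (s*t) = w s * w t := by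
    intro s t hs ht
    rw [hfw s t hs ht, inv_mul_cancel_right]
  have hηmul : ∀ s t : G, s ∈ S → t ∈ S → η (s*t) = η s * η t := by
    intro s t hs ht
    rw [hη]; dsimp only
    rw [hvmul s t, mul_assoc (v s * v t), ← mul_inv_rev, mul_comm (w (s*t)) (f s t),
      hfw2 s t hs ht]
    exact comm_alg3 _ _ _ _
  have hw1 : w 1 = 1 := by
    rw [hw_pos S.one_mem]
    have h0 : (⟨(1:G)⁻¹ * τ 1, hwB S.one_mem⟩ : ↥B) = 1 :=
      Subtype.ext (by show (1:G)⁻¹ * τ 1 = _; rw [hτA 1 A.one_mem]; simp)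
    rw [h0, map_one]
  have hv1' : η 1 = 1 := by rw [hη]; dsimp only; rw [hv1, hw1]; simp
  obtain ⟨ηS, hηS⟩ : ∃ ψ : ↥S →* M, ∀ s : ↥S, ψ s = η ↑s :=
    ⟨{ toFun := fun s => η ↑s,
       map_one' := by simpa using hv1',
       map_mul' := fun s t => by simpa using hηmul ↑s ↑t s.2 t.2 }, fun s => rfl⟩
  have hT1ker : tateSeries (↥S) p 1 ≤ ηS.ker := by
    show tateSeries (↥S) p (0+1) ≤ ηS.ker
    rw [tateSeries]
    apply Subgroup.closure_le _ |>.mpr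
    rintro y (⟨z, _, rfl⟩ | ⟨g, z, _, rfl⟩)
    · rw [SetLike.mem_coe, MonoidHom.mem_ker, map_pow]
      exact hMp _
    · rw [SetLike.mem_coe, MonoidHom.mem_ker, commutatorElement_def]
      simp only [map_mul, map_inv]
      rw [mul_comm (ηS g) (ηS z)]
      group
  have hvwB : ∀ y : G, y ∈ B → v y = w y := by
    intro y hy
    rw [hB, Subgroup.mem_map] at hy
    obtain ⟨z, hz, rfl⟩ := hy
    have h1 : ηS z = 1 := hT1ker (tate_le_of_le hn hz)
    have h2 : η (↑z : G) = 1 := (hηS z).symm.trans h1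
    rw [hη] at h2; dsimp only at h2
    have h3 : v (↑z : G) = w ↑z := mul_inv_eq_one.mp h2
    simpa using h3
  have hwval : ∀ (y : G) (hy : y ∈ B), w y = (π ⟨y, hy⟩)⁻¹ := by
    intro y hy
    rw [hw_pos (hBS hy), ← map_inv]
    congr 1
    exact Subtype.ext (by show y⁻¹ * τ y = _; rw [hτA y (hBA hy)]; simp)
  -- v is a G-invariant homomorphism on A
  have hvmulA : ∀ a b : G, a ∈ A → b ∈ A → v (a*b) = v a * v b := by
    intro a b _ hb
    rw [hvmul a b, hfA a b hb]
    simp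
  have hvconj : ∀ (g a : G), a ∈ A → v (g*a*g⁻¹) = v a := by
    intro g a ha
    have h1 : v (g*a) = v g * v a := by rw [hvmul, hfA g a ha]; simp
    have h2 : v (g*a*g⁻¹ * g) = v (g*a*g⁻¹) * v g := by
      rw [hvmul, hfA2 g a ha]; simp
    rw [show g*a*g⁻¹*g = g*a from by group, h1] at h2
    have h3 : v a * v g = v (g*a*g⁻¹) * v g := by rw [← h2]; exact mul_comm _ _
    exact (mul_right_cancel h3).symm
  obtain ⟨αS, hαS⟩ : ∃ ψ : ↥A →* M, ∀ a : ↥A, ψ a = v ↑a :=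
    ⟨{ toFun := fun a => v ↑a,
       map_one' := by simpa using hv1,
       map_mul' := fun a b => hvmulA ↑a ↑b a.2 b.2 }, fun a => rfl⟩
  have hvA' : ∀ y : G, y ∈ A' → v y = 1 := by
    intro y hy
    have hle : A' ≤ (αS.ker).map A.subtype := by
      rw [hA']
      rw [tateSeries]
      apply Subgroup.closure_le _ |>.mpr
      rintro _ (⟨z, hz, rfl⟩ | ⟨g, z, hz, rfl⟩)
      · refine ⟨(⟨z, hz⟩ : ↥A) ^ p, ?_, by simp⟩
        rw [SetLike.mem_coe, MonoidHom.mem_ker, map_pow]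
        exact hMp _
      · refine ⟨(⟨g*z*g⁻¹, hAnorm.conj_mem z hz g⟩ : ↥A) * (⟨z, hz⟩ : ↥A)⁻¹, ?_, by
          simp [commutatorElement_def]⟩
        rw [SetLike.mem_coe, MonoidHom.mem_ker, map_mul, map_inv, hαS, hαS]
        show v (g*z*g⁻¹) * (v z)⁻¹ = 1
        rw [hvconj g z hz]
        simp
    obtain ⟨z, hz, rfl⟩ := hle hy
    have := MonoidHom.mem_ker.mp hz
    rw [hαS] at this
    simpa using this
  -- conclusion
  obtain ⟨hxA', hxS⟩ := Subgroup.mem_inf.mp hx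
  have hxA : x ∈ A := hA'A hxA'
  have hxB : x ∈ B := by rw [hIH]; exact Subgroup.mem_inf.mpr ⟨hxA, hxS⟩
  have h1 : v x = 1 := hvA' x hxA'
  have h2 : (π ⟨x, hxB⟩)⁻¹ = 1 := by rw [← hwval x hxB, ← hvwB x hxB]; exact h1
  have h3 : π ⟨x, hxB⟩ = 1 := by rwa [inv_eq_one] at h2
  rw [hπ] at h3
  have h4 : (⟨x, hxB⟩ : ↥B) ∈ (QuotientGroup.mk' (B'.subgroupOf B)).ker :=
    MonoidHom.mem_ker.mpr h3
  rw [QuotientGroup.ker_mk'] at h4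
  rwa [Subgroup.mem_subgroupOf] at h4






end TateAux

/-- **Tate's theorem (1964).** Let `G` be a finite group, `p` a positive integer, and
`S` a subgroup of index prime to `p`. If `S ∩ G₁ = S₁`, then `S ∩ G_n = S_n` for all
`n ≥ 1`. -/
theorem tate_nilpotent_quotient (G : Type*) [Group G] [Finite G] (p : ℕ) (hp : 0 < p)
    (S : Subgroup G) (hS : Nat.Coprime S.index p)
    (h1 : (tateSeries S p 1).map S.subtype = tateSeries G p 1 ⊓ S) :
    ∀ n : ℕ, 1 ≤ n → (tateSeries S p n).map S.subtype = tateSeries G p n ⊓ S := by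
  intro n hn
  induction n with
  | zero => omega
  | succ k ih =>
    by_cases hk : k = 0
    · subst hk; exact h1
    · exact TateAux.tate_step hp hS (by omega) (ih (by omega))
end

section
/- Let F be a field with a discrete valuation v : F^× → ℤ (surjective, with v(xy) = v(x)+v(y) and v(x+y) ≥ min(v(x), v(y))), valuation ring O = {x : v(x) ≥ 0} ∪ {0}, maximal ideal m, and residue field κ = O/m. Then the tame symbol (a,b)_v := image in κ^× of (−1)^{v(a)v(b)} a^{v(b)} b^{−v(a)} is a Steinberg symbol: it is bimultiplicative in a and b, and (a, 1−a)_v = 1 for all a ∈ F^× with a ≠ 1. -/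
/-- **The tame symbol is a Steinberg symbol.** Let `F` be a field with a surjective
discrete valuation `v : F^× → ℤ` (encoded as a `ℤₘ₀`-valued valuation on `F`, with
`ν : Fˣ → ℤ` its restriction to units), with valuation ring `O = v.valuationSubring`,
and residue field `κ`. The tame symbol
`(a,b)_v = image in κ of (−1)^{ν(a)ν(b)} a^{ν(b)} b^{−ν(a)}`
takes values in `κ^×` (it is nonzero), is bimultiplicative, and satisfies
`(a, 1−a)_v = 1` for all `a ∈ F^×` with `a ≠ 1`. -/
theorem tame_symbol_is_steinberg (F : Type*) [Field F]
    (v : Valuation F (WithZero (Multiplicative ℤ)))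
    (hsurj : ∀ γ : Multiplicative ℤ, ∃ x : Fˣ, v (x : F) = (γ : WithZero (Multiplicative ℤ)))
    (ν : Fˣ → ℤ)
    (hν : ∀ a : Fˣ, v (a : F) =
      ((Multiplicative.ofAdd (ν a) : Multiplicative ℤ) : WithZero (Multiplicative ℤ)))
    (t : Fˣ → Fˣ → F)
    (ht : ∀ a b : Fˣ, t a b =
      (-1 : F) ^ (ν a * ν b) * (a : F) ^ (ν b) * (b : F) ^ (-ν a))
    (tame : Fˣ → Fˣ → IsLocalRing.ResidueField v.valuationSubring)
    (htame : ∀ (a b : Fˣ) (h : t a b ∈ v.valuationSubring),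
      tame a b = IsLocalRing.residue (v.valuationSubring : Type _) ⟨t a b, h⟩) :
    (∀ a a' b : Fˣ, tame (a * a') b = tame a b * tame a' b) ∧
    (∀ a b b' : Fˣ, tame a (b * b') = tame a b * tame a b') ∧
    (∀ a b : Fˣ, tame a b ≠ 0) ∧
    (∀ (a : Fˣ) (h : (a : F) ≠ 1),
      tame a (Units.mk0 (1 - (a : F)) (sub_ne_zero.mpr (Ne.symm h))) = 1) := by
  -- generic coercion facts
  have hltc : ∀ n : ℤ, ((Multiplicative.ofAdd n : Multiplicative ℤ) :
      WithZero (Multiplicative ℤ)) < 1 ↔ n < 0 := by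
    intro n
    rw [← WithZero.coe_one, WithZero.coe_lt_coe, ← ofAdd_zero, Multiplicative.ofAdd_lt]
  have hlec : ∀ n : ℤ, ((Multiplicative.ofAdd n : Multiplicative ℤ) :
      WithZero (Multiplicative ℤ)) ≤ 1 ↔ n ≤ 0 := by
    intro n
    rw [← WithZero.coe_one, WithZero.coe_le_coe, ← ofAdd_zero, Multiplicative.ofAdd_le]
  have hneg1 : v (-1 : F) = 1 := by simpa using v.map_neg (1 : F)
  have hvpow : ∀ (x : F) (n m : ℤ), v x = ((Multiplicative.ofAdd n : Multiplicative ℤ) :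
      WithZero (Multiplicative ℤ)) →
      v (x ^ m) = ((Multiplicative.ofAdd (n * m) : Multiplicative ℤ) :
        WithZero (Multiplicative ℤ)) := by
    intro x n m hx
    rw [map_zpow₀, hx, ← WithZero.coe_zpow]
    congr 1
    rw [← ofAdd_zsmul, smul_eq_mul, mul_comm]
  have hvt : ∀ a b : Fˣ, v (t a b) = 1 := by
    intro a b
    rw [ht, map_mul, map_mul, map_zpow₀, hneg1, one_zpow, one_mul,
      hvpow _ _ _ (hν a), hvpow _ _ _ (hν b), ← WithZero.coe_mul, ← ofAdd_add,
      show ν a * ν b + ν b * -ν a = 0 by ring, ofAdd_zero, WithZero.coe_one]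
  have hmem : ∀ a b : Fˣ, t a b ∈ v.valuationSubring := fun a b =>
    (Valuation.mem_valuationSubring_iff v _).mpr (hvt a b).le
  have htt : ∀ a b : Fˣ, tame a b =
      IsLocalRing.residue (v.valuationSubring : Type _) ⟨t a b, hmem a b⟩ :=
    fun a b => htame a b (hmem a b)
  have hνmul : ∀ a b : Fˣ, ν (a * b) = ν a + ν b := by
    intro a b
    have h1 : v ((a : F) * b) = v a * v b := map_mul v _ _
    rw [hν a, hν b] at h1
    have h2 := hν (a * b)
    rw [Units.val_mul, h1, ← WithZero.coe_mul, ← ofAdd_add] at h2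
    exact (Multiplicative.ofAdd.injective (WithZero.coe_inj.mp h2)).symm
  have hres_mul : ∀ (x y : F) (hx : x ∈ v.valuationSubring) (hy : y ∈ v.valuationSubring)
      (hxy : x * y ∈ v.valuationSubring),
      IsLocalRing.residue (v.valuationSubring : Type _) ⟨x * y, hxy⟩ =
        IsLocalRing.residue (v.valuationSubring : Type _) ⟨x, hx⟩ *
          IsLocalRing.residue (v.valuationSubring : Type _) ⟨y, hy⟩ := by
    intro x y hx hy hxy
    rw [← map_mul]
    rfl
  have hres0 : ∀ (x : F) (hm : x ∈ v.valuationSubring), v x < 1 →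
      IsLocalRing.residue (v.valuationSubring : Type _) ⟨x, hm⟩ = 0 := by
    intro x hm hx
    rw [IsLocalRing.residue]
    exact Ideal.Quotient.eq_zero_iff_mem.mpr
      ((ValuationSubring.valuation_lt_one_iff _ _).mpr
        ((Valuation.isEquiv_valuation_valuationSubring v).lt_one_iff_lt_one.mp hx))
  have hres1 : ∀ (x : F) (hm : x ∈ v.valuationSubring), v (x - 1) < 1 →
      IsLocalRing.residue (v.valuationSubring : Type _) ⟨x, hm⟩ = 1 := by
    intro x hm hx
    have hm' : x - 1 ∈ v.valuationSubring :=
      (Valuation.mem_valuationSubring_iff v _).mpr hx.le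
    have h2 : (⟨x, hm⟩ : v.valuationSubring) = ⟨x - 1, hm'⟩ + 1 := Subtype.ext (by show x = (x - 1) + 1; ring)
    rw [h2, map_add, map_one, hres0 _ hm' hx, zero_add]
  have hresP : ∀ (x : F) (hx1 : v x = 1)
      (hr : IsLocalRing.residue (v.valuationSubring : Type _)
        ⟨x, (Valuation.mem_valuationSubring_iff v _).mpr hx1.le⟩ = 1) (k : ℤ)
      (hm : x ^ k ∈ v.valuationSubring),
      IsLocalRing.residue (v.valuationSubring : Type _) ⟨x ^ k, hm⟩ = 1 := by
    intro x hx1 hr k hm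
    have hx0 : x ≠ 0 := by
      intro h; rw [h, map_zero] at hx1; exact zero_ne_one hx1
    have hxm : x ∈ v.valuationSubring := (Valuation.mem_valuationSubring_iff v _).mpr hx1.le
    have hxim : x⁻¹ ∈ v.valuationSubring := by
      rw [Valuation.mem_valuationSubring_iff, map_inv₀, hx1, inv_one]
    have hnat : ∀ (y : F) (hy : y ∈ v.valuationSubring)
        (hry : IsLocalRing.residue (v.valuationSubring : Type _) ⟨y, hy⟩ = 1) (j : ℕ)
        (hmj : y ^ j ∈ v.valuationSubring),
        IsLocalRing.residue (v.valuationSubring : Type _) ⟨y ^ j, hmj⟩ = 1 := by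
      intro y hy hry j hmj
      have e : (⟨y ^ j, hmj⟩ : v.valuationSubring) = (⟨y, hy⟩ : v.valuationSubring) ^ j :=
        Subtype.ext rfl
      rw [e, map_pow, hry, one_pow]
    rcases le_or_gt 0 k with hk | hk
    · obtain ⟨j, rfl⟩ := Int.eq_ofNat_of_zero_le hk
      have hmj : x ^ j ∈ v.valuationSubring := by rwa [← zpow_natCast x j]
      have e2 : (⟨x ^ (j : ℤ), hm⟩ : v.valuationSubring) = ⟨x ^ j, hmj⟩ :=
        Subtype.ext (zpow_natCast x j)
      rw [e2]
      exact hnat x hxm hr j hmj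
    · have hrinv : IsLocalRing.residue (v.valuationSubring : Type _) ⟨x⁻¹, hxim⟩ = 1 := by
        have hp : x * x⁻¹ ∈ v.valuationSubring := by
          rw [mul_inv_cancel₀ hx0]; exact one_mem _
        have h3 := hres_mul x x⁻¹ hxm hxim hp
        have e1 : (⟨x * x⁻¹, hp⟩ : v.valuationSubring) = 1 := Subtype.ext (mul_inv_cancel₀ hx0)
        rw [e1, map_one, hr, one_mul] at h3
        exact h3.symm
      obtain ⟨j, hj⟩ : ∃ j : ℕ, -k = (j : ℤ) := ⟨(-k).toNat, by omega⟩
      have he : x ^ k = (x⁻¹) ^ j := by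
        rw [← zpow_natCast x⁻¹ j, ← hj, zpow_neg, inv_zpow, inv_inv]
      have hmj : (x⁻¹) ^ j ∈ v.valuationSubring := he ▸ hm
      have e2 : (⟨x ^ k, hm⟩ : v.valuationSubring) = ⟨(x⁻¹) ^ j, hmj⟩ := Subtype.ext he
      rw [e2]
      exact hnat x⁻¹ hxim hrinv j hmj
  refine ⟨?_, ?_, ?_, ?_⟩
  · -- left multiplicativity
    intro a a' b
    have tmull : t (a * a') b = t a b * t a' b := by
      rw [ht, ht, ht, hνmul, Units.val_mul]
      rw [add_mul, zpow_add₀ (neg_ne_zero.mpr (one_ne_zero : (1:F) ≠ 0)), neg_add,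
        zpow_add₀ (Units.ne_zero b), mul_zpow]
      ring
    have h3 : t a b * t a' b ∈ v.valuationSubring := tmull ▸ hmem (a * a') b
    rw [htt, htt, htt, ← hres_mul _ _ (hmem a b) (hmem a' b) h3]
    congr 1
    exact Subtype.ext tmull
  · -- right multiplicativity
    intro a b b'
    have tmulr : t a (b * b') = t a b * t a b' := by
      rw [ht, ht, ht, hνmul, Units.val_mul]
      rw [mul_add, zpow_add₀ (neg_ne_zero.mpr (one_ne_zero : (1:F) ≠ 0)),
        zpow_add₀ (Units.ne_zero a), mul_zpow]
      ring
    have h3 : t a b * t a b' ∈ v.valuationSubring := tmulr ▸ hmem a (b * b')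
    rw [htt, htt, htt, ← hres_mul _ _ (hmem a b) (hmem a b') h3]
    congr 1
    exact Subtype.ext tmulr
  · -- nonvanishing
    intro a b h0
    have ht0 : t a b ≠ 0 := by
      intro h
      have := hvt a b
      rw [h, map_zero] at this
      exact zero_ne_one this
    have hinv : (t a b)⁻¹ ∈ v.valuationSubring := by
      rw [Valuation.mem_valuationSubring_iff, map_inv₀, hvt, inv_one]
    have hprod : t a b * (t a b)⁻¹ ∈ v.valuationSubring := by
      rw [mul_inv_cancel₀ ht0]; exact one_mem _
    have h1 : tame a b *
        IsLocalRing.residue (v.valuationSubring : Type _) ⟨(t a b)⁻¹, hinv⟩ = 1 := by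
      rw [htt, ← hres_mul _ _ (hmem a b) hinv hprod]
      have h2 : (⟨t a b * (t a b)⁻¹, hprod⟩ : v.valuationSubring) = 1 :=
        Subtype.ext (mul_inv_cancel₀ ht0)
      rw [h2, map_one]
    rw [h0, zero_mul] at h1
    exact zero_ne_one h1
  · -- Steinberg relation
    intro a ha1
    set b : Fˣ := Units.mk0 (1 - (a : F)) (sub_ne_zero.mpr (Ne.symm ha1)) with hb
    have hbv : (b : F) = 1 - (a : F) := rfl
    rw [htt]
    have hva0 : v (a : F) ≠ 0 := by rw [hν]; exact WithZero.coe_ne_zero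
    rcases lt_trichotomy (ν a) 0 with hn | hn | hn
    · -- ν a < 0 : a in the maximal ideal, 1 - a ≡ 1
      have hva : v (a : F) < 1 := by rw [hν]; exact (hltc _).mpr hn
      have hvb : v (b : F) = 1 := by rw [hbv]; exact v.map_one_sub_of_lt hva
      have hνb : ν b = 0 := by
        have := hν b
        rw [hvb, ← WithZero.coe_one, ← ofAdd_zero] at this
        exact (Multiplicative.ofAdd.injective (WithZero.coe_inj.mp this.symm))
      have hteq : t a b = (b : F) ^ (-ν a) := by
        rw [ht, hνb]
        simp
      have hrb : IsLocalRing.residue (v.valuationSubring : Type _)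
          ⟨(b : F), (Valuation.mem_valuationSubring_iff v _).mpr hvb.le⟩ = 1 := by
        apply hres1
        rw [hbv, show (1 : F) - (a : F) - 1 = -(a : F) by ring, Valuation.map_neg]
        exact hva
      have hmj : (b : F) ^ (-ν a) ∈ v.valuationSubring := hteq ▸ hmem a b
      have e2 : (⟨t a b, hmem a b⟩ : v.valuationSubring) = ⟨(b : F) ^ (-ν a), hmj⟩ :=
        Subtype.ext hteq
      rw [e2]
      exact hresP _ hvb hrb _ _
    · -- ν a = 0 : a is a unit of O
      have hva : v (a : F) = 1 := by rw [hν, hn, ofAdd_zero, WithZero.coe_one]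
      have hvble : v (b : F) ≤ 1 := by
        rw [hbv]
        calc v (1 - (a : F)) ≤ max (v 1) (v (a : F)) := v.map_sub _ _
        _ ≤ 1 := by rw [map_one, hva]; simp
      have hνble : ν b ≤ 0 := (hlec _).mp (by rw [← hν]; exact hvble)
      have hteq : t a b = (a : F) ^ (ν b) := by
        rw [ht, hn]
        simp
      have hmj : (a : F) ^ (ν b) ∈ v.valuationSubring := hteq ▸ hmem a b
      have e2 : (⟨t a b, hmem a b⟩ : v.valuationSubring) = ⟨(a : F) ^ (ν b), hmj⟩ :=
        Subtype.ext hteq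
      rw [e2]
      rcases lt_or_eq_of_le hνble with hνb | hνb
      · -- ν b < 0 : then a ≡ 1 mod m
        have hvb : v (b : F) < 1 := by rw [hν]; exact (hltc _).mpr hνb
        have hra : IsLocalRing.residue (v.valuationSubring : Type _)
            ⟨(a : F), (Valuation.mem_valuationSubring_iff v _).mpr hva.le⟩ = 1 := by
          apply hres1
          rw [show (a : F) - 1 = -((1 : F) - a) by ring, Valuation.map_neg, ← hbv]
          exact hvb
        exact hresP _ hva hra _ _
      · -- ν b = 0 : t = 1
        have e3 : (⟨(a : F) ^ (ν b), hmj⟩ : v.valuationSubring) = 1 :=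
          Subtype.ext (by simp [hνb])
        rw [e3, map_one]
    · -- ν a > 0 : v a > 1
      have hgta : (1 : WithZero (Multiplicative ℤ)) < v (a : F) := by
        rw [hν, ← WithZero.coe_one, ← ofAdd_zero, WithZero.coe_lt_coe, Multiplicative.ofAdd_lt]
        exact hn
      have hvb : v (b : F) = v (a : F) := by
        rw [hbv]
        apply Valuation.map_sub_eq_of_lt_right
        rw [map_one]; exact hgta
      have hνb : ν b = ν a := by
        have := hν b
        rw [hvb, hν a] at this
        exact (Multiplicative.ofAdd.injective (WithZero.coe_inj.mp this)).symm
      have ha10 : (a : F) - 1 ≠ 0 := sub_ne_zero.mpr ha1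
      set u : F := (a : F) / ((a : F) - 1) with hu
      have hva1 : v ((a : F) - 1) = v (a : F) := by
        apply Valuation.map_sub_eq_of_lt_left
        rw [map_one]; exact hgta
      have hvu : v u = 1 := by
        rw [hu, map_div₀, hva1, div_self hva0]
      have hueq : t a b = u ^ (ν a) := by
        rw [ht, hνb, hbv]
        have hpar : (-1 : F) ^ (ν a * ν a) = (-1 : F) ^ (ν a) := by
          rcases Int.even_or_odd (ν a) with h | h
          · rw [(h.mul_right _).neg_one_zpow, h.neg_one_zpow]
          · rw [(h.mul h).neg_one_zpow, h.neg_one_zpow]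
        rw [hpar]
        have hu2 : u = -(a : F) / (1 - (a : F)) := by
          rw [hu, ← neg_div_neg_eq]
          ring_nf
        rw [hu2, div_zpow, show -(a : F) = (-1) * a from neg_eq_neg_one_mul _, mul_zpow,
          zpow_neg, div_eq_mul_inv]
      have hu1 : u - 1 = ((a : F) - 1)⁻¹ := by
        rw [hu]
        field_simp
        ring
      have hvu1 : v (u - 1) < 1 := by
        rw [hu1, map_inv₀, hva1, hν, ← WithZero.coe_inv, ← ofAdd_neg]
        exact (hltc _).mpr (by omega)
      have hru : IsLocalRing.residue (v.valuationSubring : Type _)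
          ⟨u, (Valuation.mem_valuationSubring_iff v _).mpr hvu.le⟩ = 1 :=
        hres1 _ _ hvu1
      have hmj : u ^ (ν a) ∈ v.valuationSubring := hueq ▸ hmem a b
      have e2 : (⟨t a b, hmem a b⟩ : v.valuationSubring) = ⟨u ^ (ν a), hmj⟩ :=
        Subtype.ext hueq
      rw [e2]
      exact hresP _ hvu hru _ _
end

section
/- Let k be a field and a ⊆ k[X₀, …, X_n] a homogeneous (graded) ideal. Then either the radical of a contains the irrelevant ideal (X₀, …, X_n), or a has a nontrivial zero in an algebraic closure of k; that is, there exists a point (c₀, …, c_n) ∈ (k̄)^{n+1}, not all cᵢ zero, at which every element of a vanishes. -/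
open MvPolynomial

section Aux

variable {k K : Type*} [Field k] [Field K] [Algebra k K] {σ : Type*}

/-- Apply a `k`-linear functional to all coefficients of a multivariate polynomial. -/
noncomputable def coeffMap (π : K →ₗ[k] k) (p : MvPolynomial σ K) : MvPolynomial σ k :=
  (AddMonoidAlgebra.coeff p).sum fun m c => monomial m (π c)

lemma coeff_coeffMap (π : K →ₗ[k] k) (p : MvPolynomial σ K) (m : σ →₀ ℕ) :
    coeff m (coeffMap π p) = π (coeff m p) := by
  classical
  rw [coeffMap, MvPolynomial.sum_def, coeff_sum]
  simp only [coeff_monomial]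
  rw [Finset.sum_ite_eq' p.support m (fun x => π (coeff x p))]
  split_ifs with h
  · rfl
  · rw [MvPolynomial.notMem_support_iff.mp h, map_zero]

lemma coeffMap_mul_map (π : K →ₗ[k] k) (g : MvPolynomial σ K) (f : MvPolynomial σ k) :
    coeffMap π (g * MvPolynomial.map (algebraMap k K) f) = coeffMap π g * f := by
  classical
  ext m
  rw [coeff_coeffMap, coeff_mul, coeff_mul, map_sum]
  refine Finset.sum_congr rfl fun x _ => ?_
  rw [coeff_map, coeff_coeffMap]
  rw [show coeff x.1 g * (algebraMap k K) (coeff x.2 f)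
      = coeff x.2 f • coeff x.1 g by rw [Algebra.smul_def]; ring]
  rw [map_smul, smul_eq_mul]
  ring

end Aux

/-- **Homogeneous Nullstellensatz (Cartier–Tate).** Let `a` be a graded (homogeneous)
ideal of `k[X₀,…,X_n]`. Then either the radical of `a` contains the irrelevant ideal
`(X₀,…,X_n)`, or `a` has a nontrivial zero in an algebraic closure of `k`. -/
theorem homogeneous_nullstellensatz (k : Type*) [Field k] (n : ℕ)
    (a : Ideal (MvPolynomial (Fin (n + 1)) k))
    (hhom : ∃ S : Set (MvPolynomial (Fin (n + 1)) k),
      (∀ f ∈ S, ∃ d : ℕ, f.IsHomogeneous d) ∧ a = Ideal.span S) :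
    Ideal.span (Set.range (X : Fin (n + 1) → MvPolynomial (Fin (n + 1)) k)) ≤ a.radical ∨
      ∃ c : Fin (n + 1) → AlgebraicClosure k,
        c ≠ 0 ∧ ∀ f ∈ a, (aeval c) f = 0 := by
  classical
  set K := AlgebraicClosure k
  set φ : MvPolynomial (Fin (n + 1)) k →+* MvPolynomial (Fin (n + 1)) K :=
    (MvPolynomial.map (algebraMap k K)) with hφ
  set b : Ideal (MvPolynomial (Fin (n + 1)) K) := a.map φ with hb
  by_cases hz : ∃ c : Fin (n + 1) → K, c ≠ 0 ∧ ∀ f ∈ a, (aeval c) f = 0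
  · exact Or.inr hz
  · left
    -- every point of the zero locus of `b` is `0`
    have hzero : ∀ c ∈ MvPolynomial.zeroLocus K b, c = (0 : Fin (n + 1) → K) := by
      intro c hc
      by_contra hcne
      refine hz ⟨c, hcne, fun f hf => ?_⟩
      have : eval c (φ f) = 0 := hc _ (Ideal.mem_map_of_mem φ hf)
      rwa [hφ, eval_map, ← aeval_def] at this
    -- each `X i` lies in the radical of `b`
    have hXrad : ∀ i : Fin (n + 1), (X i : MvPolynomial (Fin (n + 1)) K) ∈ b.radical := by
      intro i
      rw [← MvPolynomial.vanishingIdeal_zeroLocus_eq_radical (K := K)]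
      intro c hc
      rw [aeval_X, hzero c hc]
      rfl
    -- a linear retraction `π : K → k` with `π 1 = 1`
    have hli : LinearIndepOn k id ({1} : Set K) :=
      LinearIndepOn.singleton one_ne_zero
    let B := Module.Basis.extend hli
    have h1mem : (1 : K) ∈ hli.extend (Set.subset_univ _) := hli.subset_extend _ rfl
    let π : K →ₗ[k] k := B.coord ⟨1, h1mem⟩
    have hπ1 : π 1 = 1 := by
      have hB : B ⟨1, h1mem⟩ = (1 : K) := Module.Basis.extend_apply_self hli _
      show B.repr 1 ⟨1, h1mem⟩ = 1
      have hrs := B.repr_self ⟨1, h1mem⟩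
      rw [hB] at hrs
      rw [hrs, Finsupp.single_eq_same]
    -- descent: applying `coeffMap π` maps `b` into `a`
    have hdescent : ∀ p ∈ b, ∀ g, coeffMap π (g * p) ∈ a := by
      intro p hp
      have hp' : p ∈ Ideal.span (φ '' ↑a) := hp
      refine Submodule.span_induction ?_ ?_ ?_ ?_ hp'
      · rintro _ ⟨f, hf, rfl⟩ g
        rw [hφ, coeffMap_mul_map]
        exact Ideal.mul_mem_left a _ hf
      · intro g
        rw [mul_zero]
        have : coeffMap π (0 : MvPolynomial (Fin (n + 1)) K) = 0 := by
          ext m; rw [coeff_coeffMap]; simp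
        rw [this]; exact a.zero_mem
      · intro x y _ _ hx hy g
        have : coeffMap π (g * (x + y)) = coeffMap π (g * x) + coeffMap π (g * y) := by
          ext m
          rw [coeff_coeffMap, mul_add, coeff_add, map_add, coeff_add,
            coeff_coeffMap, coeff_coeffMap]
        rw [this]
        exact a.add_mem (hx g) (hy g)
      · intro h x _ hx g
        have : g * h • x = (g * h) * x := by rw [smul_eq_mul]; ring
        rw [this]
        exact hx (g * h)
    have hone : coeffMap π (1 : MvPolynomial (Fin (n + 1)) K) = 1 := by
      ext m
      rw [coeff_coeffMap, coeff_one, coeff_one]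
      split_ifs
      · exact hπ1
      · exact map_zero π
    -- conclude: each `X i` is in the radical of `a`
    rw [Ideal.span_le]
    rintro _ ⟨i, rfl⟩
    obtain ⟨m, hm⟩ := hXrad i
    refine ⟨m, ?_⟩
    have := hdescent _ hm 1
    rwa [one_mul, show (X i : MvPolynomial (Fin (n + 1)) K) ^ m = φ (X i ^ m) by
        rw [hφ, map_pow, map_X], ← one_mul (φ (X i ^ m)), coeffMap_mul_map, hone, one_mul]
      at this
end

section
/- Let O be a complete discrete valuation ring with maximal ideal generated by a prime element π and finite residue field of order q. Let f ∈ O[[T]] satisfy f(T) ≡ πT modulo degree-2 terms and f(T) ≡ T^q modulo π. Then for each a ∈ O there is a unique power series [a]_f ∈ O[[T]] such that [a]_f(T) ≡ aT modulo degree-2 terms and [a]_f ∘ f = f ∘ [a]_f. -/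
open PowerSeries

/-- Composition `g ∘ f` of formal power series (`g(f(T))`), valid when `f` has zero
constant term: the `n`-th coefficient only depends on the truncation
`Σ_{k ≤ n} g_k f^k`. -/
noncomputable def psComp {R : Type*} [CommRing R] (g f : PowerSeries R) : PowerSeries R :=
  PowerSeries.mk fun n =>
    PowerSeries.coeff n
      (∑ k ∈ Finset.range (n + 1), PowerSeries.C (PowerSeries.coeff k g) * f ^ k)

namespace LT

open Finset

variable {O : Type*} [CommRing O]

lemma coeff_psComp (g f : PowerSeries O) (n : ℕ) :
    coeff n (psComp g f) = ∑ k ∈ range (n + 1), coeff k g * coeff n (f ^ k) := by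
  simp [psComp, coeff_mk]

lemma coeff_pow_eq_zero {f : PowerSeries O} (hf : constantCoeff f = 0)
    {n k : ℕ} (h : n < k) : coeff n (f ^ k) = 0 := by
  have hd : (X : O⟦X⟧) ^ k ∣ f ^ k := pow_dvd_pow_of_dvd (X_dvd_iff.mpr hf) k
  exact (X_pow_dvd_iff.mp hd) n h

lemma coeff_pow_self {f : PowerSeries O} (hf : constantCoeff f = 0) (n : ℕ) :
    coeff n (f ^ n) = (coeff 1 f) ^ n := by
  obtain ⟨g, rfl⟩ := X_dvd_iff.mpr hf
  have h1 : coeff 1 ((X : O⟦X⟧) * g) = constantCoeff g := by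
    simpa using coeff_succ_X_mul 0 g
  have h2 : coeff n ((X : O⟦X⟧) ^ n * g ^ n) = coeff 0 (g ^ n) := by
    simpa using coeff_X_pow_mul (g ^ n) n 0
  rw [mul_pow, h2, h1]
  simp [coeff_zero_eq_constantCoeff, map_pow]

lemma coeff_zero_psComp (g f : PowerSeries O) :
    coeff 0 (psComp g f) = coeff 0 g := by
  simp [coeff_psComp]

lemma coeff_one_psComp (g f : PowerSeries O) :
    coeff 1 (psComp g f) = coeff 1 g * coeff 1 f := by
  rw [coeff_psComp]
  simp [Finset.sum_range_succ]

lemma coeff_truncPS (G : O⟦X⟧) (n j : ℕ) :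
    coeff j ((trunc n G : Polynomial O) : O⟦X⟧) = if j < n then coeff j G else 0 := by
  rw [Polynomial.coeff_coe, coeff_trunc]

lemma sep1 {f : PowerSeries O} (hf : constantCoeff f = 0) (G : O⟦X⟧) (n : ℕ) :
    coeff n (psComp G f) =
      coeff n G * (coeff 1 f) ^ n +
        coeff n (psComp ((trunc n G : Polynomial O) : O⟦X⟧) f) := by
  rw [coeff_psComp, coeff_psComp, sum_range_succ, sum_range_succ, coeff_truncPS,
    if_neg (lt_irrefl n), zero_mul, add_zero, coeff_pow_self hf, add_comm]
  congr 1
  apply Finset.sum_congr rfl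
  intro k hk
  rw [coeff_truncPS, if_pos (Finset.mem_range.mp hk)]

lemma xpow_dvd_pow_sub_pow {G : O⟦X⟧} (hG : constantCoeff G = 0) {n k : ℕ}
    (hn : 1 ≤ n) (hk : 2 ≤ k) :
    (X : O⟦X⟧) ^ (n + 1) ∣ G ^ k - ((trunc n G : Polynomial O) : O⟦X⟧) ^ k := by
  set T : O⟦X⟧ := ((trunc n G : Polynomial O) : O⟦X⟧) with hT
  have hT0 : constantCoeff T = 0 := by
    rw [← coeff_zero_eq_constantCoeff_apply, hT, coeff_truncPS]
    split
    · simpa using hG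
    · rfl
  have h1 : (X : O⟦X⟧) ^ n ∣ G - T := by
    rw [X_pow_dvd_iff]
    intro m hm
    rw [map_sub, hT, coeff_truncPS, if_pos hm, sub_self]
  have h2 : (X : O⟦X⟧) ∣ ∑ i ∈ range k, G ^ i * T ^ (k - 1 - i) := by
    apply Finset.dvd_sum
    intro i _
    rcases Nat.eq_zero_or_pos i with hi | hi
    · subst hi
      simp only [pow_zero, one_mul]
      exact dvd_pow (X_dvd_iff.mpr hT0) (by omega)
    · exact Dvd.dvd.mul_right (dvd_pow (X_dvd_iff.mpr hG) (by omega)) _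
  have hgeom : G ^ k - T ^ k = (G - T) * ∑ i ∈ range k, G ^ i * T ^ (k - 1 - i) := by
    rw [← geom_sum₂_mul, mul_comm]
  rw [hgeom, pow_succ]
  exact mul_dvd_mul h1 h2

lemma sep2 {f G : O⟦X⟧} (hG : constantCoeff G = 0)
    {n : ℕ} (hn : 1 ≤ n) :
    coeff n (psComp f G) =
      coeff 1 f * coeff n G +
        coeff n (psComp f ((trunc n G : Polynomial O) : O⟦X⟧)) := by
  set T : O⟦X⟧ := ((trunc n G : Polynomial O) : O⟦X⟧) with hT
  have hTn : coeff n T = 0 := by rw [hT, coeff_truncPS, if_neg (lt_irrefl n)]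
  have key : ∀ k, coeff n (G ^ k) =
      coeff n (T ^ k) + (if k = 1 then coeff n G else 0) := by
    intro k
    rcases Nat.lt_or_ge k 2 with hk | hk
    · interval_cases k
      · simp
      · simp [hTn]
    · have := xpow_dvd_pow_sub_pow hG hn hk
      have h0 : coeff n (G ^ k - T ^ k) = 0 := (X_pow_dvd_iff.mp this) n (by omega)
      rw [map_sub, sub_eq_zero] at h0
      rw [h0, if_neg (by omega), add_zero]
  rw [coeff_psComp, coeff_psComp]
  have : ∀ k ∈ range (n + 1), coeff k f * coeff n (G ^ k)
      = coeff k f * coeff n (T ^ k)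
        + (if k = 1 then coeff 1 f * coeff n G else 0) := by
    intro k _
    rw [key k, mul_add, mul_ite, mul_zero]
    congr 1
    split
    · next h => rw [h]
    · rfl
  rw [Finset.sum_congr rfl this, Finset.sum_add_distrib,
    Finset.sum_ite_eq' (range (n + 1)) 1 (fun _ => coeff 1 f * coeff n G),
    if_pos (Finset.mem_range.mpr (by omega)), add_comm]

lemma map_psComp {K : Type*} [CommRing K] (φ : O →+* K) (g f : O⟦X⟧) :
    PowerSeries.map φ (psComp g f) = psComp (PowerSeries.map φ g) (PowerSeries.map φ f) := by
  ext n
  rw [coeff_map, coeff_psComp, coeff_psComp, map_sum]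
  apply Finset.sum_congr rfl
  intro k _
  rw [map_mul, ← coeff_map, ← coeff_map, ← map_pow]

lemma psComp_Xpow_left {G : O⟦X⟧} (hG : constantCoeff G = 0) (q : ℕ) :
    psComp (X ^ q) G = G ^ q := by
  ext n
  rw [coeff_psComp]
  have : ∀ k ∈ range (n + 1), coeff k (X ^ q : O⟦X⟧) * coeff n (G ^ k)
      = if k = q then coeff n (G ^ q) else 0 := by
    intro k _
    rw [coeff_X_pow]
    split
    · next h => rw [h, one_mul]
    · rw [zero_mul]
  rw [Finset.sum_congr rfl this, Finset.sum_ite_eq' (range (n + 1)) q]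
  split
  · rfl
  · next h =>
    rw [Finset.mem_range, not_lt] at h
    exact (coeff_pow_eq_zero hG (by omega)).symm

lemma psComp_Xpow_right (G : O⟦X⟧) {q : ℕ} (hq : 0 < q) (n : ℕ) :
    coeff n (psComp G (X ^ q)) = if q ∣ n then coeff (n / q) G else 0 := by
  rw [coeff_psComp]
  have : ∀ k ∈ range (n + 1), coeff k G * coeff n (((X : O⟦X⟧) ^ q) ^ k)
      = if k = n / q ∧ q ∣ n then coeff (n / q) G else 0 := by
    intro k _
    rw [← pow_mul, coeff_X_pow]
    split
    · next h =>
      have hd : q ∣ n := Dvd.intro k (by omega)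
      have hk : k = n / q := by rw [h, Nat.mul_div_cancel_left _ hq]
      rw [if_pos ⟨hk, hd⟩, hk, mul_one]
    · next h =>
      rw [mul_zero]
      split
      · next h2 =>
        exfalso
        exact h (by rw [h2.1, Nat.mul_div_cancel' h2.2])
      · rfl
  rw [Finset.sum_congr rfl this]
  by_cases hd : q ∣ n
  · classical
    rw [show (fun k => if k = n / q ∧ q ∣ n then coeff (n / q) G else 0)
        = fun k => if k = n / q then coeff (n / q) G else 0 from ?_]
    · rw [Finset.sum_ite_eq' (range (n + 1)) (n / q),
        if_pos (Finset.mem_range.mpr (lt_of_le_of_lt (Nat.div_le_self n q) (by omega))),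
        if_pos hd]
    · funext k
      by_cases hk : k = n / q <;> simp [hk, hd]
  · simp [hd]

lemma coeff_pow_card {K : Type*} [Field K] [Fintype K] (G : PowerSeries K) (n : ℕ) :
    PowerSeries.coeff n (G ^ Fintype.card K) =
      if Fintype.card K ∣ n then PowerSeries.coeff (n / Fintype.card K) G else 0 := by
  set q := Fintype.card K with hq
  have hq0 : 0 < q := Fintype.card_pos
  set P : Polynomial K := trunc (n + 1) G with hP
  have hcoeP : ∀ j, j ≤ n → P.coeff j = PowerSeries.coeff j G := by
    intro j hj
    rw [hP, coeff_trunc, if_pos (by omega)]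
  have hdvd : (X : PowerSeries K) ^ (n + 1) ∣ G ^ q - (P : PowerSeries K) ^ q := by
    have h1 : (X : PowerSeries K) ^ (n + 1) ∣ G - (P : PowerSeries K) := by
      rw [PowerSeries.X_pow_dvd_iff]
      intro m hm
      rw [map_sub, Polynomial.coeff_coe, hcoeP m (by omega), sub_self]
    have hgeom : G ^ q - (P : PowerSeries K) ^ q
        = (G - P) * ∑ i ∈ range q, G ^ i * (P : PowerSeries K) ^ (q - 1 - i) := by
      rw [← geom_sum₂_mul, mul_comm]
    rw [hgeom]
    exact Dvd.dvd.mul_right h1 _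
  have h2 : PowerSeries.coeff n (G ^ q) = PowerSeries.coeff n ((P : PowerSeries K) ^ q) := by
    have := (PowerSeries.X_pow_dvd_iff.mp hdvd) n (by omega)
    rw [map_sub, sub_eq_zero] at this
    exact this
  rw [h2, ← Polynomial.coe_pow, Polynomial.coeff_coe, ← FiniteField.expand_card,
    Polynomial.coeff_expand hq0]
  split
  · exact hcoeP _ (Nat.div_le_self n q)
  · rfl

end LT

namespace LT

open scoped Classical in
noncomputable def divPi {O : Type*} [CommRing O] (π e : O) : O :=
  if h : ∃ x, e = π * x then Classical.choose h else 0

lemma divPi_spec {O : Type*} [CommRing O] {π e : O} (h : e ∈ Ideal.span {π}) :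
    e = π * divPi π e := by
  obtain ⟨c, hc⟩ := Ideal.mem_span_singleton.mp h
  have hex : ∃ x, e = π * x := ⟨c, hc⟩
  rw [divPi]
  rw [dif_pos hex]
  exact Classical.choose_spec hex

noncomputable def errC {O : Type*} [CommRing O] (f G : PowerSeries O) (n : ℕ) : O :=
  coeff n (psComp f G) - coeff n (psComp G f)

noncomputable def ltC {O : Type*} [CommRing O] (π : O) (f : PowerSeries O) (a : O) : ℕ → O
  | 0 => 0
  | 1 => a
  | n + 2 =>
      -(Ring.inverse (1 - π ^ (n + 1))) *
        divPi π (errC f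
          (PowerSeries.mk fun j => if _ : j < n + 2 then ltC π f a j else 0) (n + 2))
termination_by n => n

lemma keyDvd {O : Type*} [CommRing O] [IsDomain O] [IsDiscreteValuationRing O]
    [Finite (IsLocalRing.ResidueField O)]
    (π : O) (hπ : Irreducible π) (q : ℕ)
    (hq : Nat.card (IsLocalRing.ResidueField O) = q)
    (f : O⟦X⟧)
    (hfq : ∀ n : ℕ, coeff n f - coeff n ((X : O⟦X⟧) ^ q) ∈ Ideal.span {π})
    {G : O⟦X⟧} (hG : constantCoeff G = 0) (n : ℕ) :
    coeff n (psComp f G) - coeff n (psComp G f) ∈ Ideal.span {π} := by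
  classical
  have hmax : IsLocalRing.maximalIdeal O = Ideal.span {π} := hπ.maximalIdeal_eq
  set K := IsLocalRing.ResidueField O with hK
  letI : Fintype K := Fintype.ofFinite K
  have hcard : Fintype.card K = q := by rw [← Nat.card_eq_fintype_card, hq]
  have hq0 : 0 < q := hcard ▸ Fintype.card_pos
  set φ := IsLocalRing.residue O with hφ
  have hmem : ∀ x : O, x ∈ Ideal.span {π} ↔ φ x = 0 := by
    intro x
    rw [hφ, IsLocalRing.residue_eq_zero_iff, hmax]
  have hmapf : PowerSeries.map φ f = (X : K⟦X⟧) ^ q := by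
    have : (X : K⟦X⟧) ^ q = PowerSeries.map φ ((X : O⟦X⟧) ^ q) := by
      rw [map_pow, PowerSeries.map_X]
    rw [this]
    ext m
    rw [coeff_map, coeff_map, ← sub_eq_zero, ← map_sub]
    exact (hmem _).mp (hfq m)
  have hGbar : constantCoeff (PowerSeries.map φ G) = 0 := by
    rw [← coeff_zero_eq_constantCoeff_apply, coeff_map,
      coeff_zero_eq_constantCoeff_apply, hG, map_zero]
  rw [hmem, map_sub, ← coeff_map, ← coeff_map, map_psComp, map_psComp, hmapf,
    psComp_Xpow_left hGbar, psComp_Xpow_right _ hq0, ← hcard,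
    coeff_pow_card, hcard, sub_self]

end LT

/-- **Lubin–Tate.** Let `O` be a complete discrete valuation ring with prime element
`π` and finite residue field of order `q`, and let `f ∈ O⟦T⟧` satisfy `f ≡ πT` modulo
degree-2 terms and `f ≡ T^q` modulo `π`. Then for each `a ∈ O` there is a unique power
series `[a]_f ∈ O⟦T⟧` with `[a]_f ≡ aT` modulo degree-2 terms and
`[a]_f ∘ f = f ∘ [a]_f`. -/
theorem lubin_tate_endomorphism (O : Type*) [CommRing O] [IsDomain O]
    [IsDiscreteValuationRing O] [IsAdicComplete (IsLocalRing.maximalIdeal O) O]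
    [Finite (IsLocalRing.ResidueField O)]
    (π : O) (hπ : Irreducible π)
    (q : ℕ) (hq : Nat.card (IsLocalRing.ResidueField O) = q)
    (f : PowerSeries O)
    (hf0 : PowerSeries.coeff 0 f = 0)
    (hf1 : PowerSeries.coeff 1 f = π)
    (hfq : ∀ n : ℕ,
      PowerSeries.coeff n f - PowerSeries.coeff n (PowerSeries.X ^ q) ∈
        Ideal.span {π})
    (a : O) :
    ∃! F : PowerSeries O,
      (PowerSeries.coeff 0 F = 0 ∧ PowerSeries.coeff 1 F = a) ∧
        psComp F f = psComp f F := by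
  classical
  have hf0' : constantCoeff f = 0 := by
    rw [← coeff_zero_eq_constantCoeff_apply]; exact hf0
  have hunit : ∀ m : ℕ, IsUnit (1 - π ^ (m + 1)) := by
    intro m
    apply IsLocalRing.isUnit_one_sub_self_of_mem_nonunits
    have hmm : π ^ (m + 1) ∈ IsLocalRing.maximalIdeal O := by
      rw [hπ.maximalIdeal_eq]
      exact Ideal.mem_span_singleton.mpr (dvd_pow_self π (by omega))
    exact (IsLocalRing.mem_maximalIdeal _).mp hmm
  have hne : ∀ m : ℕ, π ^ (m + 2) - π ≠ 0 := by
    intro m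
    have h : π ^ (m + 2) - π = π * (-(1 - π ^ (m + 1))) := by ring
    rw [h]
    exact mul_ne_zero hπ.ne_zero (neg_ne_zero.mpr (hunit m).ne_zero)
  set c : ℕ → O := LT.ltC π f a with hcdef
  set F : PowerSeries O := PowerSeries.mk c with hFdef
  have hcF : ∀ n, coeff n F = c n := fun n => coeff_mk n c
  have hc0 : coeff 0 F = 0 := by rw [hcF, hcdef]; rw [LT.ltC]
  have hc1 : coeff 1 F = a := by rw [hcF, hcdef]; rw [LT.ltC]
  have hF0' : constantCoeff F = 0 := by
    rw [← coeff_zero_eq_constantCoeff_apply]; exact hc0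
  have htrunc : ∀ n : ℕ, ((trunc n F : Polynomial O) : O⟦X⟧) =
      PowerSeries.mk (fun j => if _ : j < n then LT.ltC π f a j else 0) := by
    intro n
    ext j
    rw [LT.coeff_truncPS]
    simp only [coeff_mk]
    by_cases h : j < n
    · rw [if_pos h, dif_pos h, hcF, hcdef]
    · rw [if_neg h, dif_neg h]
  have hkey : ∀ m : ℕ, coeff (m + 2) (psComp F f) = coeff (m + 2) (psComp f F) := by
    intro m
    set G : O⟦X⟧ := ((trunc (m + 2) F : Polynomial O) : O⟦X⟧) with hGdef
    have hG0 : constantCoeff G = 0 := by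
      rw [← coeff_zero_eq_constantCoeff_apply, hGdef, LT.coeff_truncPS,
        if_pos (by omega : (0:ℕ) < m + 2)]
      exact hc0
    have hdvd := LT.keyDvd π hπ q hq f hfq hG0 (m + 2)
    have he : LT.errC f G (m + 2) = π * LT.divPi π (LT.errC f G (m + 2)) :=
      LT.divPi_spec (by simpa [LT.errC] using hdvd)
    have he' : coeff (m + 2) (psComp f G) - coeff (m + 2) (psComp G f) =
        π * LT.divPi π (LT.errC f G (m + 2)) := by
      simpa [LT.errC] using he
    have hcoefF : coeff (m + 2) F =
        -(Ring.inverse (1 - π ^ (m + 1))) * LT.divPi π (LT.errC f G (m + 2)) := by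
      rw [hcF, hcdef]
      rw [LT.ltC, ← htrunc (m + 2), ← hGdef]
    have hu : Ring.inverse (1 - π ^ (m + 1)) * (1 - π ^ (m + 1)) = 1 :=
      Ring.inverse_mul_cancel _ (hunit m)
    rw [LT.sep1 hf0' F (m + 2), LT.sep2 hF0' (show (1:ℕ) ≤ m + 2 by omega), hf1,
      ← hGdef, hcoefF]
    set d := LT.divPi π (LT.errC f G (m + 2))
    linear_combination (π * d) * hu - he'
  have hcomm : psComp F f = psComp f F := by
    ext n
    match n with
    | 0 => rw [LT.coeff_zero_psComp, LT.coeff_zero_psComp, hc0, hf0]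
    | 1 => rw [LT.coeff_one_psComp, LT.coeff_one_psComp]; ring
    | (m + 2) => exact hkey m
  refine ⟨F, ⟨⟨hc0, hc1⟩, hcomm⟩, ?_⟩
  intro B hB
  have hB0' : constantCoeff B = 0 := by
    rw [← coeff_zero_eq_constantCoeff_apply]; exact hB.1.1
  ext n
  induction n using Nat.strong_induction_on with
  | _ n ih =>
    match n with
    | 0 => rw [hB.1.1, hc0]
    | 1 => rw [hB.1.2, hc1]
    | (m + 2) =>
      have htr : ((trunc (m + 2) B : Polynomial O) : O⟦X⟧) =
          ((trunc (m + 2) F : Polynomial O) : O⟦X⟧) := by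
        ext j
        rw [LT.coeff_truncPS, LT.coeff_truncPS]
        by_cases h : j < m + 2
        · rw [if_pos h, if_pos h, ih j h]
        · rw [if_neg h, if_neg h]
      have h1 := congrArg (coeff (m + 2)) hB.2
      rw [LT.sep1 hf0' B (m + 2), LT.sep2 hB0' (show (1:ℕ) ≤ m + 2 by omega), hf1,
        htr] at h1
      have h2 := congrArg (coeff (m + 2)) hcomm
      rw [LT.sep1 hf0' F (m + 2), LT.sep2 hF0' (show (1:ℕ) ≤ m + 2 by omega), hf1] at h2
      have hz : (coeff (m + 2) B - coeff (m + 2) F) * (π ^ (m + 2) - π) = 0 := by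
        linear_combination h1 - h2
      rcases mul_eq_zero.mp hz with h | h
      · exact sub_eq_zero.mp h
      · exact absurd h (hne m)
end

section
/- Let O be a complete discrete valuation ring with uniformizer π and finite residue field of order q, and let f, g ∈ O[[T]] both be Lubin–Tate series for π (i.e., each has linear term πT and reduces to T^q mod π). Then for any linear form ℓ(X₁,…,X_n) = a₁X₁ + ⋯ + a_nX_n with aᵢ ∈ O, there is a unique power series φ ∈ O[[X₁,…,X_n]] with φ ≡ ℓ modulo terms of total degree ≥ 2 and f(φ(X₁,…,X_n)) = φ(g(X₁),…,g(X_n)). -/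
/-- Substitution of a multivariate power series `φ` (with zero constant term) into a
one-variable power series `f`, i.e. `f(φ)`: the coefficient at `d` only depends on the
truncation `Σ_{k ≤ |d|} f_k φ^k`. -/
noncomputable def psMvComp {R : Type*} [CommRing R] {n : ℕ}
    (f : PowerSeries R) (φ : MvPowerSeries (Fin n) R) : MvPowerSeries (Fin n) R :=
  fun d =>
    MvPowerSeries.coeff (R := R) d
      (∑ k ∈ Finset.range ((d.sum fun _ m => m) + 1),
        MvPowerSeries.C (σ := Fin n) (R := R) (PowerSeries.coeff (R := R) k f) * φ ^ k)

/-- Substitution of a family `ψ` of multivariate power series (with zero constant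
terms) into a multivariate power series `φ`, i.e. `φ(ψ₁, …, ψ_n)`. -/
noncomputable def mvComp {R : Type*} [CommRing R] {n : ℕ}
    (φ : MvPowerSeries (Fin n) R) (ψ : Fin n → MvPowerSeries (Fin n) R) :
    MvPowerSeries (Fin n) R :=
  fun d =>
    MvPowerSeries.coeff (R := R) d
      (∑ e ∈ Finset.Iic (Finsupp.equivFunOnFinite.symm fun _ : Fin n =>
          d.sum fun _ m => m),
        MvPowerSeries.C (σ := Fin n) (R := R) (MvPowerSeries.coeff (R := R) e φ) * ∏ i, ψ i ^ e i)

namespace LTaux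
open MvPowerSeries Finset
variable {R : Type*} [CommRing R] {n : ℕ}

/-- total degree of an exponent -/
def degr (d : Fin n →₀ ℕ) : ℕ := d.sum fun _ m => m

lemma degr_eq (d : Fin n →₀ ℕ) : degr d = ∑ i, d i := by
  rw [degr, Finsupp.sum_fintype]; intro i; rfl

lemma degr_add (u v : Fin n →₀ ℕ) : degr (u + v) = degr u + degr v := by
  simp [degr_eq, Finset.sum_add_distrib]

lemma degr_eq_zero_iff (u : Fin n →₀ ℕ) : degr u = 0 ↔ u = 0 := by
  rw [degr_eq]
  constructor
  · intro h
    ext i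
    exact Finset.sum_eq_zero_iff.mp h i (mem_univ i)
  · rintro rfl; simp

lemma le_degr (d : Fin n →₀ ℕ) (i : Fin n) : d i ≤ degr d := by
  rw [degr_eq]
  exact Finset.single_le_sum (f := fun j => d j) (fun _ _ => Nat.zero_le _) (mem_univ i)

lemma degr_single (i : Fin n) (k : ℕ) : degr (Finsupp.single i k) = k := by
  simp [degr, Finsupp.sum_single_index]

lemma degr_smul (q : ℕ) (e : Fin n →₀ ℕ) : degr (q • e) = q * degr e := by
  simp [degr_eq, Finset.mul_sum]

lemma degr_eq_one (d : Fin n →₀ ℕ) (hd : degr d = 1) : ∃ i, d = Finsupp.single i 1 := by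
  have h1 : ∑ i, d i = 1 := by rw [← degr_eq, hd]
  have hne : ∃ i, d i ≠ 0 := by
    by_contra h
    push_neg at h
    simp [h] at h1
  obtain ⟨i, hi⟩ := hne
  refine ⟨i, ?_⟩
  have hle : d i ≤ 1 := hd ▸ le_degr d i
  have hdi : d i = 1 := le_antisymm hle (Nat.one_le_iff_ne_zero.mpr hi)
  have hrest : ∀ j, j ≠ i → d j = 0 := by
    intro j hj
    by_contra hzj
    have h2 : 2 ≤ ∑ k, d k := by
      have : d i + d j ≤ ∑ k ∈ ({i, j} : Finset (Fin n)), d k := by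
        rw [Finset.sum_pair (Ne.symm hj)]
      calc 2 = d i + 1 := by rw [hdi]
        _ ≤ d i + d j := by omega
        _ ≤ ∑ k ∈ ({i, j} : Finset (Fin n)), d k := this
        _ ≤ ∑ k, d k := Finset.sum_le_sum_of_subset (Finset.subset_univ _)
    omega
  ext j
  rcases eq_or_ne j i with rfl | hj
  · simp [hdi]
  · simp [Finsupp.single_apply, Ne.symm hj, hrest j hj]

/-- the sum of the coordinate singles recovers the finsupp -/
lemma sum_single_eq (e : Fin n →₀ ℕ) : ∑ i, Finsupp.single i (e i) = e := by
  ext j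
  rw [Finset.sum_apply']
  rw [Finset.sum_eq_single j (fun i _ hij => Finsupp.single_eq_of_ne' hij) (by simp)]
  simp



/-- a product of power series with zero constant coefficient has no coefficients
below the number of factors -/
lemma coeff_prod_eq_zero {ι : Type*} (s : Finset ι) (F : ι → MvPowerSeries (Fin n) R)
    (h0 : ∀ j ∈ s, constantCoeff (F j) = 0) :
    ∀ d : Fin n →₀ ℕ, degr d < s.card → MvPowerSeries.coeff d (∏ j ∈ s, F j) = 0 := by
  classical
  induction s using Finset.induction_on with
  | empty => intro d hd; simp at hd
  | insert H T hH ih =>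
    intro d hd
    rw [Finset.prod_insert hH, MvPowerSeries.coeff_mul]
    apply Finset.sum_eq_zero
    rintro ⟨u, v⟩ huv
    rw [Finset.HasAntidiagonal.mem_antidiagonal] at huv
    by_cases hu : u = 0
    · have : MvPowerSeries.coeff u (F H) = 0 := by
        rw [hu, MvPowerSeries.coeff_zero_eq_constantCoeff]
        exact h0 H (Finset.mem_insert_self H T)
      rw [this, zero_mul]
    · have hvd : degr v < T.card := by
        have := degr_add u v
        rw [huv] at this
        have hu1 : 1 ≤ degr u := by
          rcases Nat.eq_zero_or_pos (degr u) with h | h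
          · exact absurd ((degr_eq_zero_iff u).mp h) hu
          · exact h
        rw [Finset.card_insert_of_notMem hH] at hd
        omega
      rw [ih (fun j hj => h0 j (Finset.mem_insert_of_mem hj)) v hvd, mul_zero]

/-- agreement lemma: coefficients of products only depend on low-order coefficients -/
lemma coeff_prod_congr {ι : Type*} (s : Finset ι) (F G : ι → MvPowerSeries (Fin n) R)
    (h0F : ∀ j ∈ s, constantCoeff (F j) = 0)
    (h0G : ∀ j ∈ s, constantCoeff (G j) = 0) :
    ∀ d : Fin n →₀ ℕ,
      (∀ j ∈ s, ∀ u : Fin n →₀ ℕ, degr u + s.card ≤ degr d + 1 →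
        MvPowerSeries.coeff u (F j) = MvPowerSeries.coeff u (G j)) →
      MvPowerSeries.coeff d (∏ j ∈ s, F j) = MvPowerSeries.coeff d (∏ j ∈ s, G j) := by
  classical
  induction s using Finset.induction_on with
  | empty => intro d _; simp
  | insert H T hH ih =>
    intro d hagree
    rw [Finset.prod_insert hH, Finset.prod_insert hH, MvPowerSeries.coeff_mul,
      MvPowerSeries.coeff_mul]
    apply Finset.sum_congr rfl
    rintro ⟨u, v⟩ huv
    rw [Finset.HasAntidiagonal.mem_antidiagonal] at huv
    have hduv : degr d = degr u + degr v := by rw [← huv, degr_add]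
    rw [Finset.card_insert_of_notMem hH] at hagree
    by_cases hu : u = 0
    · subst hu
      rw [MvPowerSeries.coeff_zero_eq_constantCoeff,
        h0F H (Finset.mem_insert_self H T), h0G H (Finset.mem_insert_self H T), zero_mul, zero_mul]
    · have hu1 : 1 ≤ degr u := by
        rcases Nat.eq_zero_or_pos (degr u) with h | h
        · exact absurd ((degr_eq_zero_iff u).mp h) hu
        · exact h
      by_cases hv : degr v < T.card
      · rw [coeff_prod_eq_zero T F (fun j hj => h0F j (Finset.mem_insert_of_mem hj)) v hv,
          coeff_prod_eq_zero T G (fun j hj => h0G j (Finset.mem_insert_of_mem hj)) v hv,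
          mul_zero, mul_zero]
      · push_neg at hv
        have h1 : MvPowerSeries.coeff u (F H) = MvPowerSeries.coeff u (G H) :=
          hagree H (Finset.mem_insert_self H T) u (by omega)
        have h2 : MvPowerSeries.coeff v (∏ j ∈ T, F j) =
            MvPowerSeries.coeff v (∏ j ∈ T, G j) := by
          apply ih (fun j hj => h0F j (Finset.mem_insert_of_mem hj))
            (fun j hj => h0G j (Finset.mem_insert_of_mem hj))
          intro j hj w hw
          exact hagree j (Finset.mem_insert_of_mem hj) w (by omega)
        rw [h1, h2]



lemma coeff_pow_eq_zero (F : MvPowerSeries (Fin n) R)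
    (h0 : constantCoeff F = 0) (k : ℕ) (d : Fin n →₀ ℕ) (hd : degr d < k) :
    MvPowerSeries.coeff d (F ^ k) = 0 := by
  have : F ^ k = ∏ _j ∈ Finset.range k, F := by rw [Finset.prod_const, Finset.card_range]
  rw [this]
  exact coeff_prod_eq_zero _ _ (fun j _ => h0) d (by rwa [Finset.card_range])

lemma coeff_pow_congr (F G : MvPowerSeries (Fin n) R)
    (h0F : constantCoeff F = 0) (h0G : constantCoeff G = 0)
    (k : ℕ) (d : Fin n →₀ ℕ)
    (hagree : ∀ u : Fin n →₀ ℕ, degr u + k ≤ degr d + 1 →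
      MvPowerSeries.coeff u F = MvPowerSeries.coeff u G) :
    MvPowerSeries.coeff d (F ^ k) = MvPowerSeries.coeff d (G ^ k) := by
  have hF : F ^ k = ∏ _j ∈ Finset.range k, F := by rw [Finset.prod_const, Finset.card_range]
  have hG : G ^ k = ∏ _j ∈ Finset.range k, G := by rw [Finset.prod_const, Finset.card_range]
  rw [hF, hG]
  exact coeff_prod_congr _ _ _ (fun j _ => h0F) (fun j _ => h0G) d
    (fun j _ u hu => hagree u (by rwa [Finset.card_range] at hu))

lemma prodpow_eq (F : Fin n → MvPowerSeries (Fin n) R) (e : Fin n →₀ ℕ) :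
    ∏ i, F i ^ e i = ∏ x ∈ Finset.univ.sigma fun i : Fin n => Finset.range (e i), F x.1 := by
  rw [Finset.prod_sigma]
  exact Finset.prod_congr rfl fun i _ => by simp

lemma card_sigma_range (e : Fin n →₀ ℕ) :
    (Finset.univ.sigma fun i : Fin n => Finset.range (e i)).card = degr e := by
  rw [Finset.card_sigma, degr_eq]
  exact Finset.sum_congr rfl fun i _ => Finset.card_range _

lemma coeff_prodpow_eq_zero (F : Fin n → MvPowerSeries (Fin n) R)
    (h0 : ∀ i, constantCoeff (F i) = 0) (e d : Fin n →₀ ℕ)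
    (hd : degr d < degr e) :
    MvPowerSeries.coeff d (∏ i, F i ^ e i) = 0 := by
  rw [prodpow_eq]
  exact coeff_prod_eq_zero _ _ (fun j _ => h0 j.1) d (by rwa [card_sigma_range])

lemma coeff_prodpow_congr (F G : Fin n → MvPowerSeries (Fin n) R)
    (h0F : ∀ i, constantCoeff (F i) = 0)
    (h0G : ∀ i, constantCoeff (G i) = 0) (e d : Fin n →₀ ℕ)
    (hagree : ∀ (i) (u : Fin n →₀ ℕ), degr u + degr e ≤ degr d + 1 →
      MvPowerSeries.coeff u (F i) = MvPowerSeries.coeff u (G i)) :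
    MvPowerSeries.coeff d (∏ i, F i ^ e i) =
      MvPowerSeries.coeff d (∏ i, G i ^ e i) := by
  rw [prodpow_eq, prodpow_eq]
  exact coeff_prod_congr _ _ _ (fun j _ => h0F j.1) (fun j _ => h0G j.1) d
    (fun j _ u hu => hagree j.1 u (by rwa [card_sigma_range] at hu))

lemma monomial_pow (e : Fin n →₀ ℕ) (c : R) (k : ℕ) :
    (MvPowerSeries.monomial e c) ^ k = MvPowerSeries.monomial (k • e) (c ^ k) := by
  induction k with
  | zero => simp [MvPowerSeries.monomial_zero_eq_C_apply]
  | succ k ih =>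
    rw [pow_succ, ih, MvPowerSeries.monomial_mul_monomial, succ_nsmul, pow_succ]

lemma prod_monomial {ι : Type*} (s : Finset ι) (u : ι → Fin n →₀ ℕ) (c : ι → R) :
    ∏ j ∈ s, MvPowerSeries.monomial (u j) (c j) =
      MvPowerSeries.monomial (∑ j ∈ s, u j) (∏ j ∈ s, c j) := by
  classical
  induction s using Finset.induction_on with
  | empty => simp [MvPowerSeries.monomial_zero_eq_C_apply]
  | insert H T hH ih =>
    rw [Finset.prod_insert hH, Finset.prod_insert hH, Finset.sum_insert hH, ih,
      MvPowerSeries.monomial_mul_monomial]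



/-- the constant finsupp with all coordinates `m` -/
noncomputable def constM (n m : ℕ) : Fin n →₀ ℕ := Finsupp.equivFunOnFinite.symm fun _ : Fin n => m

lemma le_constM_iff (e : Fin n →₀ ℕ) (m : ℕ) : e ≤ constM n m ↔ ∀ i, e i ≤ m := by
  rw [Finsupp.le_def]
  constructor <;> intro h i <;> exact h i

lemma mem_Iic_constM_of_degr_le (e : Fin n →₀ ℕ) (m : ℕ) (h : degr e ≤ m) :
    e ∈ Finset.Iic (constM n m) := by
  rw [Finset.mem_Iic, le_constM_iff]
  intro i
  exact le_trans (le_degr e i) h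

noncomputable def lhsC (f : PowerSeries R) (φ : MvPowerSeries (Fin n) R)
    (d : Fin n →₀ ℕ) : R :=
  ∑ k ∈ Finset.range (degr d + 1),
    PowerSeries.coeff k f * MvPowerSeries.coeff d (φ ^ k)

noncomputable def rhsC (φ : MvPowerSeries (Fin n) R) (ψ : Fin n → MvPowerSeries (Fin n) R)
    (d : Fin n →₀ ℕ) : R :=
  ∑ e ∈ Finset.Iic (constM n (degr d)),
    MvPowerSeries.coeff e φ * MvPowerSeries.coeff d (∏ i, ψ i ^ e i)

lemma coeff_psMvComp (f : PowerSeries R) (φ : MvPowerSeries (Fin n) R) (d : Fin n →₀ ℕ) :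
    MvPowerSeries.coeff d (psMvComp f φ) = lhsC f φ d := by
  rw [MvPowerSeries.coeff_apply]
  show MvPowerSeries.coeff d _ = _
  rw [map_sum, lhsC]
  exact Finset.sum_congr rfl fun k _ => by rw [MvPowerSeries.coeff_C_mul]

lemma coeff_mvComp (φ : MvPowerSeries (Fin n) R) (ψ : Fin n → MvPowerSeries (Fin n) R)
    (d : Fin n →₀ ℕ) :
    MvPowerSeries.coeff d (mvComp φ ψ) = rhsC φ ψ d := by
  rw [MvPowerSeries.coeff_apply]
  show MvPowerSeries.coeff d _ = _
  rw [map_sum, rhsC]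
  exact Finset.sum_congr rfl fun e _ => by rw [MvPowerSeries.coeff_C_mul]

/-- coefficients of `g(X i)` -/
lemma coeff_psMvComp_X (g : PowerSeries R) (i : Fin n) (u : Fin n →₀ ℕ) :
    MvPowerSeries.coeff u (psMvComp g (MvPowerSeries.X i)) =
      if u = Finsupp.single i (u i) then PowerSeries.coeff (u i) g else 0 := by
  classical
  rw [coeff_psMvComp, lhsC]
  have hc : ∀ k, MvPowerSeries.coeff u ((MvPowerSeries.X i : MvPowerSeries (Fin n) R) ^ k) =
      if u = Finsupp.single i k then 1 else 0 := fun k => by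
    rw [MvPowerSeries.coeff_X_pow]
  by_cases h : u = Finsupp.single i (u i)
  · rw [if_pos h]
    rw [Finset.sum_eq_single (u i)]
    · rw [hc, if_pos h, mul_one]
    · intro k _ hk
      rw [hc, if_neg, mul_zero]
      intro hcon
      exact hk (by rw [hcon, Finsupp.single_eq_same])
    · intro hmem
      exfalso
      exact hmem (Finset.mem_range.mpr (Nat.lt_succ_of_le (le_degr u i)))
  · rw [if_neg h]
    apply Finset.sum_eq_zero
    intro k _
    rw [hc, if_neg, mul_zero]
    intro hcon
    exact h (by rw [hcon, Finsupp.single_eq_same])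




section Main
variable {O : Type*} [CommRing O] {n : ℕ}

lemma degr_zero : degr (0 : Fin n →₀ ℕ) = 0 := by simp [degr]

/-- constant coefficient of `g(X i)` is zero -/
lemma constantCoeff_gs (g : PowerSeries O) (hg0 : PowerSeries.coeff 0 g = 0) (i : Fin n) :
    constantCoeff (psMvComp g (MvPowerSeries.X i)) = 0 := by
  rw [← MvPowerSeries.coeff_zero_eq_constantCoeff, coeff_psMvComp_X]
  simp [hg0]

/-- the difference of `lhsC` at two series agreeing below degree `m` -/
lemma lhsC_sub (f : PowerSeries O) (π : O) (hf1 : PowerSeries.coeff 1 f = π)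
    (φ χ : MvPowerSeries (Fin n) O)
    (h0φ : constantCoeff φ = 0) (h0χ : constantCoeff χ = 0)
    (d : Fin n →₀ ℕ) (hm : 1 ≤ degr d)
    (hagree : ∀ e : Fin n →₀ ℕ, degr e < degr d →
      MvPowerSeries.coeff e φ = MvPowerSeries.coeff e χ) :
    lhsC f φ d - lhsC f χ d = π * (MvPowerSeries.coeff d φ - MvPowerSeries.coeff d χ) := by
  rw [lhsC, lhsC, ← Finset.sum_sub_distrib]
  have key : ∀ k ∈ Finset.range (degr d + 1),
      PowerSeries.coeff k f * MvPowerSeries.coeff d (φ ^ k) -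
        PowerSeries.coeff k f * MvPowerSeries.coeff d (χ ^ k) =
      if k = 1 then π * (MvPowerSeries.coeff d φ - MvPowerSeries.coeff d χ) else 0 := by
    intro k hk
    rcases Nat.lt_or_ge k 2 with hk2 | hk2
    · interval_cases k
      · simp
      · simp [pow_one, hf1, mul_sub]
    · rw [if_neg (by omega)]
      have : MvPowerSeries.coeff d (φ ^ k) = MvPowerSeries.coeff d (χ ^ k) := by
        apply coeff_pow_congr φ χ h0φ h0χ k d
        intro u hu
        rcases Nat.lt_or_ge (degr u) (degr d) with h | h
        · exact hagree u h
        · omega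
      rw [this, sub_self]
  rw [Finset.sum_congr rfl key, Finset.sum_ite_eq' (Finset.range (degr d + 1)) 1,
    if_pos (Finset.mem_range.mpr (by omega))]

/-- the coefficient of the product `∏ g(X i)^{e i}` in top degree -/
lemma coeff_prod_gs_top (g : PowerSeries O) (π : O)
    (hg0 : PowerSeries.coeff 0 g = 0) (hg1 : PowerSeries.coeff 1 g = π)
    (e d : Fin n →₀ ℕ) (he : degr e = degr d) (hm : 1 ≤ degr d) :
    MvPowerSeries.coeff d (∏ i, psMvComp g (MvPowerSeries.X i) ^ e i) =
      if e = d then π ^ degr d else 0 := by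
  classical
  have step : MvPowerSeries.coeff d (∏ i, psMvComp g (MvPowerSeries.X i) ^ e i) =
      MvPowerSeries.coeff d (∏ i, (MvPowerSeries.monomial (Finsupp.single i 1) π) ^ e i) := by
    apply coeff_prodpow_congr _ _ (constantCoeff_gs g hg0) _ e d
    · intro i u hu
      have hu1 : degr u ≤ 1 := by omega
      rw [coeff_psMvComp_X]
      rcases Nat.lt_or_ge (degr u) 1 with h | h
      · have hu0 : u = 0 := (degr_eq_zero_iff u).mp (by omega)
        subst hu0
        have h1 : (0 : Fin n →₀ ℕ) ≠ Finsupp.single i 1 := by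
          intro hcon
          have h2 := congrArg degr hcon
          rw [degr_single, degr_zero] at h2
          exact one_ne_zero h2.symm
        simp [hg0, MvPowerSeries.coeff_monomial, h1]
      · have hu1' : degr u = 1 := by omega
        obtain ⟨j, rfl⟩ := degr_eq_one u hu1'
        rw [MvPowerSeries.coeff_monomial]
        rcases eq_or_ne j i with rfl | hji
        · rw [if_pos, if_pos rfl, Finsupp.single_eq_same, hg1]
          rw [Finsupp.single_eq_same]
        · rw [if_neg, if_neg]
          · intro hcon
            rw [Finsupp.single_eq_single_iff] at hcon
            rcases hcon with ⟨h1, _⟩ | ⟨h1, _⟩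
            · exact hji h1
            · exact one_ne_zero h1
          · rw [Finsupp.single_eq_of_ne' hji]
            intro hcon
            have := congrArg degr hcon
            rw [degr_single, degr_single] at this
            exact one_ne_zero this
    · intro i
      rw [← MvPowerSeries.coeff_zero_eq_constantCoeff, MvPowerSeries.coeff_monomial, if_neg]
      intro hcon
      have h2 := congrArg degr hcon
      rw [degr_single, degr_zero] at h2
      exact one_ne_zero h2.symm
  rw [step]
  have : ∀ i : Fin n, (MvPowerSeries.monomial (Finsupp.single i 1) π) ^ e i =
      MvPowerSeries.monomial (Finsupp.single i (e i)) (π ^ e i) := by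
    intro i
    rw [monomial_pow]
    congr 1
    ext j
    simp [Finsupp.single_apply, mul_comm]
  rw [Finset.prod_congr rfl fun i _ => this i, prod_monomial, sum_single_eq,
    MvPowerSeries.coeff_monomial]
  have hprod : ∏ i : Fin n, π ^ e i = π ^ degr d := by
    rw [Finset.prod_pow_eq_pow_sum, ← degr_eq, he]
  rw [hprod]
  by_cases h : e = d
  · rw [if_pos h.symm, if_pos h]
  · rw [if_neg (Ne.symm h), if_neg h]

/-- the difference of `rhsC` at two series agreeing below degree `m` -/
lemma rhsC_sub (g : PowerSeries O) (π : O)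
    (hg0 : PowerSeries.coeff 0 g = 0) (hg1 : PowerSeries.coeff 1 g = π)
    (φ χ : MvPowerSeries (Fin n) O)
    (d : Fin n →₀ ℕ) (hm : 1 ≤ degr d)
    (hagree : ∀ e : Fin n →₀ ℕ, degr e < degr d →
      MvPowerSeries.coeff e φ = MvPowerSeries.coeff e χ) :
    rhsC φ (fun i => psMvComp g (MvPowerSeries.X i)) d -
      rhsC χ (fun i => psMvComp g (MvPowerSeries.X i)) d =
    π ^ degr d * (MvPowerSeries.coeff d φ - MvPowerSeries.coeff d χ) := by
  classical
  rw [rhsC, rhsC, ← Finset.sum_sub_distrib]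
  have key : ∀ e ∈ Finset.Iic (constM n (degr d)),
      MvPowerSeries.coeff e φ *
          MvPowerSeries.coeff d (∏ i, psMvComp g (MvPowerSeries.X i) ^ e i) -
        MvPowerSeries.coeff e χ *
          MvPowerSeries.coeff d (∏ i, psMvComp g (MvPowerSeries.X i) ^ e i) =
      if e = d then π ^ degr d * (MvPowerSeries.coeff d φ - MvPowerSeries.coeff d χ)
        else 0 := by
    intro e he
    rcases eq_or_ne e d with rfl | hed
    · rw [if_pos rfl, coeff_prod_gs_top g π hg0 hg1 e e rfl hm, if_pos rfl]
      ring
    · rw [if_neg hed]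
      rcases Nat.lt_trichotomy (degr e) (degr d) with h | h | h
      · rw [hagree e h, sub_self]
      · rw [coeff_prod_gs_top g π hg0 hg1 e d h hm, if_neg hed, mul_zero, mul_zero, sub_self]
      · rw [coeff_prodpow_eq_zero _ (constantCoeff_gs g hg0) e d h, mul_zero, mul_zero,
          sub_self]
  rw [Finset.sum_congr rfl key, Finset.sum_ite_eq' (Finset.Iic (constM n (degr d))) d,
    if_pos (mem_Iic_constM_of_degr_le d (degr d) le_rfl)]

end Main


section Frob

lemma frob_coeff {K : Type*} [Field K] [Fintype K] {n : ℕ}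
    (q : ℕ) (hq : Fintype.card K = q)
    (F : MvPowerSeries (Fin n) K) (h0 : constantCoeff F = 0) (d : Fin n →₀ ℕ) :
    MvPowerSeries.coeff d (F ^ q) =
      ∑ e ∈ Finset.Iic (constM n (degr d)),
        (if d = q • e then MvPowerSeries.coeff e F else 0) := by
  classical
  set p := ringChar K with hp
  haveI hfp : Fact (Nat.Prime p) := ⟨CharP.char_is_prime K p⟩
  obtain ⟨s, -, hs⟩ := FiniteField.card K p
  rw [hq] at hs
  have hq1 : 1 ≤ q := hq ▸ Fintype.card_pos
  have hCinj : Function.Injective (MvPowerSeries.C (σ := Fin n) (R := K)) := fun a b hab => by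
    simpa using congrArg (constantCoeff (σ := Fin n) (R := K)) hab
  haveI : CharP (MvPowerSeries (Fin n) K) p := charP_of_injective_ringHom hCinj p
  haveI : ExpChar (MvPowerSeries (Fin n) K) p := ExpChar.prime hfp.out
  set m := degr d with hm
  set D := (Finset.Iic (constM n m)).filter (fun e => degr e ≤ m) with hD
  set T : MvPowerSeries (Fin n) K :=
    ∑ e ∈ D, MvPowerSeries.monomial e (MvPowerSeries.coeff e F) with hT
  have hTc : ∀ u : Fin n →₀ ℕ, degr u ≤ m →
      MvPowerSeries.coeff u T = MvPowerSeries.coeff u F := by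
    intro u hu
    rw [hT, map_sum]
    have : ∀ e ∈ D, MvPowerSeries.coeff u (MvPowerSeries.monomial e
        (MvPowerSeries.coeff e F)) = if u = e then MvPowerSeries.coeff e F else 0 :=
      fun e _ => by rw [MvPowerSeries.coeff_monomial]
    rw [Finset.sum_congr rfl this]
    have hmem : u ∈ D := by
      rw [hD, Finset.mem_filter]
      exact ⟨mem_Iic_constM_of_degr_le u m hu, hu⟩
    rw [Finset.sum_eq_single_of_mem u hmem (fun e _ he => if_neg (Ne.symm he)), if_pos rfl]
  have hT0 : constantCoeff T = 0 := by
    rw [← MvPowerSeries.coeff_zero_eq_constantCoeff, hTc 0 (by rw [degr_zero]; omega),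
      MvPowerSeries.coeff_zero_eq_constantCoeff, h0]
  have h1 : MvPowerSeries.coeff d (F ^ q) = MvPowerSeries.coeff d (T ^ q) := by
    apply coeff_pow_congr F T h0 hT0 q d
    intro u hu
    exact (hTc u (by omega)).symm
  have h2 : T ^ q = ∑ e ∈ D, MvPowerSeries.monomial (q • e) (MvPowerSeries.coeff e F) := by
    rw [hT, hs, sum_pow_char_pow]
    apply Finset.sum_congr rfl
    intro e _
    rw [← hs, monomial_pow]
    congr 1
    rw [← hq, FiniteField.pow_card]
  rw [h1, h2, map_sum]
  have h3 : ∀ e ∈ D, MvPowerSeries.coeff d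
      (MvPowerSeries.monomial (q • e) (MvPowerSeries.coeff e F)) =
      if d = q • e then MvPowerSeries.coeff e F else 0 :=
    fun e _ => by rw [MvPowerSeries.coeff_monomial]
  rw [Finset.sum_congr rfl h3]
  apply Finset.sum_subset (Finset.filter_subset _ _)
  intro e hmem hnmem
  rw [if_neg]
  intro hcon
  rw [Finset.mem_filter] at hnmem
  push_neg at hnmem
  have h4 : m < degr e := hnmem hmem
  have h5 := congrArg degr hcon
  rw [degr_smul] at h5
  rw [← hm] at h5
  nlinarith

lemma map_psMvComp_X {O : Type*} [CommRing O] {n : ℕ} (π : O) {K : Type*} [CommRing K]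
    (ρ : O →+* K) (hker : ∀ x : O, ρ x = 0 ↔ x ∈ Ideal.span {π}) (q : ℕ)
    (g : PowerSeries O)
    (hgq : ∀ k : ℕ, PowerSeries.coeff k g -
      PowerSeries.coeff k (PowerSeries.X ^ q) ∈ Ideal.span {π}) (i : Fin n) :
    MvPowerSeries.map ρ (psMvComp g (MvPowerSeries.X i)) =
      (MvPowerSeries.X i : MvPowerSeries (Fin n) K) ^ q := by
  classical
  have hρg : ∀ k, ρ (PowerSeries.coeff k g) = if k = q then 1 else 0 := by
    intro k
    have h1 := (hker _).mpr (hgq k)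
    rw [map_sub, sub_eq_zero] at h1
    rw [h1, PowerSeries.coeff_X_pow, apply_ite ρ, map_one, map_zero]
  ext u
  rw [MvPowerSeries.coeff_map, coeff_psMvComp_X, MvPowerSeries.coeff_X_pow,
    apply_ite ρ, map_zero, hρg]
  by_cases hu : u = Finsupp.single i q
  · have hui : u i = q := by rw [hu, Finsupp.single_eq_same]
    rw [if_pos hu, if_pos (by rw [hu]; rw [Finsupp.single_eq_same]), if_pos hui]
  · rw [if_neg hu]
    by_cases hu2 : u = Finsupp.single i (u i)
    · rw [if_pos hu2, if_neg]
      intro hcon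
      exact hu (by rw [hu2, hcon])
    · rw [if_neg hu2]

lemma mod_pi_key {O : Type*} [CommRing O] {n : ℕ} (π : O) {K : Type*} [Field K] [Fintype K]
    (ρ : O →+* K) (hker : ∀ x : O, ρ x = 0 ↔ x ∈ Ideal.span {π})
    (q : ℕ) (hcard : Fintype.card K = q)
    (f g : PowerSeries O)
    (hfq : ∀ k : ℕ, PowerSeries.coeff k f -
      PowerSeries.coeff k (PowerSeries.X ^ q) ∈ Ideal.span {π})
    (hgq : ∀ k : ℕ, PowerSeries.coeff k g -
      PowerSeries.coeff k (PowerSeries.X ^ q) ∈ Ideal.span {π})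
    (ψ : MvPowerSeries (Fin n) O) (h0 : constantCoeff ψ = 0) (d : Fin n →₀ ℕ) :
    lhsC f ψ d - rhsC ψ (fun i => psMvComp g (MvPowerSeries.X i)) d ∈ Ideal.span {π} := by
  classical
  set ψb := MvPowerSeries.map ρ ψ with hψb
  have h0b : constantCoeff ψb = 0 := by
    rw [hψb, ← MvPowerSeries.coeff_zero_eq_constantCoeff, MvPowerSeries.coeff_map,
      MvPowerSeries.coeff_zero_eq_constantCoeff, h0, map_zero]
  have hρf : ∀ k, ρ (PowerSeries.coeff k f) = if k = q then 1 else 0 := by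
    intro k
    have h1 := (hker _).mpr (hfq k)
    rw [map_sub, sub_eq_zero] at h1
    rw [h1, PowerSeries.coeff_X_pow, apply_ite ρ, map_one, map_zero]
  have hq1 : 1 ≤ q := hcard ▸ Fintype.card_pos
  set m := degr d with hm
  -- left side
  have hL : ρ (lhsC f ψ d) = MvPowerSeries.coeff d (ψb ^ q) := by
    rw [lhsC, map_sum]
    have : ∀ k ∈ Finset.range (m + 1),
        ρ (PowerSeries.coeff k f * MvPowerSeries.coeff d (ψ ^ k)) =
        if k = q then MvPowerSeries.coeff d (ψb ^ k) else 0 := by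
      intro k _
      rw [map_mul, hρf k, ite_mul, one_mul, zero_mul]
      congr 1
      rw [hψb, ← map_pow, MvPowerSeries.coeff_map]
    rw [Finset.sum_congr rfl this, Finset.sum_ite_eq' (Finset.range (m + 1)) q]
    by_cases hqm : q ∈ Finset.range (m + 1)
    · rw [if_pos hqm]
    · rw [if_neg hqm]
      rw [Finset.mem_range] at hqm
      rw [coeff_pow_eq_zero ψb h0b q d (by omega)]
  -- right side
  have hR : ρ (rhsC ψ (fun i => psMvComp g (MvPowerSeries.X i)) d) =
      ∑ e ∈ Finset.Iic (constM n m),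
        (if d = q • e then MvPowerSeries.coeff e ψb else 0) := by
    rw [rhsC, map_sum]
    apply Finset.sum_congr rfl
    intro e _
    rw [map_mul]
    have hmap : ρ (MvPowerSeries.coeff d (∏ i, psMvComp g (MvPowerSeries.X i) ^ e i)) =
        if d = q • e then 1 else 0 := by
      rw [← MvPowerSeries.coeff_map, map_prod]
      have h4 : ∀ i : Fin n, MvPowerSeries.map ρ (psMvComp g (MvPowerSeries.X i) ^ e i) =
          ((MvPowerSeries.X i : MvPowerSeries (Fin n) K) ^ q) ^ e i := by
        intro i
        rw [map_pow, map_psMvComp_X π ρ hker q g hgq i]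
      rw [Finset.prod_congr rfl fun i _ => h4 i]
      have hX : ∀ i : Fin n, ((MvPowerSeries.X i : MvPowerSeries (Fin n) K) ^ q) ^ e i =
          MvPowerSeries.monomial (Finsupp.single i (q * e i)) 1 := by
        intro i
        rw [← pow_mul, MvPowerSeries.X_pow_eq]
      rw [Finset.prod_congr rfl fun i _ => hX i, prod_monomial, Finset.prod_const_one]
      have hsum : ∑ i : Fin n, Finsupp.single i (q * e i) = q • e := by
        have h5 := sum_single_eq (q • e)
        rw [← h5]
        refine Finset.sum_congr rfl fun i _ => by simp [Finsupp.smul_apply]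
      rw [hsum, MvPowerSeries.coeff_monomial]
    rw [hmap, MvPowerSeries.coeff_map, mul_ite, mul_one, mul_zero]
  have key : ρ (lhsC f ψ d) = ρ (rhsC ψ (fun i => psMvComp g (MvPowerSeries.X i)) d) := by
    rw [hL, hR, frob_coeff q hcard ψb h0b d]
  rw [← hker]
  rw [map_sub, key, sub_self]

end Frob


section Constr
variable {O : Type*} [CommRing O] {n : ℕ}

open scoped Classical in
/-- division helper -/
noncomputable def divq (x y : O) : O := if h : y ∣ x then h.choose else 0

lemma divq_spec (x y : O) (h : y ∣ x) : y * divq x y = x := by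
  rw [divq]
  rw [dif_pos h]
  exact h.choose_spec.symm

/-- the linear part coefficients -/
noncomputable def ell (a : Fin n → O) : (Fin n →₀ ℕ) → O := fun d =>
  ∑ i, if d = Finsupp.single i 1 then a i else 0

/-- one coefficient layer of the inductive construction -/
noncomputable def delta (π : O) (f g : PowerSeries O) (a : Fin n → O) (m : ℕ)
    (ψ : MvPowerSeries (Fin n) O) : MvPowerSeries (Fin n) O := fun d =>
  if degr d = m then
    (if m = 0 then 0 else if m = 1 then ell a d
     else divq (rhsC ψ (fun i => psMvComp g (MvPowerSeries.X i)) d - lhsC f ψ d) (π - π ^ m))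
  else 0

/-- partial solutions: `Psi m` collects all coefficients in degrees `< m` -/
noncomputable def Psi (π : O) (f g : PowerSeries O) (a : Fin n → O) :
    ℕ → MvPowerSeries (Fin n) O
  | 0 => 0
  | m + 1 => Psi π f g a m + delta π f g a m (Psi π f g a m)

/-- the solution -/
noncomputable def phi (π : O) (f g : PowerSeries O) (a : Fin n → O) :
    MvPowerSeries (Fin n) O :=
  fun d => Psi π f g a (degr d + 1) d

variable (π : O) (f g : PowerSeries O) (a : Fin n → O)

lemma coeff_delta (m : ℕ) (ψ : MvPowerSeries (Fin n) O) (d : Fin n →₀ ℕ) :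
    MvPowerSeries.coeff d (delta π f g a m ψ) =
    if degr d = m then
      (if m = 0 then 0 else if m = 1 then ell a d
       else divq (rhsC ψ (fun i => psMvComp g (MvPowerSeries.X i)) d - lhsC f ψ d)
        (π - π ^ m))
    else 0 := rfl

lemma coeff_Psi_zero (m : ℕ) (e : Fin n →₀ ℕ) (he : m ≤ degr e) :
    MvPowerSeries.coeff e (Psi π f g a m) = 0 := by
  induction m with
  | zero => rfl
  | succ m ih =>
    show MvPowerSeries.coeff e (Psi π f g a m + delta π f g a m (Psi π f g a m)) = 0
    rw [map_add, ih (by omega), coeff_delta, if_neg (by omega), add_zero]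

lemma coeff_Psi_stable (m k : ℕ) (hmk : m ≤ k) (e : Fin n →₀ ℕ) (he : degr e < m) :
    MvPowerSeries.coeff e (Psi π f g a k) = MvPowerSeries.coeff e (Psi π f g a m) := by
  induction k, hmk using Nat.le_induction with
  | base => rfl
  | succ k hmk ih =>
    show MvPowerSeries.coeff e (Psi π f g a k + delta π f g a k (Psi π f g a k)) = _
    rw [map_add, ih, coeff_delta, if_neg (by omega), add_zero]

lemma coeff_phi (d : Fin n →₀ ℕ) :
    MvPowerSeries.coeff d (phi π f g a) =
      MvPowerSeries.coeff d (Psi π f g a (degr d + 1)) := rfl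

lemma coeff_phi_eq_Psi (m : ℕ) (e : Fin n →₀ ℕ) (he : degr e < m) :
    MvPowerSeries.coeff e (phi π f g a) = MvPowerSeries.coeff e (Psi π f g a m) := by
  rw [coeff_phi]
  exact (coeff_Psi_stable π f g a (degr e + 1) m (by omega) e (by omega)).symm

lemma Psi_one_eq_zero : Psi π f g a 1 = 0 := by
  ext e
  show MvPowerSeries.coeff e _ = MvPowerSeries.coeff e 0
  rw [map_zero]
  rcases Nat.eq_zero_or_pos (degr e) with he | he
  · show MvPowerSeries.coeff e (Psi π f g a 0 + delta π f g a 0 (Psi π f g a 0)) = 0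
    rw [map_add, coeff_delta, if_pos he, if_pos rfl]
    show MvPowerSeries.coeff e 0 + 0 = 0
    rw [map_zero, add_zero]
  · exact coeff_Psi_zero π f g a 1 e he

lemma constantCoeff_Psi (m : ℕ) : constantCoeff (Psi π f g a m) = 0 := by
  rw [← MvPowerSeries.coeff_zero_eq_constantCoeff]
  rcases Nat.eq_zero_or_pos m with rfl | hm
  · rfl
  · rw [coeff_Psi_stable π f g a 1 m hm 0 (by rw [degr_zero]; omega), Psi_one_eq_zero,
      map_zero]

lemma constantCoeff_phi : constantCoeff (phi π f g a) = 0 := by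
  rw [← MvPowerSeries.coeff_zero_eq_constantCoeff,
    coeff_phi_eq_Psi π f g a 1 0 (by rw [degr_zero]; omega), Psi_one_eq_zero, map_zero]

lemma coeff_phi_single (i : Fin n) :
    MvPowerSeries.coeff (Finsupp.single i 1) (phi π f g a) = a i := by
  classical
  have hd : degr (Finsupp.single i 1) = 1 := degr_single i 1
  rw [coeff_phi_eq_Psi π f g a 2 _ (by omega)]
  show MvPowerSeries.coeff _ (Psi π f g a 1 + delta π f g a 1 (Psi π f g a 1)) = a i
  rw [map_add, Psi_one_eq_zero, map_zero, zero_add, coeff_delta, if_pos hd, if_neg one_ne_zero,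
    if_pos rfl, ell]
  rw [Finset.sum_eq_single_of_mem i (Finset.mem_univ i) ?ne, if_pos rfl]
  intro j _ hj
  rw [if_neg]
  intro hcon
  rw [Finsupp.single_eq_single_iff] at hcon
  rcases hcon with ⟨h1, -⟩ | ⟨h1, -⟩
  · exact hj h1.symm
  · exact one_ne_zero h1

end Constr



section MainEq
variable {O : Type*} [CommRing O] [IsDomain O] [IsDiscreteValuationRing O] {n : ℕ}

lemma pi_sub_pow_factor (π : O) (hπ : Irreducible π) (m : ℕ) (hm : 2 ≤ m) :
    ∃ u : O, IsUnit u ∧ π - π ^ m = π * u := by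
  refine ⟨1 - π ^ (m - 1), ?_, ?_⟩
  · apply IsLocalRing.isUnit_one_sub_self_of_mem_nonunits
    rw [mem_nonunits_iff]
    intro hu
    exact hπ.not_isUnit ((isUnit_pow_iff (by omega : m - 1 ≠ 0)).mp hu)
  · rw [mul_sub, mul_one]
    congr 1
    rw [← pow_succ']
    congr 1
    omega

lemma pi_sub_pow_ne (π : O) (hπ : Irreducible π) (m : ℕ) (hm : 2 ≤ m) : π - π ^ m ≠ 0 := by
  obtain ⟨u, hu, heq⟩ := pi_sub_pow_factor π hπ m hm
  rw [heq]
  exact mul_ne_zero hπ.ne_zero hu.ne_zero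

lemma pi_sub_pow_dvd (π : O) (hπ : Irreducible π) (m : ℕ) (hm : 2 ≤ m) (x : O)
    (hx : x ∈ Ideal.span {π}) : (π - π ^ m) ∣ x := by
  obtain ⟨u, hu, heq⟩ := pi_sub_pow_factor π hπ m hm
  obtain ⟨t, rfl⟩ := Ideal.mem_span_singleton.mp hx
  rw [heq]
  exact mul_dvd_mul dvd_rfl hu.dvd

variable (π : O) (f g : PowerSeries O) (a : Fin n → O)

lemma phi_equation (hπ : Irreducible π)
    (hf0 : PowerSeries.coeff 0 f = 0) (hf1 : PowerSeries.coeff 1 f = π)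
    (hg0 : PowerSeries.coeff 0 g = 0) (hg1 : PowerSeries.coeff 1 g = π)
    (hmod : ∀ ψ : MvPowerSeries (Fin n) O, constantCoeff ψ = 0 → ∀ d,
      lhsC f ψ d - rhsC ψ (fun i => psMvComp g (MvPowerSeries.X i)) d ∈ Ideal.span {π})
    (d : Fin n →₀ ℕ) :
    lhsC f (phi π f g a) d =
      rhsC (phi π f g a) (fun i => psMvComp g (MvPowerSeries.X i)) d := by
  classical
  rcases Nat.eq_zero_or_pos (degr d) with hm0 | hm1
  · -- degree 0
    have hd0 : d = 0 := (degr_eq_zero_iff d).mp hm0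
    subst hd0
    rw [lhsC, rhsC]
    have hL : ∀ k ∈ Finset.range (degr (0 : Fin n →₀ ℕ) + 1),
        PowerSeries.coeff k f * MvPowerSeries.coeff 0 (phi π f g a ^ k) = 0 := by
      intro k hk
      rw [degr_zero, Finset.mem_range] at hk
      interval_cases k
      rw [hf0, zero_mul]
    rw [Finset.sum_eq_zero hL]
    symm
    apply Finset.sum_eq_zero
    intro e he
    have he0 : e = 0 := by
      rw [Finset.mem_Iic] at he
      ext i
      have h1 := (le_constM_iff e (degr (0 : Fin n →₀ ℕ))).mp he i
      rw [degr_zero] at h1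
      simp only [Finsupp.coe_zero, Pi.zero_apply]
      omega
    subst he0
    rw [MvPowerSeries.coeff_zero_eq_constantCoeff, constantCoeff_phi, zero_mul]
  · -- degree ≥ 1
    have h0Φ := constantCoeff_phi π f g a
    have h0ψ := constantCoeff_Psi π f g a (degr d)
    have hagree : ∀ e : Fin n →₀ ℕ, degr e < degr d →
        MvPowerSeries.coeff e (phi π f g a) =
          MvPowerSeries.coeff e (Psi π f g a (degr d)) :=
      fun e he => coeff_phi_eq_Psi π f g a (degr d) e he
    have hψd : MvPowerSeries.coeff d (Psi π f g a (degr d)) = 0 :=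
      coeff_Psi_zero π f g a (degr d) d le_rfl
    have hLsub := lhsC_sub f π hf1 (phi π f g a) (Psi π f g a (degr d)) h0Φ h0ψ d hm1 hagree
    have hRsub := rhsC_sub g π hg0 hg1 (phi π f g a) (Psi π f g a (degr d)) d hm1 hagree
    rw [hψd, sub_zero] at hLsub hRsub
    have hcd : MvPowerSeries.coeff d (phi π f g a) =
        MvPowerSeries.coeff d (delta π f g a (degr d) (Psi π f g a (degr d))) := by
      rw [coeff_phi]
      show MvPowerSeries.coeff d (Psi π f g a (degr d) +
        delta π f g a (degr d) (Psi π f g a (degr d))) = _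
      rw [map_add, hψd, zero_add]
    rcases Nat.lt_or_ge (degr d) 2 with h2 | h2
    · -- degree exactly 1
      have hm1' : degr d = 1 := by omega
      have hψzero : Psi π f g a (degr d) = 0 := by rw [hm1']; exact Psi_one_eq_zero π f g a
      have hL0 : lhsC f (Psi π f g a (degr d)) d = 0 := by
        rw [hψzero, lhsC]
        apply Finset.sum_eq_zero
        intro k _
        rcases Nat.eq_zero_or_pos k with rfl | hk
        · rw [pow_zero, MvPowerSeries.coeff_one, if_neg, mul_zero]
          intro hcon
          rw [hcon, degr_zero] at hm1'
          exact one_ne_zero hm1'.symm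
        · rw [zero_pow (by omega), map_zero, mul_zero]
      have hR0 : rhsC (Psi π f g a (degr d)) (fun i => psMvComp g (MvPowerSeries.X i)) d
          = 0 := by
        rw [hψzero, rhsC]
        apply Finset.sum_eq_zero
        intro e _
        rw [map_zero, zero_mul]
      rw [hL0, sub_zero] at hLsub
      rw [hR0, sub_zero] at hRsub
      rw [hm1', pow_one] at hRsub
      rw [hLsub, hRsub]
    · -- degree ≥ 2
      have hdvd : (π - π ^ degr d) ∣
          (rhsC (Psi π f g a (degr d)) (fun i => psMvComp g (MvPowerSeries.X i)) d -
            lhsC f (Psi π f g a (degr d)) d) := by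
        apply pi_sub_pow_dvd π hπ (degr d) h2
        have hmem := hmod (Psi π f g a (degr d)) h0ψ d
        have h3 := neg_mem hmem
        rwa [neg_sub] at h3
      have hspec := divq_spec _ _ hdvd
      have hcd2 : MvPowerSeries.coeff d (phi π f g a) =
          divq (rhsC (Psi π f g a (degr d)) (fun i => psMvComp g (MvPowerSeries.X i)) d -
            lhsC f (Psi π f g a (degr d)) d) (π - π ^ degr d) := by
        rw [hcd, coeff_delta, if_pos rfl, if_neg (by omega), if_neg (by omega)]
      rw [← hcd2] at hspec
      linear_combination hLsub - hRsub + hspec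

lemma solution_unique (hπ : Irreducible π)
    (hf1 : PowerSeries.coeff 1 f = π)
    (hg0 : PowerSeries.coeff 0 g = 0) (hg1 : PowerSeries.coeff 1 g = π)
    (φ χ : MvPowerSeries (Fin n) O)
    (h0φ : constantCoeff φ = 0) (h0χ : constantCoeff χ = 0)
    (hlinφ : ∀ i, MvPowerSeries.coeff (Finsupp.single i 1) φ = a i)
    (hlinχ : ∀ i, MvPowerSeries.coeff (Finsupp.single i 1) χ = a i)
    (heqφ : ∀ d, lhsC f φ d = rhsC φ (fun i => psMvComp g (MvPowerSeries.X i)) d)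
    (heqχ : ∀ d, lhsC f χ d = rhsC χ (fun i => psMvComp g (MvPowerSeries.X i)) d) :
    φ = χ := by
  have H : ∀ m : ℕ, ∀ e : Fin n →₀ ℕ, degr e = m →
      MvPowerSeries.coeff e φ = MvPowerSeries.coeff e χ := by
    intro m
    induction m using Nat.strong_induction_on with
    | _ m ih =>
      intro e he
      rcases Nat.lt_or_ge m 2 with h2 | h2
      · interval_cases m
        · have he0 : e = 0 := (degr_eq_zero_iff e).mp he
          subst he0
          rw [MvPowerSeries.coeff_zero_eq_constantCoeff, h0φ, h0χ]
        · obtain ⟨i, rfl⟩ := degr_eq_one e he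
          rw [hlinφ i, hlinχ i]
      · have hagree : ∀ u : Fin n →₀ ℕ, degr u < degr e →
            MvPowerSeries.coeff u φ = MvPowerSeries.coeff u χ := by
          intro u hu
          exact ih (degr u) (by omega) u rfl
        have hL := lhsC_sub f π hf1 φ χ h0φ h0χ e (by omega) hagree
        have hR := rhsC_sub g π hg0 hg1 φ χ e (by omega) hagree
        have hcomb : (π - π ^ degr e) *
            (MvPowerSeries.coeff e φ - MvPowerSeries.coeff e χ) = 0 := by
          linear_combination hR - hL + heqφ e - heqχ e
        rcases mul_eq_zero.mp hcomb with h | h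
        · exact absurd h (pi_sub_pow_ne π hπ (degr e) (by omega))
        · exact sub_eq_zero.mp h
  ext e
  exact H (degr e) e rfl

end MainEq

end LTaux

/-- **The fundamental Lubin–Tate lemma.** Let `O` be a complete discrete valuation ring
with prime `π` and finite residue field of order `q`, and let `f, g ∈ O⟦T⟧` be
Lubin–Tate series for `π` (linear term `πT`, congruent to `T^q` mod `π`). Then for any
linear form `ℓ = a₁X₁ + ⋯ + a_nX_n` with `aᵢ ∈ O` there is a unique
`φ ∈ O⟦X₁,…,X_n⟧` with `φ ≡ ℓ` modulo terms of total degree `≥ 2` and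
`f(φ(X₁,…,X_n)) = φ(g(X₁),…,g(X_n))`. -/
theorem lubin_tate_fundamental_lemma (O : Type*) [CommRing O] [IsDomain O]
    [IsDiscreteValuationRing O] [IsAdicComplete (IsLocalRing.maximalIdeal O) O]
    [Finite (IsLocalRing.ResidueField O)]
    (π : O) (hπ : Irreducible π)
    (q : ℕ) (hq : Nat.card (IsLocalRing.ResidueField O) = q)
    (f g : PowerSeries O)
    (hf0 : PowerSeries.coeff (R := O) 0 f = 0) (hf1 : PowerSeries.coeff (R := O) 1 f = π)
    (hfq : ∀ k : ℕ,
      PowerSeries.coeff (R := O) k f - PowerSeries.coeff (R := O) k (PowerSeries.X ^ q) ∈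
        Ideal.span {π})
    (hg0 : PowerSeries.coeff (R := O) 0 g = 0) (hg1 : PowerSeries.coeff (R := O) 1 g = π)
    (hgq : ∀ k : ℕ,
      PowerSeries.coeff (R := O) k g - PowerSeries.coeff (R := O) k (PowerSeries.X ^ q) ∈
        Ideal.span {π})
    (n : ℕ) (a : Fin n → O) :
    ∃! φ : MvPowerSeries (Fin n) O,
      (MvPowerSeries.coeff (R := O) 0 φ = 0 ∧
        ∀ i : Fin n, MvPowerSeries.coeff (R := O) (Finsupp.single i 1) φ = a i) ∧
      psMvComp f φ = mvComp φ (fun i => psMvComp g (MvPowerSeries.X i)) := by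
  classical
  have hIm : IsLocalRing.maximalIdeal O = Ideal.span {π} :=
    (IsDiscreteValuationRing.irreducible_iff_uniformizer π).mp hπ
  letI : Fintype (IsLocalRing.ResidueField O) := Fintype.ofFinite _
  have hcard : Fintype.card (IsLocalRing.ResidueField O) = q := by
    rw [← Nat.card_eq_fintype_card, hq]
  have hker : ∀ x : O, IsLocalRing.residue O x = 0 ↔ x ∈ Ideal.span {π} := by
    intro x
    rw [← hIm]
    exact Ideal.Quotient.eq_zero_iff_mem
  have hmod : ∀ ψ : MvPowerSeries (Fin n) O,
      MvPowerSeries.constantCoeff ψ = 0 → ∀ d,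
      LTaux.lhsC f ψ d -
        LTaux.rhsC ψ (fun i => psMvComp g (MvPowerSeries.X i)) d ∈ Ideal.span {π} :=
    fun ψ h0 d =>
      LTaux.mod_pi_key π (IsLocalRing.residue O) hker q hcard f g hfq hgq ψ h0 d
  refine ⟨LTaux.phi π f g a, ⟨⟨?_, ?_⟩, ?_⟩, ?_⟩
  · rw [MvPowerSeries.coeff_zero_eq_constantCoeff]
    exact LTaux.constantCoeff_phi π f g a
  · exact fun i => LTaux.coeff_phi_single π f g a i
  · ext d
    rw [LTaux.coeff_psMvComp, LTaux.coeff_mvComp]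
    exact LTaux.phi_equation π f g a hπ hf0 hf1 hg0 hg1 hmod d
  · rintro φ' ⟨⟨h0', hlin'⟩, heq'⟩
    apply LTaux.solution_unique π f g a hπ hf1 hg0 hg1
    · rwa [← MvPowerSeries.coeff_zero_eq_constantCoeff]
    · rw [← MvPowerSeries.coeff_zero_eq_constantCoeff]
      exact LTaux.constantCoeff_phi π f g a
    · exact hlin'
    · exact fun i => LTaux.coeff_phi_single π f g a i
    · intro d
      rw [← LTaux.coeff_psMvComp, ← LTaux.coeff_mvComp, heq']
    · intro d
      rw [← LTaux.coeff_psMvComp, ← LTaux.coeff_mvComp]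
      congr 1
      ext e
      rw [LTaux.coeff_psMvComp, LTaux.coeff_mvComp]
      exact LTaux.phi_equation π f g a hπ hf0 hf1 hg0 hg1 hmod e
end

section
/- Let V be a vector space over a field k and let θ : V → V be a linear endomorphism that is finite potent, i.e., θ^n(V) is finite-dimensional for some n ≥ 1. Then there exists a finite-dimensional subspace W ⊆ V with θ(W) ⊆ W and θ^n(V) ⊆ W for some n; and for any two such subspaces W₁, W₂, the trace of θ restricted to W₁ equals the trace of θ restricted to W₂. Hence the trace Tr_V(θ) of a finite potent endomorphism is well-defined. -/
open LinearMap

section Aux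

variable {k : Type*} [Field k]

/-- Trace of an endomorphism of a product is the sum of the traces of the diagonal blocks. -/
private lemma trace_eq_block_sum (M N : Type*) [AddCommGroup M] [Module k M]
    [AddCommGroup N] [Module k N] [FiniteDimensional k M] [FiniteDimensional k N]
    (h : M × N →ₗ[k] M × N) :
    LinearMap.trace k (M × N) h =
      LinearMap.trace k M (fst k M N ∘ₗ h ∘ₗ inl k M N) +
      LinearMap.trace k N (snd k M N ∘ₗ h ∘ₗ inr k M N) := by
  have hdecomp : h = inl k M N ∘ₗ (fst k M N ∘ₗ h) + inr k M N ∘ₗ (snd k M N ∘ₗ h) := by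
    ext x <;> simp
  conv_lhs => rw [hdecomp, map_add,
    trace_comp_comm' (fst k M N ∘ₗ h) (inl k M N),
    trace_comp_comm' (snd k M N ∘ₗ h) (inr k M N)]
  rfl

/-- If `p` is an `f`-invariant subspace of a finite-dimensional space `W` containing the
image of `f ^ n`, then the trace of `f` equals the trace of its restriction to `p`. -/
private lemma trace_eq_trace_restrict_of_pow_mem (W : Type*) [AddCommGroup W] [Module k W]
    [FiniteDimensional k W] (f : W →ₗ[k] W) (p : Submodule k W)
    (hp : ∀ x ∈ p, f x ∈ p) (n : ℕ) (hn : ∀ x : W, (f ^ n) x ∈ p) :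
    LinearMap.trace k W f = LinearMap.trace k p (f.restrict hp) := by
  obtain ⟨q, hq⟩ := Submodule.exists_isCompl p
  set e := Submodule.prodEquivOfIsCompl p q hq with he
  set g := e.symm.conj f with hg
  have hgapp : ∀ y : p × q, g y = e.symm (f (e y)) := fun y => by
    simp [hg, LinearEquiv.conj_apply]
  have hsymm : ∀ (x : W) (hx : x ∈ p), e.symm x = (⟨x, hx⟩, 0) := fun x hx =>
    Submodule.prodEquivOfIsCompl_symm_apply_left p q hq (⟨x, hx⟩ : p)
  have heapp : ∀ (x : p), e (x, 0) = (x : W) := fun x => by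
    simp [he, Submodule.coe_prodEquivOfIsCompl']
  set A := fst k p q ∘ₗ g ∘ₗ inl k p q with hA
  set D := snd k p q ∘ₗ g ∘ₗ inr k p q with hD
  -- the lower-left block vanishes
  have hC : snd k p q ∘ₗ g ∘ₗ inl k p q = 0 := by
    ext x
    simp only [coe_comp, Function.comp_apply, inl_apply, snd_apply, zero_comp, LinearMap.zero_apply]
    rw [hgapp, heapp, hsymm (f x) (hp x x.2)]
  -- the top-left block is the restriction
  have hAres : A = f.restrict hp := by
    ext x
    simp only [hA, coe_comp, Function.comp_apply, inl_apply, fst_apply]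
    rw [hgapp, heapp, hsymm (f x) (hp x x.2)]
    rfl
  -- powers of g
  have hgpow : ∀ m, ∀ y : p × q, (g ^ m) y = e.symm ((f ^ m) (e y)) := by
    intro m
    induction m with
    | zero => intro y; simp
    | succ m ih =>
      intro y
      rw [pow_succ', pow_succ', Module.End.mul_apply, Module.End.mul_apply, hgapp, ih, LinearEquiv.apply_symm_apply]
  -- snd ∘ g = D ∘ snd, hence snd ∘ g^m = D^m ∘ snd
  have hid : inl k p q ∘ₗ fst k p q + inr k p q ∘ₗ snd k p q = LinearMap.id := by
    ext x <;> simp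
  have hsndg : snd k p q ∘ₗ g = D ∘ₗ snd k p q := by
    refine LinearMap.ext fun y => ?_
    have h0 : (g (y.1, 0)).2 = 0 := by
      have := LinearMap.congr_fun hC y.1
      simpa using this
    have hy : y = (y.1, (0 : q)) + ((0 : p), y.2) := by simp
    calc (snd k p q ∘ₗ g) y = (g y).2 := rfl
      _ = (g ((y.1, (0 : q)) + ((0 : p), y.2))).2 := by rw [← hy]
      _ = (g (y.1, (0 : q))).2 + (g ((0 : p), y.2)).2 := by rw [map_add]; rfl
      _ = (g ((0 : p), y.2)).2 := by rw [h0, zero_add]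
      _ = (D ∘ₗ snd k p q) y := rfl
  have hsndpow : ∀ m, snd k p q ∘ₗ (g ^ m) = (D ^ m) ∘ₗ snd k p q := by
    intro m
    induction m with
    | zero => rfl
    | succ m ih =>
      rw [pow_succ', pow_succ']
      calc snd k p q ∘ₗ (g * g ^ m) = (snd k p q ∘ₗ g) ∘ₗ (g ^ m) := rfl
        _ = D ∘ₗ snd k p q ∘ₗ (g ^ m) := by rw [hsndg]; rfl
        _ = D ∘ₗ (D ^ m) ∘ₗ snd k p q := by rw [ih]
        _ = (D * D ^ m) ∘ₗ snd k p q := rfl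
  -- D is nilpotent
  have hDnil : IsNilpotent D := by
    refine ⟨n, ?_⟩
    ext x
    have h1 : (D ^ n) (snd k p q (inr k p q x)) = snd k p q ((g ^ n) (inr k p q x)) :=
      (LinearMap.congr_fun (hsndpow n) (inr k p q x)).symm
    simp only [snd_apply, inr_apply] at h1
    rw [hgpow] at h1
    have h2 : (f ^ n) (e ((0 : p), x)) ∈ p := hn _
    rw [hsymm _ h2] at h1
    simpa using h1
  have htrD : LinearMap.trace k q D = 0 := by
    have := LinearMap.isNilpotent_trace_of_isNilpotent hDnil
    exact this.eq_zero
  calc LinearMap.trace k W f = LinearMap.trace k (p × q) g := (trace_conj' f e.symm).symm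
    _ = LinearMap.trace k p A + LinearMap.trace k q D := by
        rw [trace_eq_block_sum p q g]
    _ = LinearMap.trace k p (f.restrict hp) := by rw [hAres, htrD, add_zero]

/-- Coercion of powers of a restricted map. -/
private lemma restrict_pow_coe {V : Type*} [AddCommGroup V] [Module k V] (θ : V →ₗ[k] V)
    {W : Submodule k V} (hW : ∀ x ∈ W, θ x ∈ W) (m : ℕ) (x : W) :
    (((θ.restrict hW) ^ m) x : V) = (θ ^ m) (x : V) := by
  induction m with
  | zero => rfl
  | succ m ih =>
    rw [pow_succ', pow_succ', Module.End.mul_apply, Module.End.mul_apply, LinearMap.restrict_coe_apply, ih]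

end Aux

/-- **Tate's finite potent trace is well defined.** If `θ : V → V` is a finite potent
endomorphism (i.e. `θ^n(V)` is finite-dimensional for some `n ≥ 1`), then there exists
a finite-dimensional subspace `W` with `θ(W) ⊆ W` and `θ^n(V) ⊆ W` for some `n`; and
for any two such subspaces the traces of the restrictions of `θ` agree. -/
theorem finite_potent_trace_well_defined (k V : Type*) [Field k]
    [AddCommGroup V] [Module k V] (θ : V →ₗ[k] V)
    (hfp : ∃ n : ℕ, 1 ≤ n ∧ FiniteDimensional k (LinearMap.range (θ ^ n))) :
    (∃ W : Submodule k V, FiniteDimensional k W ∧ (∀ x ∈ W, θ x ∈ W) ∧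
        ∃ n : ℕ, LinearMap.range (θ ^ n) ≤ W) ∧
      ∀ (W₁ W₂ : Submodule k V),
        FiniteDimensional k W₁ → FiniteDimensional k W₂ →
        ∀ (h₁ : ∀ x ∈ W₁, θ x ∈ W₁) (h₂ : ∀ x ∈ W₂, θ x ∈ W₂),
        (∃ n : ℕ, LinearMap.range (θ ^ n) ≤ W₁) →
        (∃ n : ℕ, LinearMap.range (θ ^ n) ≤ W₂) →
        LinearMap.trace k W₁ (θ.restrict h₁) = LinearMap.trace k W₂ (θ.restrict h₂) := by
  constructor
  · -- existence
    obtain ⟨n, -, hfd⟩ := hfp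
    refine ⟨LinearMap.range (θ ^ n), hfd, ?_, n, le_rfl⟩
    rintro x ⟨y, rfl⟩
    exact ⟨θ y, by rw [← Module.End.mul_apply, pow_mul_comm', Module.End.mul_apply]⟩
  · -- uniqueness
    intro W₁ W₂ hfd₁ hfd₂ h₁ h₂ ⟨n₁, hn₁⟩ ⟨n₂, hn₂⟩
    set W : Submodule k V := W₁ ⊔ W₂ with hWdef
    haveI : FiniteDimensional k W := Submodule.finiteDimensional_sup W₁ W₂
    have hW : ∀ x ∈ W, θ x ∈ W := by
      have hmap : Submodule.map θ W ≤ W := by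
        rw [hWdef, Submodule.map_sup]
        exact sup_le_sup (Submodule.map_le_iff_le_comap.mpr fun x hx => h₁ x hx)
          (Submodule.map_le_iff_le_comap.mpr fun x hx => h₂ x hx)
      exact fun x hx => hmap ⟨x, hx, rfl⟩
    set f := θ.restrict hW with hf
    -- a generic step: trace of f equals trace of θ on an admissible Wᵢ ≤ W
    have step : ∀ (W' : Submodule k V) (hle : W' ≤ W) (h' : ∀ x ∈ W', θ x ∈ W')
        (n : ℕ) (hn : LinearMap.range (θ ^ n) ≤ W'),
        LinearMap.trace k W f = LinearMap.trace k W' (θ.restrict h') := by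
      intro W' hle h' n hn
      set p : Submodule k W := Submodule.comap W.subtype W' with hpdef
      have hp : ∀ x ∈ p, f x ∈ p := by
        intro x hx
        simp only [hpdef, Submodule.mem_comap, Submodule.coe_subtype] at hx ⊢
        rw [LinearMap.restrict_coe_apply]
        exact h' _ hx
      have hnp : ∀ x : W, (f ^ n) x ∈ p := by
        intro x
        simp only [hpdef, Submodule.mem_comap, Submodule.coe_subtype]
        rw [restrict_pow_coe]
        exact hn ⟨(x : V), rfl⟩
      rw [trace_eq_trace_restrict_of_pow_mem W f p hp n hnp]
      -- transport along the equivalence p ≃ W'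
      set e := Submodule.comapSubtypeEquivOfLe hle with he
      have hconj : e.conj (f.restrict hp) = θ.restrict h' := by
        ext x
        have hx1 : ((e.symm x : W) : V) = (x : V) := by
          rw [← Submodule.comapSubtypeEquivOfLe_apply_coe hle, LinearEquiv.apply_symm_apply]
        simp only [LinearEquiv.conj_apply, LinearMap.coe_comp, Function.comp_apply,
          LinearEquiv.coe_coe]
        rw [Submodule.comapSubtypeEquivOfLe_apply_coe, LinearMap.restrict_coe_apply,
          LinearMap.restrict_coe_apply, LinearMap.restrict_coe_apply, hx1]
      rw [← hconj, trace_conj']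
    rw [← step W₁ le_sup_left h₁ n₁ hn₁, ← step W₂ le_sup_right h₂ n₂ hn₂]
end

section
/- Let K be a field complete with respect to a nonarchimedean absolute value, and let q ∈ K^× with |q| < 1. Then the series b₂(q) = 5 Σ_{n≥1} n³qⁿ/(1−qⁿ) and b₃(q) = Σ_{n≥1} ((7n⁵+5n³)/12) qⁿ/(1−qⁿ) converge in K, and the discriminant Δ = q ∏_{n≥1} (1−qⁿ)^{24} is a nonzero element of K; consequently the Weierstrass equation Y²Z + XYZ = X³ − b₂XZ² − b₃Z³ defines a smooth (elliptic) curve over K. -/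
open Filter Topology IsUltrametricDist

section Aux

variable {K : Type*} [NontriviallyNormedField K] [IsUltrametricDist K]

lemma tate_aux_norm_one_sub {x : K} (hx : ‖x‖ < 1) : ‖1 - x‖ = 1 := by
  rw [sub_eq_add_neg, norm_add_eq_max_of_norm_ne_norm
    (by rw [norm_one, norm_neg]; exact hx.ne')]
  rw [norm_one, norm_neg]
  exact max_eq_left hx.le

lemma tate_aux_term_norm {q c : K} (hq : ‖q‖ < 1) (hc : ‖c‖ ≤ 1) (n : ℕ) :
    ‖c * q ^ (n + 1) / (1 - q ^ (n + 1))‖ ≤ ‖q‖ ^ (n + 1) := by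
  have h1 : ‖q ^ (n + 1)‖ < 1 := by
    rw [norm_pow]
    exact pow_lt_one₀ (norm_nonneg q) hq (by omega)
  rw [norm_div, tate_aux_norm_one_sub h1, div_one, norm_mul, norm_pow]
  exact mul_le_of_le_one_left (by positivity) hc

lemma tate_aux_summable [CompleteSpace K] {q : K} (hq : ‖q‖ < 1) {f : ℕ → K}
    (hf : ∀ n, ‖f n‖ ≤ ‖q‖ ^ (n + 1)) : Summable f := by
  apply NonarchimedeanAddGroup.summable_of_tendsto_cofinite_zero
  rw [Nat.cofinite_eq_atTop]
  refine squeeze_zero_norm hf ?_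
  exact (tendsto_pow_atTop_nhds_zero_of_lt_one (norm_nonneg q) hq).comp
    (tendsto_add_atTop_nat 1)

lemma tate_aux_prod_sub_one (f : ℕ → K) {ε : ℝ} (hε : 0 ≤ ε) (hε1 : ε ≤ 1)
    (s : Finset ℕ) (hf : ∀ i ∈ s, ‖f i‖ ≤ ε) :
    ‖(∏ i ∈ s, (1 + f i)) - 1‖ ≤ ε := by
  classical
  induction s using Finset.induction_on with
  | empty => simpa using hε
  | @insert a s ha ih =>
    rw [Finset.prod_insert ha]
    have h1 : (1 + f a) * (∏ i ∈ s, (1 + f i)) - 1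
        = (1 + f a) * ((∏ i ∈ s, (1 + f i)) - 1) + f a := by ring
    rw [h1]
    refine le_trans (norm_add_le_max _ _)
      (max_le ?_ (hf a (Finset.mem_insert_self a s)))
    have h2 : ‖1 + f a‖ ≤ 1 := by
      refine le_trans (norm_add_le_max _ _) (max_le norm_one.le ?_)
      exact le_trans (hf a (Finset.mem_insert_self a s)) hε1
    have h3 : ‖(∏ i ∈ s, (1 + f i)) - 1‖ ≤ ε :=
      ih fun i hi => hf i (Finset.mem_insert_of_mem hi)
    calc ‖(1 + f a) * ((∏ i ∈ s, (1 + f i)) - 1)‖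
        = ‖1 + f a‖ * ‖(∏ i ∈ s, (1 + f i)) - 1‖ := norm_mul _ _
      _ ≤ 1 * ε := mul_le_mul h2 h3 (norm_nonneg _) zero_le_one
      _ = ε := one_mul ε

set_option linter.unusedSectionVars false in
lemma tate_aux_mono {c x y : K} {r : ℝ} (hc : ‖c‖ ≤ 1) (hx : ‖x‖ ≤ r) (hy : ‖y‖ ≤ r) :
    ‖c * (x * y)‖ ≤ r ^ 2 := by
  have hr : 0 ≤ r := le_trans (norm_nonneg x) hx
  rw [norm_mul, norm_mul, sq]
  calc ‖c‖ * (‖x‖ * ‖y‖) ≤ 1 * (r * r) :=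
        mul_le_mul hc (mul_le_mul hx hy (norm_nonneg _) hr) (by positivity) zero_le_one
    _ = r * r := one_mul _

end Aux

/-- **Convergence of the Tate curve.** Let `K` be a field complete with respect to a
nonarchimedean absolute value, and `q ∈ K^×` with `|q| < 1`. Then the series
`b₂ = 5 Σ_{n≥1} n³qⁿ/(1−qⁿ)` and `b₃ = Σ_{n≥1} ((7n⁵+5n³)/12)·qⁿ/(1−qⁿ)` converge in
`K`, the product `∏_{n≥1}(1−qⁿ)` converges, the discriminant
`Δ = q·∏_{n≥1}(1−qⁿ)^{24}` is nonzero, and the Weierstrass equation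
`Y²Z + XYZ = X³ − b₂XZ² − b₃Z³` has nonvanishing discriminant, hence defines a smooth
(elliptic) curve over `K`. -/
theorem tate_curve_convergence (K : Type*) [NontriviallyNormedField K]
    [IsUltrametricDist K] [CompleteSpace K]
    (q : K) (hq0 : q ≠ 0) (hq : ‖q‖ < 1) :
    Summable (fun n : ℕ => ((n + 1 : ℕ) : K) ^ 3 * q ^ (n + 1) / (1 - q ^ (n + 1))) ∧
    Summable (fun n : ℕ =>
      (((7 * (n + 1) ^ 5 + 5 * (n + 1) ^ 3) / 12 : ℕ) : K) *
        q ^ (n + 1) / (1 - q ^ (n + 1))) ∧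
    Multipliable (fun n : ℕ => 1 - q ^ (n + 1)) ∧
    q * (∏' n : ℕ, (1 - q ^ (n + 1))) ^ 24 ≠ 0 ∧
    (WeierstrassCurve.mk (1 : K) 0 0
        (-(5 * ∑' n : ℕ, ((n + 1 : ℕ) : K) ^ 3 * q ^ (n + 1) / (1 - q ^ (n + 1))))
        (-(∑' n : ℕ, (((7 * (n + 1) ^ 5 + 5 * (n + 1) ^ 3) / 12 : ℕ) : K) *
            q ^ (n + 1) / (1 - q ^ (n + 1))))).Δ ≠ 0 := by
  have hq0' : 0 < ‖q‖ := norm_pos_iff.mpr hq0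
  have hnat : ∀ n : ℕ, ‖(n : K)‖ ≤ 1 := norm_natCast_le_one K
  -- norms of the terms of the two series
  have hterm1 : ∀ n : ℕ,
      ‖((n + 1 : ℕ) : K) ^ 3 * q ^ (n + 1) / (1 - q ^ (n + 1))‖ ≤ ‖q‖ ^ (n + 1) := by
    intro n
    refine tate_aux_term_norm hq ?_ n
    rw [norm_pow]
    exact pow_le_one₀ (norm_nonneg _) (hnat _)
  have hterm2 : ∀ n : ℕ,
      ‖(((7 * (n + 1) ^ 5 + 5 * (n + 1) ^ 3) / 12 : ℕ) : K) *
        q ^ (n + 1) / (1 - q ^ (n + 1))‖ ≤ ‖q‖ ^ (n + 1) := fun n =>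
    tate_aux_term_norm hq (hnat _) n
  have hsum1 : Summable
      (fun n : ℕ => ((n + 1 : ℕ) : K) ^ 3 * q ^ (n + 1) / (1 - q ^ (n + 1))) :=
    tate_aux_summable hq hterm1
  have hsum2 : Summable (fun n : ℕ =>
      (((7 * (n + 1) ^ 5 + 5 * (n + 1) ^ 3) / 12 : ℕ) : K) *
        q ^ (n + 1) / (1 - q ^ (n + 1))) :=
    tate_aux_summable hq hterm2
  -- multipliability of the product
  have hfac : ∀ i : ℕ, ‖(1 : K) - q ^ (i + 1)‖ = 1 := by
    intro i
    refine tate_aux_norm_one_sub ?_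
    rw [norm_pow]
    exact pow_lt_one₀ (norm_nonneg q) hq (by omega)
  have hPnorm : ∀ s : Finset ℕ, ‖∏ i ∈ s, ((1 : K) - q ^ (i + 1))‖ = 1 := by
    intro s
    rw [norm_prod]
    exact Finset.prod_eq_one fun i _ => hfac i
  have hcauchy : CauchySeq (fun s : Finset ℕ => ∏ i ∈ s, ((1 : K) - q ^ (i + 1))) := by
    rw [Metric.cauchySeq_iff]
    intro ε hε
    obtain ⟨M, hM⟩ := exists_pow_lt_of_lt_one (lt_min hε one_pos) hq
    set δ : ℝ := ‖q‖ ^ M with hδdef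
    have hδ0 : 0 ≤ δ := by positivity
    have hδ1 : δ ≤ 1 := le_of_lt (lt_of_lt_of_le hM (min_le_right _ _))
    have hδε : δ < ε := lt_of_lt_of_le hM (min_le_left _ _)
    refine ⟨Finset.range M, ?_⟩
    have key : ∀ s : Finset ℕ, Finset.range M ⊆ s →
        ‖(∏ i ∈ s, ((1 : K) - q ^ (i + 1))) -
          ∏ i ∈ Finset.range M, ((1 : K) - q ^ (i + 1))‖ ≤ δ := by
      intro s hs
      have hsplit : (∏ i ∈ s, ((1 : K) - q ^ (i + 1)))
          = (∏ i ∈ Finset.range M, ((1 : K) - q ^ (i + 1))) *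
            ∏ i ∈ s \ Finset.range M, ((1 : K) - q ^ (i + 1)) := by
        rw [mul_comm, Finset.prod_sdiff hs]
      rw [hsplit]
      have h1 : (∏ i ∈ Finset.range M, ((1 : K) - q ^ (i + 1))) *
            (∏ i ∈ s \ Finset.range M, ((1 : K) - q ^ (i + 1))) -
            ∏ i ∈ Finset.range M, ((1 : K) - q ^ (i + 1))
          = (∏ i ∈ Finset.range M, ((1 : K) - q ^ (i + 1))) *
            ((∏ i ∈ s \ Finset.range M, ((1 : K) - q ^ (i + 1))) - 1) := by ring
      rw [h1, norm_mul, hPnorm, one_mul]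
      have h2 : ∀ i ∈ s \ Finset.range M, ‖-(q ^ (i + 1))‖ ≤ δ := by
        intro i hi
        have hiM : M ≤ i := by
          have := (Finset.mem_sdiff.mp hi).2
          simpa [Finset.mem_range, not_lt] using this
        rw [norm_neg, norm_pow]
        exact pow_le_pow_of_le_one (norm_nonneg q) hq.le (by omega)
      have := tate_aux_prod_sub_one (fun i => -(q ^ (i + 1))) hδ0 hδ1
        (s \ Finset.range M) h2
      simpa [sub_eq_add_neg] using this
    intro s hs t ht
    rw [dist_eq_norm]
    have hst : (∏ i ∈ s, ((1 : K) - q ^ (i + 1))) - ∏ i ∈ t, ((1 : K) - q ^ (i + 1))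
        = ((∏ i ∈ s, ((1 : K) - q ^ (i + 1))) -
            ∏ i ∈ Finset.range M, ((1 : K) - q ^ (i + 1))) +
          -(((∏ i ∈ t, ((1 : K) - q ^ (i + 1))) -
            ∏ i ∈ Finset.range M, ((1 : K) - q ^ (i + 1)))) := by ring
    rw [hst]
    refine lt_of_le_of_lt (le_trans (norm_add_le_max _ _) (max_le (key s hs) ?_)) hδε
    rw [norm_neg]
    exact key t ht
  obtain ⟨L, hL⟩ := cauchySeq_tendsto_of_complete hcauchy
  have hmult : Multipliable (fun n : ℕ => (1 : K) - q ^ (n + 1)) := ⟨L, hL⟩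
  -- the infinite product has norm 1
  have hLnorm : ‖∏' n : ℕ, ((1 : K) - q ^ (n + 1))‖ = 1 := by
    have h1 : HasProd (fun n : ℕ => ‖(1 : K) - q ^ (n + 1)‖)
        ‖∏' n : ℕ, ((1 : K) - q ^ (n + 1))‖ := hmult.hasProd.norm
    rw [show (fun n : ℕ => ‖(1 : K) - q ^ (n + 1)‖) = fun _ => (1 : ℝ) from funext hfac]
      at h1
    exact h1.unique hasProd_one
  have hprod_ne : (∏' n : ℕ, ((1 : K) - q ^ (n + 1))) ≠ 0 := by
    intro h
    rw [h, norm_zero] at hLnorm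
    norm_num at hLnorm
  refine ⟨hsum1, hsum2, hmult, ?_, ?_⟩
  · exact mul_ne_zero hq0 (pow_ne_zero _ hprod_ne)
  -- the discriminant
  set s : K := ∑' n : ℕ, ((n + 1 : ℕ) : K) ^ 3 * q ^ (n + 1) / (1 - q ^ (n + 1)) with hs_def
  set t : K := ∑' n : ℕ, (((7 * (n + 1) ^ 5 + 5 * (n + 1) ^ 3) / 12 : ℕ) : K) *
      q ^ (n + 1) / (1 - q ^ (n + 1)) with ht_def
  have hs_le : ‖s‖ ≤ ‖q‖ := by
    refine norm_tsum_le_of_forall_le fun n => le_trans (hterm1 n) ?_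
    exact pow_le_of_le_one (norm_nonneg q) hq.le (by omega)
  have ht_le : ‖t‖ ≤ ‖q‖ := by
    refine norm_tsum_le_of_forall_le fun n => le_trans (hterm2 n) ?_
    exact pow_le_of_le_one (norm_nonneg q) hq.le (by omega)
  -- ‖t‖ = ‖q‖ exactly
  have ht_eq : ‖t‖ = ‖q‖ := by
    have hsplit := Summable.tsum_eq_zero_add hsum2
    have hfirst : (((7 * (0 + 1) ^ 5 + 5 * (0 + 1) ^ 3) / 12 : ℕ) : K) *
        q ^ (0 + 1) / (1 - q ^ (0 + 1)) = q / (1 - q) := by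
      norm_num
    have hfn : ‖q / (1 - q)‖ = ‖q‖ := by
      rw [norm_div, tate_aux_norm_one_sub hq, div_one]
    have htail : ‖∑' n : ℕ, (((7 * (n + 1 + 1) ^ 5 + 5 * (n + 1 + 1) ^ 3) / 12 : ℕ) : K) *
        q ^ (n + 1 + 1) / (1 - q ^ (n + 1 + 1))‖ ≤ ‖q‖ ^ 2 := by
      refine norm_tsum_le_of_forall_le fun n => le_trans (hterm2 (n + 1)) ?_
      exact pow_le_pow_of_le_one (norm_nonneg q) hq.le (by omega)
    have hlt : ‖q‖ ^ 2 < ‖q‖ := by nlinarith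
    have hne : ‖q / (1 - q)‖ ≠ ‖∑' n : ℕ,
        (((7 * (n + 1 + 1) ^ 5 + 5 * (n + 1 + 1) ^ 3) / 12 : ℕ) : K) *
        q ^ (n + 1 + 1) / (1 - q ^ (n + 1 + 1))‖ := by
      rw [hfn]
      exact ne_of_gt (lt_of_le_of_lt htail hlt)
    rw [ht_def, hsplit, hfirst, norm_add_eq_max_of_norm_ne_norm hne, hfn]
    exact max_eq_left (le_trans htail (le_of_lt hlt))
  -- the remainder term
  have h25 : ‖(25 : K)‖ ≤ 1 := by exact_mod_cast hnat 25
  have h432 : ‖(-432 : K)‖ ≤ 1 := by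
    rw [show ((-432 : K)) = -((432 : ℕ) : K) by norm_num, norm_neg]
    exact hnat 432
  have h360 : ‖(360 : K)‖ ≤ 1 := by exact_mod_cast hnat 360
  have h8000s : ‖(8000 : K) * s‖ ≤ 1 := by
    rw [norm_mul]
    calc ‖(8000 : K)‖ * ‖s‖ ≤ 1 * 1 := by
          refine mul_le_mul ?_ (le_trans hs_le hq.le) (norm_nonneg _) zero_le_one
          exact_mod_cast hnat 8000
      _ = 1 := one_mul 1
  have hR : ‖(25 : K) * (s * s) + (8000 : K) * s * (s * s) +
      (-432 : K) * (t * t) + (360 : K) * (s * t)‖ ≤ ‖q‖ ^ 2 := by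
    refine le_trans (norm_add_le_max _ _) (max_le
      (le_trans (norm_add_le_max _ _) (max_le
        (le_trans (norm_add_le_max _ _) (max_le ?_ ?_)) ?_)) ?_)
    · exact tate_aux_mono h25 hs_le hs_le
    · exact tate_aux_mono h8000s hs_le hs_le
    · exact tate_aux_mono h432 ht_le ht_le
    · exact tate_aux_mono h360 hs_le ht_le
  -- the discriminant equals t + R
  have hΔ : (WeierstrassCurve.mk (1 : K) 0 0 (-(5 * s)) (-t)).Δ
      = t + ((25 : K) * (s * s) + (8000 : K) * s * (s * s) +
        (-432 : K) * (t * t) + (360 : K) * (s * t)) := by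
    simp only [WeierstrassCurve.Δ, WeierstrassCurve.b₂, WeierstrassCurve.b₄,
      WeierstrassCurve.b₆, WeierstrassCurve.b₈]
    ring
  refine fun h => ?_
  rw [hΔ] at h
  have hlt : ‖(25 : K) * (s * s) + (8000 : K) * s * (s * s) +
      (-432 : K) * (t * t) + (360 : K) * (s * t)‖ < ‖t‖ := by
    rw [ht_eq]
    refine lt_of_le_of_lt hR ?_
    nlinarith
  have hnorm : ‖t + ((25 : K) * (s * s) + (8000 : K) * s * (s * s) +
      (-432 : K) * (t * t) + (360 : K) * (s * t))‖ = ‖t‖ := by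
    rw [norm_add_eq_max_of_norm_ne_norm (ne_of_gt hlt)]
    exact max_eq_left (le_of_lt hlt)
  rw [h, norm_zero, ht_eq] at hnorm
  exact absurd hnorm.symm (ne_of_gt hq0')
end

section
/- Let p = 2m+1 ≥ 5 be prime and k a field of characteristic p. Let F ∈ k[X] be a monic cubic polynomial, let A be the coefficient of X^{p−1} in F^m, and let G ∈ k[X] be a polynomial of degree 3m+1 whose derivative satisfies G′ = F^m − A·X^{p−1}. Then the remainder of G² upon division by X^p·F^{m+1} has degree at most 5m+2 = (5p−1)/2. -/
open Polynomial

/-- In characteristic `p`, a `p`-th power polynomial is supported on exponents divisible by `p`. -/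
private lemma coeff_pow_prime_char {k : Type*} [Field k] {p : ℕ} (hp : Nat.Prime p)
    [CharP k p] (f : k[X]) {j : ℕ} (hj : ¬ p ∣ j) : (f ^ p).coeff j = 0 := by
  haveI : Fact p.Prime := ⟨hp⟩
  rw [← map_frobenius_expand, coeff_map, coeff_expand hp.pos, if_neg hj, map_zero]

/-- **Finotti's conjecture, proved by Tate.** Let `p = 2m+1 ≥ 5` be prime, `k` a field
of characteristic `p`, `F ∈ k[X]` monic cubic, `A` the coefficient of `X^{p−1}` in `F^m`,
and `G ∈ k[X]` of degree `3m+1` with `G' = F^m − A·X^{p−1}`. Then the remainder of `G²`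
upon division by `X^p · F^{m+1}` has degree at most `5m+2`. -/
theorem finotti_conjecture (k : Type*) [Field k] (m : ℕ)
    (hp : Nat.Prime (2 * m + 1)) (hp5 : 5 ≤ 2 * m + 1) [CharP k (2 * m + 1)]
    (F : k[X]) (hF : F.Monic) (hFdeg : F.natDegree = 3)
    (A : k) (hA : A = (F ^ m).coeff (2 * m))
    (G : k[X]) (hGdeg : G.natDegree = 3 * m + 1)
    (hG' : derivative G = F ^ m - C A * X ^ (2 * m)) :
    (G ^ 2 %ₘ (X ^ (2 * m + 1) * F ^ (m + 1))).degree ≤ (5 * m + 2 : ℕ) := by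
  have hm2 : 2 ≤ m := by omega
  set D : k[X] := X ^ (2 * m + 1) * F ^ (m + 1) with hD_def
  have hD : D.Monic := (monic_X_pow _).mul (hF.pow _)
  have hDdeg : D.natDegree = 5 * m + 4 := by
    rw [hD_def, (monic_X_pow _).natDegree_mul (hF.pow _), natDegree_X_pow,
      hF.natDegree_pow, hFdeg]
    omega
  set Q : k[X] := G ^ 2 /ₘ D with hQ_def
  set R : k[X] := G ^ 2 %ₘ D with hR_def
  -- degree facts
  have hG2deg : (G ^ 2).natDegree ≤ 6 * m + 2 := by
    have := natDegree_pow_le (p := G) (n := 2)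
    omega
  have hRdeg : R.degree < ((5 * m + 4 : ℕ) : WithBot ℕ) := by
    have := degree_modByMonic_lt (G ^ 2) hD
    rwa [degree_eq_natDegree hD.ne_zero, hDdeg] at this
  have hRnat : R.natDegree ≤ 5 * m + 3 := by
    rcases eq_or_ne R 0 with h | h
    · simp [h]
    · have := (natDegree_lt_iff_degree_lt h).mpr hRdeg
      omega
  have hQdeg : Q.natDegree ≤ m := by
    rw [hQ_def, natDegree_divByMonic _ hD, hDdeg]
    omega
  have hFm : (F ^ m).natDegree = 3 * m := by rw [hF.natDegree_pow, hFdeg]; omega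
  -- Step 1 : `(G² F^m).coeff (8m+3) = 0`, since `3 G² F^m = (G³)' + 3A X^{2m} G²`,
  -- the derivative has no coefficient at `8m+3 = 4p − 1`, and `deg G² = 6m+2 < 6m+3`.
  have hW : (G ^ 2 * F ^ m).coeff (8 * m + 3) = 0 := by
    have hid : C (3 : k) * (G ^ 2 * F ^ m) =
        derivative (G ^ 3) + C (3 * A) * (G ^ 2 * X ^ (2 * m)) := by
      rw [derivative_pow, hG', C_mul]
      push_cast
      ring
    have h1 : (derivative (G ^ 3)).coeff (8 * m + 3) = 0 := by
      rw [coeff_derivative]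
      have : ((8 * m + 3 + 1 : ℕ) : k) = 0 := by
        rw [CharP.cast_eq_zero_iff k (2 * m + 1)]
        exact ⟨4, by ring⟩
      push_cast at this ⊢
      rw [this, mul_zero]
    have h2 : (G ^ 2 * X ^ (2 * m)).coeff (8 * m + 3) = 0 := by
      have h83 : 8 * m + 3 = 6 * m + 3 + 2 * m := by omega
      rw [h83, coeff_mul_X_pow]
      exact coeff_eq_zero_of_natDegree_lt (by omega)
    have h3 : ((3 : k)) ≠ 0 := by
      intro h
      have h3' : ((3 : ℕ) : k) = 0 := by push_cast; exact h
      rw [CharP.cast_eq_zero_iff k (2 * m + 1)] at h3'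
      have := Nat.le_of_dvd (by norm_num) h3'
      omega
    have := congrArg (fun q => q.coeff (8 * m + 3)) hid
    simp only [coeff_add, coeff_C_mul, h1, h2, mul_zero, add_zero, zero_add] at this
    exact (mul_eq_zero.mp this).resolve_left h3
  -- Step 2 : `(Q (XF)^p).coeff (8m+3) = 0`, since `(XF)^p` is supported on multiples of `p`
  -- and `deg Q ≤ m − 2 < p − 1`.
  have hQ0 : (Q * (X * F) ^ (2 * m + 1)).coeff (8 * m + 3) = 0 := by
    rw [coeff_mul]
    apply Finset.sum_eq_zero
    rintro ⟨i, j⟩ hij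
    rw [Finset.HasAntidiagonal.mem_antidiagonal] at hij
    by_cases hdvd : (2 * m + 1) ∣ j
    · obtain ⟨t, rfl⟩ := hdvd
      have ht : t ≤ 3 := by
        by_contra hc
        push_neg at hc
        have := mul_le_mul_right (show 4 ≤ t by omega) (2 * m + 1)
        omega
      have hb : (2 * m + 1) * t ≤ (2 * m + 1) * 3 := mul_le_mul_right ht _
      have : Q.coeff i = 0 := coeff_eq_zero_of_natDegree_lt (by omega)
      rw [this, zero_mul]
    · rw [coeff_pow_prime_char hp _ hdvd, mul_zero]
  -- Step 3 : hence `(R F^m).coeff (8m+3) = 0`, which is `R.coeff (5m+3)`.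
  have hkey : R.coeff (5 * m + 3) = 0 := by
    have hdiv : G ^ 2 = R + D * Q := (modByMonic_add_div (G ^ 2) D).symm
    have hDF : D * F ^ m = (X * F) ^ (2 * m + 1) := by
      rw [hD_def, mul_pow, mul_assoc, ← pow_add]
      congr 2
      omega
    have hsplit : G ^ 2 * F ^ m = R * F ^ m + Q * (X * F) ^ (2 * m + 1) := by
      rw [← hDF]
      calc G ^ 2 * F ^ m = (R + D * Q) * F ^ m := by rw [← hdiv]
        _ = R * F ^ m + Q * (D * F ^ m) := by ring
    have hRF : (R * F ^ m).coeff (8 * m + 3) = 0 := by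
      have := congrArg (fun q => q.coeff (8 * m + 3)) hsplit
      simp only [coeff_add, hQ0, add_zero, hW] at this
      exact this.symm
    rw [coeff_mul] at hRF
    rw [Finset.sum_eq_single (5 * m + 3, 3 * m)] at hRF
    · have : (F ^ m).coeff (3 * m) = 1 := by
        have := (hF.pow m).coeff_natDegree
        rwa [hFm] at this
      rwa [this, mul_one] at hRF
    · rintro ⟨i, j⟩ hij hne
      rw [Finset.HasAntidiagonal.mem_antidiagonal] at hij
      rcases lt_or_ge (5 * m + 3) i with hi | hi
      · rw [coeff_eq_zero_of_natDegree_lt (show R.natDegree < i by omega), zero_mul]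
      · have hj : 3 * m < j := by
          rcases Nat.lt_or_ge (3 * m) j with h | h
          · exact h
          · exfalso
            apply hne
            have hii : i = 5 * m + 3 := by omega
            have hjj : j = 3 * m := by omega
            simp [hii, hjj]
        rw [coeff_eq_zero_of_natDegree_lt (show (F ^ m).natDegree < j by omega), mul_zero]
    · intro h
      exact absurd (Finset.HasAntidiagonal.mem_antidiagonal.mpr (by omega)) h
  -- Conclusion
  rw [degree_le_iff_coeff_zero]
  intro N hN
  have hN' : 5 * m + 2 < N := by exact_mod_cast hN
  rcases eq_or_lt_of_le (show 5 * m + 3 ≤ N by omega) with h | h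
  · rw [← h]; exact hkey
  · exact coeff_eq_zero_of_natDegree_lt (by omega)
end
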